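/- arXiv:1905.10513 — 9 statements merged into one kernel-verified Lean document; each statement's English description precedes it below -/
import Mathlib

section
/- For all q, z ∈ ℂ with |q| < 1 and |z| < 1, the series ∑_{n=0}^∞ z^n · (z;q)_n / (−z;q)_{n+1} converges and equals ∑_{n=0}^∞ (−1)^n z^{2n} q^{n²}. -/
/-- The finite q-Pochhammer symbol `(x;q)_n = ∏_{i=0}^{n-1} (1 - x q^i)`. -/
noncomputable def qPoch (q x : ℂ) (n : ℕ) : ℂ :=
  ∏ i ∈ Finset.range n, (1 - x * q ^ i)

lemma qPoch_succ (q x : ℂ) (n : ℕ) : qPoch q x (n+1) = qPoch q x n * (1 - x * q^n) :=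
  Finset.prod_range_succ _ _

lemma qPoch_succ' (q x : ℂ) (n : ℕ) : qPoch q x (n+1) = (1 - x) * qPoch q (x*q) n := by
  rw [qPoch, Finset.prod_range_succ']
  rw [mul_comm]
  congr 1
  · norm_num
  · apply Finset.prod_congr rfl
    intro i _
    rw [pow_succ']
    ring_nf

lemma qPoch_ne_zero (q v : ℂ) (hq : ‖q‖ ≤ 1) (hv : ‖v‖ < 1) (m : ℕ) : qPoch q v m ≠ 0 := by
  refine Finset.prod_ne_zero_iff.2 fun i _ h => ?_
  have h1 : ‖v * q^i‖ < 1 := by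
    calc ‖v * q^i‖ = ‖v‖ * ‖q‖^i := by rw [norm_mul, norm_pow]
    _ ≤ ‖v‖ * 1 := mul_le_mul_of_nonneg_left (pow_le_one₀ (norm_nonneg q) hq) (norm_nonneg v)
    _ < 1 := by simpa using hv
  have h2 : v * q^i = 1 := by linear_combination -h
  rw [h2] at h1; simp at h1

lemma exp_le_one_sub {c x : ℝ} (hc : c < 1) (hx0 : 0 ≤ x) (hxc : x ≤ c) :
    Real.exp (-(x/(1-c))) ≤ 1 - x := by
  have h1 : (0:ℝ) < 1 - c := by linarith
  set y := x/(1-c) with hy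
  have hyx : y * (1-c) = x := div_mul_cancel₀ x h1.ne'
  have hy0 : 0 ≤ y := div_nonneg hx0 h1.le
  have h2 : 1 + y ≤ Real.exp y := by linarith [Real.add_one_le_exp y]
  have h3 : (1:ℝ) ≤ (1 - x) * Real.exp y := by
    have h4 : (1:ℝ) ≤ (1 - x) * (1 + y) := by nlinarith [mul_nonneg hy0 (sub_nonneg.2 hxc)]
    calc (1:ℝ) ≤ (1-x)*(1+y) := h4
    _ ≤ (1-x)*Real.exp y := mul_le_mul_of_nonneg_left h2 (by linarith)
  rw [Real.exp_neg]
  rw [inv_le_iff_one_le_mul₀ (Real.exp_pos y)]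
  linarith [h3]

lemma geom_sum_le_inv {r : ℝ} (h0 : 0 ≤ r) (h1 : r < 1) (n : ℕ) :
    ∑ i ∈ Finset.range n, r^i ≤ (1-r)⁻¹ := by
  have := Summable.sum_le_tsum (Finset.range n) (fun i _ => pow_nonneg h0 i)
    (summable_geometric_of_lt_one h0 h1)
  rwa [tsum_geometric_of_lt_one h0 h1] at this

lemma qPoch_norm_lower {q : ℂ} {c : ℝ} (hq : ‖q‖ < 1) (hc : c < 1) (w : ℂ) (hw : ‖w‖ ≤ c)
    (n : ℕ) : Real.exp (-(c/((1-‖q‖)*(1-c)))) ≤ ‖qPoch q w n‖ := by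
  have hq0 : (0:ℝ) ≤ ‖q‖ := norm_nonneg q
  have hr1 : (0:ℝ) < 1 - ‖q‖ := by linarith
  have hc1 : (0:ℝ) < 1 - c := by linarith
  have key : ∀ i : ℕ, Real.exp (-(‖w‖ * ‖q‖^i / (1-c))) ≤ ‖1 - w * q^i‖ := by
    intro i
    have hx0 : 0 ≤ ‖w‖ * ‖q‖^i := mul_nonneg (norm_nonneg w) (pow_nonneg hq0 i)
    have hxc : ‖w‖ * ‖q‖^i ≤ c :=
      le_trans (mul_le_of_le_one_right (norm_nonneg w) (pow_le_one₀ hq0 hq.le)) hw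
    calc Real.exp (-(‖w‖ * ‖q‖^i / (1-c))) ≤ 1 - ‖w‖ * ‖q‖^i := exp_le_one_sub hc hx0 hxc
    _ = 1 - ‖w * q^i‖ := by rw [norm_mul, norm_pow]
    _ ≤ ‖1 - w * q^i‖ := by
        have := norm_sub_norm_le (1:ℂ) (w * q^i)
        simpa using this
  calc Real.exp (-(c/((1-‖q‖)*(1-c))))
      ≤ Real.exp (-((∑ i ∈ Finset.range n, ‖w‖ * ‖q‖^i) / (1-c))) := by
        apply Real.exp_le_exp.2
        have hc0 : (0:ℝ) ≤ c := (norm_nonneg w).trans hw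
        rw [neg_le_neg_iff, div_le_div_iff₀ hc1 (by positivity)]
        have h1 : ∑ i ∈ Finset.range n, ‖w‖ * ‖q‖^i ≤ c * (1-‖q‖)⁻¹ := by
          rw [← Finset.mul_sum]
          exact mul_le_mul hw (geom_sum_le_inv hq0 hq n) (by positivity) hc0
        have h1' : (∑ i ∈ Finset.range n, ‖w‖ * ‖q‖^i) * (1-‖q‖) ≤ c := by
          have h2 := mul_le_mul_of_nonneg_right h1 hr1.le
          have h3 : c * (1-‖q‖)⁻¹ * (1-‖q‖) = c := by
            rw [mul_assoc, inv_mul_cancel₀ hr1.ne', mul_one]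
          linarith
        calc (∑ i ∈ Finset.range n, ‖w‖ * ‖q‖^i) * ((1-‖q‖)*(1-c))
            = (∑ i ∈ Finset.range n, ‖w‖ * ‖q‖^i) * (1-‖q‖) * (1-c) := by ring
        _ ≤ c * (1-c) := mul_le_mul_of_nonneg_right h1' hc1.le
  _ = ∏ i ∈ Finset.range n, Real.exp (-(‖w‖ * ‖q‖^i / (1-c))) := by
        rw [← Real.exp_sum]
        congr 1
        rw [Finset.sum_div, ← Finset.sum_neg_distrib]
  _ ≤ ∏ i ∈ Finset.range n, ‖1 - w * q^i‖ :=
        Finset.prod_le_prod (fun i _ => (Real.exp_pos _).le) (fun i _ => key i)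
  _ = ‖qPoch q w n‖ := (norm_prod _ _).symm

lemma qPoch_norm_upper {q : ℂ} {c : ℝ} (hq : ‖q‖ < 1) (w : ℂ) (hw : ‖w‖ ≤ c)
    (n : ℕ) : ‖qPoch q w n‖ ≤ Real.exp (c/(1-‖q‖)) := by
  have hq0 : (0:ℝ) ≤ ‖q‖ := norm_nonneg q
  calc ‖qPoch q w n‖ = ∏ i ∈ Finset.range n, ‖1 - w * q^i‖ := norm_prod _ _
  _ ≤ ∏ i ∈ Finset.range n, Real.exp (‖w‖ * ‖q‖^i) := by
      apply Finset.prod_le_prod (fun i _ => norm_nonneg _)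
      intro i _
      calc ‖1 - w*q^i‖ ≤ ‖(1:ℂ)‖ + ‖w*q^i‖ := norm_sub_le _ _
      _ = 1 + ‖w‖*‖q‖^i := by rw [norm_one, norm_mul, norm_pow]
      _ ≤ Real.exp (‖w‖ * ‖q‖^i) := by linarith [Real.add_one_le_exp (‖w‖*‖q‖^i)]
  _ = Real.exp (∑ i ∈ Finset.range n, ‖w‖ * ‖q‖^i) := (Real.exp_sum _ _).symm
  _ ≤ Real.exp (c/(1-‖q‖)) := by
      apply Real.exp_le_exp.2
      rw [← Finset.mul_sum, div_eq_mul_inv]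
      exact mul_le_mul hw (geom_sum_le_inv hq0 hq n) (by positivity)
        (le_trans (norm_nonneg w) hw)

lemma step_id (q w : ℂ) (hq : ‖q‖ < 1) (hw : ‖w‖ < 1) (n : ℕ) :
    w^n * qPoch q w n / qPoch q (-w) (n+1)
      + w^2*q*((w*q)^n * qPoch q (w*q) n / qPoch q (-(w*q)) (n+1))
    = w^n * (qPoch q (w*q) n + w*q^n * qPoch q w n) / qPoch q (-w) (n+1)
      - w^(n+1) * (qPoch q (w*q) (n+1) + w*q^(n+1) * qPoch q w (n+1)) / qPoch q (-w) (n+2) := by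
  have hq' : ‖q‖ ≤ 1 := hq.le
  have hwq : ‖-(w*q)‖ < 1 := by
    rw [norm_neg, norm_mul]
    exact lt_of_le_of_lt (mul_le_of_le_one_right (norm_nonneg w) hq') hw
  have hA : qPoch q (-w) (n+1) ≠ 0 := qPoch_ne_zero q (-w) hq' (by simpa using hw) _
  have hB : qPoch q (-(w*q)) (n+1) ≠ 0 := qPoch_ne_zero q (-(w*q)) hq' hwq _
  have h1w : (1:ℂ) - w ≠ 0 := by
    intro h
    have : w = 1 := by linear_combination -h
    rw [this] at hw; simp at hw
  have h1w' : (1:ℂ) + w ≠ 0 := by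
    intro h
    have : w = -1 := by linear_combination h
    rw [this] at hw; simp at hw
  have hfac : (1:ℂ) + w*q^(n+1) ≠ 0 := by
    intro h
    have h2 : ‖w*q^(n+1)‖ < 1 := by
      rw [norm_mul, norm_pow]
      exact lt_of_le_of_lt (mul_le_of_le_one_right (norm_nonneg w)
        (pow_le_one₀ (norm_nonneg q) hq')) hw
    have : w*q^(n+1) = -1 := by linear_combination h
    rw [this] at h2; simp at h2
  have hPQ : qPoch q w n * (1 - w*q^n) = (1-w) * qPoch q (w*q) n := by
    rw [← qPoch_succ, qPoch_succ']
  have hQval : qPoch q (w*q) n = qPoch q w n * (1 - w*q^n) * (1-w)⁻¹ := by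
    field_simp
    linear_combination -hPQ
  have hA2 : qPoch q (-w) (n+2) = qPoch q (-w) (n+1) * (1 + w*q^(n+1)) := by
    rw [qPoch_succ]; ring_nf
  have hBrel : qPoch q (-w) (n+2) = (1+w) * qPoch q (-(w*q)) (n+1) := by
    rw [qPoch_succ' q (-w) (n+1), neg_mul]
    ring_nf
  have hBval : qPoch q (-(w*q)) (n+1) = qPoch q (-w) (n+1) * (1 + w*q^(n+1)) * (1+w)⁻¹ := by
    field_simp
    linear_combination hA2 - hBrel
  rw [qPoch_succ q (w*q) n, qPoch_succ q w n, hQval, hBval, hA2]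
  field_simp
  ring

lemma finite_id (q w : ℂ) (hq : ‖q‖ < 1) (hw : ‖w‖ < 1) (N : ℕ) :
    ∑ n ∈ Finset.range N, (w^n * qPoch q w n / qPoch q (-w) (n+1)
      + w^2*q*((w*q)^n * qPoch q (w*q) n / qPoch q (-(w*q)) (n+1)))
    = 1 - w^N * (qPoch q (w*q) N + w*q^N * qPoch q w N) / qPoch q (-w) (N+1) := by
  have h1w' : (1:ℂ) + w ≠ 0 := by
    intro h
    have : w = -1 := by linear_combination h
    rw [this] at hw; simp at hw
  have := Finset.sum_range_sub'
    (fun n => w^n * (qPoch q (w*q) n + w*q^n * qPoch q w n) / qPoch q (-w) (n+1)) N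
  rw [Finset.sum_congr rfl (fun n _ => step_id q w hq hw n), this]
  congr 1
  simp only [pow_zero, one_mul, qPoch]
  norm_num
  simpa using h1w'

section Analytic

variable {q z : ℂ} (hq : ‖q‖ < 1) (hz : ‖z‖ < 1)
include hq hz

lemma norm_term_le (w : ℂ) (hw : ‖w‖ ≤ ‖z‖) (n : ℕ) :
    ‖w^n * qPoch q w n / qPoch q (-w) (n+1)‖
      ≤ (Real.exp (‖z‖/(1-‖q‖)) / Real.exp (-(‖z‖/((1-‖q‖)*(1-‖z‖))))) * ‖z‖^n := by
  set δ := Real.exp (-(‖z‖/((1-‖q‖)*(1-‖z‖)))) with hδ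
  set M := Real.exp (‖z‖/(1-‖q‖)) with hM
  have hδ0 : 0 < δ := Real.exp_pos _
  have hlow : δ ≤ ‖qPoch q (-w) (n+1)‖ :=
    qPoch_norm_lower hq hz (-w) (by simpa using hw) (n+1)
  have hup : ‖w^n * qPoch q w n‖ ≤ ‖z‖^n * M := by
    rw [norm_mul, norm_pow]
    exact mul_le_mul (pow_le_pow_left₀ (norm_nonneg w) hw n)
      (qPoch_norm_upper hq w hw n) (norm_nonneg _) (pow_nonneg (norm_nonneg z) n)
  calc ‖w^n * qPoch q w n / qPoch q (-w) (n+1)‖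
      = ‖w^n * qPoch q w n‖ / ‖qPoch q (-w) (n+1)‖ := norm_div _ _
  _ ≤ (‖z‖^n * M) / δ := div_le_div₀ (by positivity) hup hδ0 hlow
  _ = (M / δ) * ‖z‖^n := by ring

lemma summable_a (w : ℂ) (hw : ‖w‖ ≤ ‖z‖) :
    Summable (fun n : ℕ => w^n * qPoch q w n / qPoch q (-w) (n+1)) :=
  Summable.of_norm_bounded
    ((summable_geometric_of_lt_one (norm_nonneg z) hz).mul_left _)
    (norm_term_le hq hz w hw)

lemma tsum_a_bound (w : ℂ) (hw : ‖w‖ ≤ ‖z‖) :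
    ‖∑' n : ℕ, w^n * qPoch q w n / qPoch q (-w) (n+1)‖
      ≤ (Real.exp (‖z‖/(1-‖q‖)) / Real.exp (-(‖z‖/((1-‖q‖)*(1-‖z‖))))) * (1-‖z‖)⁻¹ := by
  have hsn : Summable (fun n : ℕ => ‖w^n * qPoch q w n / qPoch q (-w) (n+1)‖) :=
    Summable.of_nonneg_of_le (fun n => norm_nonneg _) (norm_term_le hq hz w hw)
      ((summable_geometric_of_lt_one (norm_nonneg z) hz).mul_left _)
  calc ‖∑' n : ℕ, w^n * qPoch q w n / qPoch q (-w) (n+1)‖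
      ≤ ∑' n : ℕ, ‖w^n * qPoch q w n / qPoch q (-w) (n+1)‖ := norm_tsum_le_tsum_norm hsn
  _ ≤ ∑' n : ℕ, (Real.exp (‖z‖/(1-‖q‖)) / Real.exp (-(‖z‖/((1-‖q‖)*(1-‖z‖))))) * ‖z‖^n :=
      Summable.tsum_le_tsum (norm_term_le hq hz w hw) hsn
        ((summable_geometric_of_lt_one (norm_nonneg z) hz).mul_left _)
  _ = (Real.exp (‖z‖/(1-‖q‖)) / Real.exp (-(‖z‖/((1-‖q‖)*(1-‖z‖))))) * (1-‖z‖)⁻¹ := by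
      rw [tsum_mul_left, tsum_geometric_of_lt_one (norm_nonneg z) hz]

lemma funEq (w : ℂ) (hw : ‖w‖ ≤ ‖z‖) :
    (∑' n : ℕ, w^n * qPoch q w n / qPoch q (-w) (n+1))
    = 1 - w^2*q * ∑' n : ℕ, (w*q)^n * qPoch q (w*q) n / qPoch q (-(w*q)) (n+1) := by
  set δ := Real.exp (-(‖z‖/((1-‖q‖)*(1-‖z‖)))) with hδ
  set M := Real.exp (‖z‖/(1-‖q‖)) with hM
  have hδ0 : 0 < δ := Real.exp_pos _
  have hM0 : 0 < M := Real.exp_pos _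
  have hw1 : ‖w‖ < 1 := lt_of_le_of_lt hw hz
  have hwq : ‖w*q‖ ≤ ‖z‖ := by
    rw [norm_mul]
    exact le_trans (mul_le_of_le_one_right (norm_nonneg w) hq.le) hw
  have ha := summable_a hq hz w hw
  have hb := summable_a hq hz (w*q) hwq
  have h1 : Filter.Tendsto
      (fun N => ∑ n ∈ Finset.range N, (w^n * qPoch q w n / qPoch q (-w) (n+1)
        + w^2*q*((w*q)^n * qPoch q (w*q) n / qPoch q (-(w*q)) (n+1))))
      Filter.atTop (nhds ((∑' n : ℕ, w^n * qPoch q w n / qPoch q (-w) (n+1))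
        + w^2*q * ∑' n : ℕ, (w*q)^n * qPoch q (w*q) n / qPoch q (-(w*q)) (n+1))) := by
    have := ha.hasSum.tendsto_sum_nat.add ((hb.hasSum.tendsto_sum_nat).const_mul (w^2*q))
    convert this using 2 with N
    rw [Finset.sum_add_distrib, Finset.mul_sum]
  have hrem : Filter.Tendsto
      (fun N : ℕ => w^N * (qPoch q (w*q) N + w*q^N * qPoch q w N) / qPoch q (-w) (N+1))
      Filter.atTop (nhds 0) := by
    have hbnd : ∀ N : ℕ, ‖w^N * (qPoch q (w*q) N + w*q^N * qPoch q w N) / qPoch q (-w) (N+1)‖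
        ≤ (2*M/δ) * ‖z‖^N := by
      intro N
      have hlow : δ ≤ ‖qPoch q (-w) (N+1)‖ :=
        qPoch_norm_lower hq hz (-w) (by simpa using hw) (N+1)
      have hnum : ‖w^N * (qPoch q (w*q) N + w*q^N * qPoch q w N)‖ ≤ ‖z‖^N * (2*M) := by
        rw [norm_mul, norm_pow]
        apply mul_le_mul (pow_le_pow_left₀ (norm_nonneg w) hw N) ?_ (norm_nonneg _)
          (pow_nonneg (norm_nonneg z) N)
        calc ‖qPoch q (w*q) N + w*q^N * qPoch q w N‖
            ≤ ‖qPoch q (w*q) N‖ + ‖w*q^N * qPoch q w N‖ := norm_add_le _ _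
        _ ≤ M + ‖w*q^N‖ * ‖qPoch q w N‖ := by
            rw [norm_mul]
            exact add_le_add (qPoch_norm_upper hq (w*q) hwq N) (le_refl _)
        _ ≤ M + 1 * M := by
            apply add_le_add (le_refl M)
            apply mul_le_mul ?_ (qPoch_norm_upper hq w hw N) (norm_nonneg _) zero_le_one
            rw [norm_mul, norm_pow]
            exact mul_le_one₀ (le_trans hw hz.le) (pow_nonneg (norm_nonneg q) N)
              (pow_le_one₀ (norm_nonneg q) hq.le)
        _ = 2*M := by ring
      calc ‖w^N * (qPoch q (w*q) N + w*q^N * qPoch q w N) / qPoch q (-w) (N+1)‖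
          = ‖w^N * (qPoch q (w*q) N + w*q^N * qPoch q w N)‖ / ‖qPoch q (-w) (N+1)‖ :=
            norm_div _ _
      _ ≤ (‖z‖^N * (2*M)) / δ := div_le_div₀ (by positivity) hnum hδ0 hlow
      _ = (2*M/δ) * ‖z‖^N := by ring
    have htend : Filter.Tendsto (fun N : ℕ => (2*M/δ) * ‖z‖^N) Filter.atTop (nhds 0) := by
      have := (tendsto_pow_atTop_nhds_zero_of_lt_one (norm_nonneg z) hz).const_mul (2*M/δ)
      simpa using this
    exact squeeze_zero_norm hbnd htend
  have h2 : Filter.Tendsto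
      (fun N => ∑ n ∈ Finset.range N, (w^n * qPoch q w n / qPoch q (-w) (n+1)
        + w^2*q*((w*q)^n * qPoch q (w*q) n / qPoch q (-(w*q)) (n+1))))
      Filter.atTop (nhds (1 - 0)) := by
    simp only [finite_id q w hq hw1]
    exact Filter.Tendsto.sub tendsto_const_nhds hrem
  have h3 := tendsto_nhds_unique h1 h2
  rw [sub_zero] at h3
  linear_combination h3

end Analytic

/-- For `|q| < 1` and `|z| < 1`, the series `∑ z^n (z;q)_n / (−z;q)_{n+1}`
converges and equals `∑ (−1)^n z^{2n} q^{n²}`. -/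
theorem coogan_ono_identity (q z : ℂ) (hq : ‖q‖ < 1) (hz : ‖z‖ < 1) :
    Summable (fun n : ℕ => z ^ n * qPoch q z n / qPoch q (-z) (n + 1)) ∧
    Summable (fun n : ℕ => (-1 : ℂ) ^ n * z ^ (2 * n) * q ^ (n ^ 2)) ∧
    ∑' n : ℕ, z ^ n * qPoch q z n / qPoch q (-z) (n + 1)
      = ∑' n : ℕ, (-1 : ℂ) ^ n * z ^ (2 * n) * q ^ (n ^ 2) := by
  have hSa : Summable (fun n : ℕ => z ^ n * qPoch q z n / qPoch q (-z) (n + 1)) :=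
    summable_a hq hz z (le_refl _)
  have hSG : Summable (fun n : ℕ => (-1 : ℂ) ^ n * z ^ (2 * n) * q ^ (n ^ 2)) := by
    apply Summable.of_norm_bounded
      (summable_geometric_of_lt_one (by positivity) (?_ : ‖z‖^2 < 1))
    · intro n
      calc ‖(-1 : ℂ) ^ n * z ^ (2 * n) * q ^ (n ^ 2)‖
          = ‖z‖^(2*n) * ‖q‖^(n^2) := by
            rw [norm_mul, norm_mul, norm_pow, norm_pow, norm_pow, norm_neg, norm_one,
              one_pow, one_mul]
      _ ≤ ‖z‖^(2*n) * 1 := by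
            exact mul_le_mul_of_nonneg_left (pow_le_one₀ (norm_nonneg q) hq.le)
              (pow_nonneg (norm_nonneg z) _)
      _ = (‖z‖^2)^n := by rw [mul_one, ← pow_mul, mul_comm]
    · calc ‖z‖^2 ≤ ‖z‖ * 1 := by
            rw [pow_two]
            exact mul_le_mul_of_nonneg_left hz.le (norm_nonneg z)
      _ < 1 := by simpa using hz
  refine ⟨hSa, hSG, ?_⟩
  -- the key iteration
  have hwk : ∀ K : ℕ, ‖z * q^K‖ ≤ ‖z‖ := by
    intro K
    rw [norm_mul, norm_pow]
    exact mul_le_of_le_one_right (norm_nonneg z) (pow_le_one₀ (norm_nonneg q) hq.le)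
  have key : ∀ K : ℕ,
      (∑' n : ℕ, z ^ n * qPoch q z n / qPoch q (-z) (n + 1))
      = (∑ k ∈ Finset.range K, (-1 : ℂ) ^ k * z ^ (2 * k) * q ^ (k ^ 2))
        + (-1 : ℂ)^K * z^(2*K) * q^(K^2)
          * ∑' n : ℕ, (z*q^K)^n * qPoch q (z*q^K) n / qPoch q (-(z*q^K)) (n+1) := by
    intro K
    induction K with
    | zero => simp
    | succ K ih =>
      rw [ih, funEq hq hz (z*q^K) (hwk K),
        show (z*q^K)*q = z*q^(K+1) from by ring, Finset.sum_range_succ]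
      ring
  -- limits
  have hply : Filter.Tendsto
      (fun K => ∑ k ∈ Finset.range K, (-1 : ℂ) ^ k * z ^ (2 * k) * q ^ (k ^ 2))
      Filter.atTop (nhds (∑' k : ℕ, (-1 : ℂ) ^ k * z ^ (2 * k) * q ^ (k ^ 2))) :=
    hSG.hasSum.tendsto_sum_nat
  set C : ℝ := (Real.exp (‖z‖/(1-‖q‖)) / Real.exp (-(‖z‖/((1-‖q‖)*(1-‖z‖))))) * (1-‖z‖)⁻¹
    with hC
  have hC0 : 0 ≤ C := by
    rw [hC]
    have : (0:ℝ) < 1 - ‖z‖ := by linarith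
    positivity
  have hrem : Filter.Tendsto
      (fun K : ℕ => (-1 : ℂ)^K * z^(2*K) * q^(K^2)
        * ∑' n : ℕ, (z*q^K)^n * qPoch q (z*q^K) n / qPoch q (-(z*q^K)) (n+1))
      Filter.atTop (nhds 0) := by
    have hbnd : ∀ K : ℕ, ‖(-1 : ℂ)^K * z^(2*K) * q^(K^2)
        * ∑' n : ℕ, (z*q^K)^n * qPoch q (z*q^K) n / qPoch q (-(z*q^K)) (n+1)‖
        ≤ C * (‖z‖^2)^K := by
      intro K
      rw [norm_mul, norm_mul, norm_mul, norm_pow, norm_pow, norm_pow, norm_neg, norm_one,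
        one_pow, one_mul]
      calc ‖z‖^(2*K) * ‖q‖^(K^2)
            * ‖∑' n : ℕ, (z*q^K)^n * qPoch q (z*q^K) n / qPoch q (-(z*q^K)) (n+1)‖
          ≤ ‖z‖^(2*K) * 1 * C := by
            apply mul_le_mul ?_ (tsum_a_bound hq hz (z*q^K) (hwk K)) (norm_nonneg _) ?_
            · exact mul_le_mul_of_nonneg_left (pow_le_one₀ (norm_nonneg q) hq.le)
                (pow_nonneg (norm_nonneg z) _)
            · have := pow_nonneg (norm_nonneg z) (2*K)
              positivity
      _ = C * (‖z‖^2)^K := by rw [mul_one, ← pow_mul, mul_comm (2:ℕ) K, pow_mul]; ring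
    have htend : Filter.Tendsto (fun K : ℕ => C * (‖z‖^2)^K) Filter.atTop (nhds 0) := by
      have h2 : ‖z‖^2 < 1 := by nlinarith [norm_nonneg z]
      have := (tendsto_pow_atTop_nhds_zero_of_lt_one (by positivity) h2).const_mul C
      simpa using this
    exact squeeze_zero_norm hbnd htend
  have hcomb := hply.add hrem
  have hfun : (fun K : ℕ => (∑ k ∈ Finset.range K, (-1 : ℂ) ^ k * z ^ (2 * k) * q ^ (k ^ 2))
      + (-1 : ℂ)^K * z^(2*K) * q^(K^2)
        * ∑' n : ℕ, (z*q^K)^n * qPoch q (z*q^K) n / qPoch q (-(z*q^K)) (n+1))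
      = fun _ : ℕ => ∑' n : ℕ, z ^ n * qPoch q z n / qPoch q (-z) (n + 1) :=
    funext fun K => (key K).symm
  rw [hfun] at hcomb
  have := tendsto_nhds_unique hcomb tendsto_const_nhds
  rw [add_zero] at this
  exact this.symm
end

section
/- Let q, z, a, b ∈ ℂ with |q| < 1, |z| < 1, b ≠ 0, and 1 − b q^{m+1} ≠ 0 for all integers m ≥ 0. Then (1 − z) · ∑_{n=0}^∞ z^n (aq;q)_n / (bq;q)_n = ∑_{n=0}^∞ (1 − a z q^{2n+1}) (bz)^n q^{n²} · (aq;q)_n (azq/b;q)_n / ((bq;q)_n (zq;q)_n), both series being convergent (the Rogers–Fine identity). -/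
open Finset

noncomputable def RFpp (q c : ℂ) (s n : ℕ) : ℂ :=
  ∏ i ∈ Finset.range n, (1 - c * q ^ (s + i + 1))

lemma RFpp_ne_zero {q c : ℂ} (hc : ∀ m : ℕ, 1 - c * q ^ (m + 1) ≠ 0) (s n : ℕ) :
    RFpp q c s n ≠ 0 :=
  Finset.prod_ne_zero_iff.2 fun i _ => hc (s + i)

lemma RFgeom_tail {r : ℝ} (h0 : 0 ≤ r) (h1 : r < 1) (n : ℕ) :
    ∑ i ∈ range n, r ^ (i + 1) ≤ r / (1 - r) := by
  have : ∑ i ∈ range n, r ^ (i + 1) = r * ∑ i ∈ range n, r ^ i := by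
    rw [Finset.mul_sum]; exact Finset.sum_congr rfl fun i _ => by ring
  rw [this, div_eq_mul_inv]
  refine mul_le_mul_of_nonneg_left ?_ h0
  calc ∑ i ∈ range n, r ^ i ≤ ∑' i : ℕ, r ^ i :=
        Summable.sum_le_tsum _ (fun i _ => pow_nonneg h0 i) (summable_geometric_of_lt_one h0 h1)
    _ = (1 - r)⁻¹ := tsum_geometric_of_lt_one h0 h1

lemma RFpp_norm_le (q c : ℂ) (hq : ‖q‖ < 1) (s n : ℕ) :
    ‖RFpp q c s n‖ ≤ Real.exp (‖c‖ * ‖q‖ / (1 - ‖q‖)) := by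
  rw [RFpp, norm_prod]
  calc ∏ i ∈ range n, ‖1 - c * q ^ (s + i + 1)‖
      ≤ ∏ i ∈ range n, Real.exp (‖c‖ * ‖q‖ ^ (i + 1)) := by
        refine Finset.prod_le_prod (fun i _ => norm_nonneg _) fun i _ => ?_
        calc ‖1 - c * q ^ (s + i + 1)‖ ≤ ‖(1 : ℂ)‖ + ‖c * q ^ (s + i + 1)‖ := norm_sub_le _ _
          _ = 1 + ‖c‖ * ‖q‖ ^ (s + i + 1) := by simp [norm_mul, norm_pow]
          _ ≤ 1 + ‖c‖ * ‖q‖ ^ (i + 1) := by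
              have hpow : ‖q‖ ^ (s + i + 1) ≤ ‖q‖ ^ (i + 1) :=
                pow_le_pow_of_le_one (norm_nonneg q) hq.le (by omega)
              have := mul_le_mul_of_nonneg_left hpow (norm_nonneg c)
              linarith
          _ ≤ Real.exp (‖c‖ * ‖q‖ ^ (i + 1)) := by
              have := Real.add_one_le_exp (‖c‖ * ‖q‖ ^ (i + 1)); linarith
    _ = Real.exp (∑ i ∈ range n, ‖c‖ * ‖q‖ ^ (i + 1)) := (Real.exp_sum _ _).symm
    _ ≤ Real.exp (‖c‖ * ‖q‖ / (1 - ‖q‖)) := by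
        apply Real.exp_le_exp.2
        rw [← Finset.mul_sum, mul_div_assoc]
        refine mul_le_mul_of_nonneg_left ?_ (norm_nonneg c)
        exact RFgeom_tail (norm_nonneg q) hq n

lemma RFexp_le_one_sub {x : ℝ} (h0 : 0 ≤ x) (h1 : x ≤ 1 / 2) :
    Real.exp (-(2 * x)) ≤ 1 - x := by
  have hmul : Real.exp (-(2 * x)) * Real.exp (2 * x) = 1 := by
    rw [← Real.exp_add]; simp
  have hE := Real.add_one_le_exp (2 * x)
  have he := Real.exp_pos (-(2 * x))
  nlinarith [Real.exp_pos (2 * x)]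

lemma RFpp_norm_lb (q c : ℂ) (hq : ‖q‖ < 1) (hc : ∀ m : ℕ, 1 - c * q ^ (m + 1) ≠ 0) :
    ∃ ε > 0, ∀ s n, ε ≤ ‖RFpp q c s n‖ := by
  obtain ⟨K, hK⟩ : ∃ K : ℕ, ∀ k ≥ K, ‖c‖ * ‖q‖ ^ k ≤ 1 / 2 := by
    have h := (tendsto_pow_atTop_nhds_zero_of_lt_one (norm_nonneg q) hq).const_mul ‖c‖
    rw [mul_zero] at h
    obtain ⟨K, hK⟩ := Filter.eventually_atTop.1 (h.eventually_le_const (by norm_num : (0:ℝ) < 1/2))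
    exact ⟨K, hK⟩
  set δ : ℝ := min 1 ((range (K + 1)).inf' ⟨0, by simp⟩ fun j => ‖1 - c * q ^ (j + 1)‖) with hδdef
  have hδpos : 0 < δ := by
    refine lt_min one_pos ?_
    refine (Finset.lt_inf'_iff _).2 ?_
    exact fun j _ => norm_pos_iff.2 (hc j)
  have hδ1 : δ ≤ 1 := min_le_left _ _
  have hδle : ∀ j ≤ K, δ ≤ ‖1 - c * q ^ (j + 1)‖ := fun j hj =>
    le_trans (min_le_right _ _) (Finset.inf'_le _ (by simpa using Nat.lt_succ_of_le hj))
  refine ⟨δ ^ K * Real.exp (-(2 * ‖c‖ * ‖q‖ / (1 - ‖q‖))), by positivity, fun s n => ?_⟩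
  rw [RFpp, norm_prod]
  have key : ∀ i ∈ range n,
      (if i < K then δ else 1) * Real.exp (-(2 * (‖c‖ * ‖q‖ ^ (i + 1))))
        ≤ ‖1 - c * q ^ (s + i + 1)‖ := by
    intro i _
    by_cases hsi : s + i + 1 ≤ K
    · have hiK : i < K := by omega
      simp only [hiK, if_true]
      calc δ * Real.exp (-(2 * (‖c‖ * ‖q‖ ^ (i + 1)))) ≤ δ * 1 := by
            refine mul_le_mul_of_nonneg_left ?_ hδpos.le
            calc Real.exp (-(2 * (‖c‖ * ‖q‖ ^ (i + 1)))) ≤ Real.exp 0 :=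
                  Real.exp_le_exp.2 (neg_nonpos.2 (by positivity))
              _ = 1 := Real.exp_zero
        _ = δ := mul_one δ
        _ ≤ ‖1 - c * q ^ (s + i + 1)‖ := by
            have := hδle (s + i) (by omega)
            simpa using this
    · have h1 : ‖c‖ * ‖q‖ ^ (s + i + 1) ≤ 1 / 2 := hK _ (by omega)
      have h2 : Real.exp (-(2 * (‖c‖ * ‖q‖ ^ (s + i + 1)))) ≤ ‖1 - c * q ^ (s + i + 1)‖ := by
        calc Real.exp (-(2 * (‖c‖ * ‖q‖ ^ (s + i + 1)))) ≤ 1 - ‖c‖ * ‖q‖ ^ (s + i + 1) :=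
              RFexp_le_one_sub (by positivity) h1
          _ ≤ ‖1 - c * q ^ (s + i + 1)‖ := by
              have := norm_sub_norm_le (1 : ℂ) (c * q ^ (s + i + 1))
              simp only [norm_one, norm_mul, norm_pow] at this
              linarith
      calc (if i < K then δ else 1) * Real.exp (-(2 * (‖c‖ * ‖q‖ ^ (i + 1))))
          ≤ 1 * Real.exp (-(2 * (‖c‖ * ‖q‖ ^ (s + i + 1)))) := by
            refine mul_le_mul ?_ ?_ (Real.exp_pos _).le one_pos.le
            · split <;> [exact hδ1; exact le_rfl]
            · apply Real.exp_le_exp.2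
              have : ‖c‖ * ‖q‖ ^ (s + i + 1) ≤ ‖c‖ * ‖q‖ ^ (i + 1) := by
                refine mul_le_mul_of_nonneg_left ?_ (norm_nonneg c)
                exact pow_le_pow_of_le_one (norm_nonneg q) hq.le (by omega)
              linarith
        _ = Real.exp (-(2 * (‖c‖ * ‖q‖ ^ (s + i + 1)))) := one_mul _
        _ ≤ ‖1 - c * q ^ (s + i + 1)‖ := h2
  calc δ ^ K * Real.exp (-(2 * ‖c‖ * ‖q‖ / (1 - ‖q‖)))
      ≤ (∏ i ∈ range n, if i < K then δ else 1) *
          ∏ i ∈ range n, Real.exp (-(2 * (‖c‖ * ‖q‖ ^ (i + 1)))) := by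
        refine mul_le_mul ?_ ?_ (Real.exp_pos _).le ?_
        · have hfil : (range n).filter (fun i => i < K) = range (min n K) := by
            ext a; simp [Nat.lt_min]
          have hcard : (∏ i ∈ range n, if i < K then δ else 1) = δ ^ min n K := by
            rw [Finset.prod_ite (fun _ => δ) (fun _ => (1:ℝ)), Finset.prod_const,
              Finset.prod_const, one_pow, mul_one, hfil, Finset.card_range]
          rw [hcard]
          exact pow_le_pow_of_le_one hδpos.le hδ1 (min_le_right n K)
        · rw [← Real.exp_sum]
          apply Real.exp_le_exp.2
          have := RFgeom_tail (norm_nonneg q) hq n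
          have h2 : ∑ x ∈ range n, -(2 * (‖c‖ * ‖q‖ ^ (x + 1)))
              = -(2 * ‖c‖ * ∑ i ∈ range n, ‖q‖ ^ (i + 1)) := by
            rw [Finset.sum_neg_distrib]
            congr 1
            rw [Finset.mul_sum]
            exact Finset.sum_congr rfl fun i _ => by ring
          rw [h2]
          have hden : 0 < 1 - ‖q‖ := by linarith
          rw [neg_le_neg_iff, mul_div_assoc]
          exact mul_le_mul_of_nonneg_left this (by positivity)
        · positivity
    _ ≤ ∏ i ∈ range n, ‖1 - c * q ^ (s + i + 1)‖ := by
        rw [← Finset.prod_mul_distrib]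
        refine Finset.prod_le_prod (fun i _ => by positivity) key

noncomputable def RFu (q z a b : ℂ) (N n : ℕ) : ℂ :=
  z ^ n * q ^ (N * n) * RFpp q a N n / RFpp q b N n

noncomputable def RFx (q z a b : ℂ) (N n : ℕ) : ℂ :=
  z ^ n * q ^ ((N + 1) * n) * RFpp q a N n / RFpp q b (N + 1) n

noncomputable def RFB (q z a b : ℂ) (k : ℕ) : ℂ :=
  z * q ^ (2 * k + 1) * (1 - a * q ^ (k + 1)) * (b - a * z * q ^ (k + 1)) /
    ((1 - b * q ^ (k + 1)) * (1 - z * q ^ (k + 1)))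

noncomputable def RFF (q z a b : ℂ) (N : ℕ) : ℂ := ∑' n, RFu q z a b N n

noncomputable def RFP (q z a b : ℂ) (N : ℕ) : ℂ := ∏ k ∈ Finset.range N, RFB q z a b k

noncomputable def RFT (q z a b : ℂ) (n : ℕ) : ℂ :=
  RFP q z a b n * (1 - a * z * q ^ (2 * n + 1))

noncomputable def RFS (q z a b : ℂ) (N : ℕ) : ℂ :=
  RFP q z a b N * ((1 - z * q ^ N) * RFF q z a b N)

lemma RFpp_succ (q c : ℂ) (s n : ℕ) :
    RFpp q c s (n + 1) = RFpp q c s n * (1 - c * q ^ (s + n + 1)) :=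
  Finset.prod_range_succ _ _

lemma RFpp_succ' (q c : ℂ) (s n : ℕ) :
    RFpp q c s (n + 1) = (1 - c * q ^ (s + 1)) * RFpp q c (s + 1) n := by
  rw [RFpp, Finset.prod_range_succ', RFpp, mul_comm]
  congr 1
  exact Finset.prod_congr rfl fun i _ => by
    rw [show s + (i + 1) + 1 = s + 1 + i + 1 from by omega]

lemma RF_T1 (q z a b : ℂ) (hbq : ∀ m : ℕ, 1 - b * q ^ (m + 1) ≠ 0) (N n : ℕ) :
    RFu q z a b N (n + 1) - z * q ^ N * RFu q z a b N n
      = ((b - a) * z * q ^ (2 * N + 1) / (1 - b * q ^ (N + 1))) * RFx q z a b N n := by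
  have hP : RFpp q b N n ≠ 0 := RFpp_ne_zero hbq N n
  have hQ : RFpp q b (N + 1) n ≠ 0 := RFpp_ne_zero hbq (N + 1) n
  have h1 : (1 : ℂ) - b * q ^ (N + 1) ≠ 0 := hbq N
  have h2 : (1 : ℂ) - b * q ^ (N + n + 1) ≠ 0 := hbq (N + n)
  have hPb : RFpp q b N n
      = (1 - b * q ^ (N + 1)) * RFpp q b (N + 1) n / (1 - b * q ^ (N + n + 1)) := by
    rw [eq_div_iff h2, ← RFpp_succ]
    exact RFpp_succ' q b N n
  rw [RFu, RFu, RFx, RFpp_succ q a N n, RFpp_succ' q b N n, hPb]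
  field_simp
  ring

lemma RF_T2 (q z a b : ℂ) (hbq : ∀ m : ℕ, 1 - b * q ^ (m + 1) ≠ 0) (N n : ℕ) :
    (b - a) * RFx q z a b N (n + 1)
      = (1 - a * q ^ (N + 1)) *
          (b * RFu q z a b (N + 1) (n + 1) - a * z * q ^ (N + 1) * RFu q z a b (N + 1) n) := by
  have hQ : RFpp q b (N + 1) n ≠ 0 := RFpp_ne_zero hbq (N + 1) n
  have h3 : (1 : ℂ) - b * q ^ (N + 1 + n + 1) ≠ 0 := by
    rw [show N + 1 + n + 1 = N + n + 1 + 1 from by omega]; exact hbq (N + n + 1)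
  rw [RFu, RFu, RFx, RFpp_succ' q a N n, RFpp_succ q a (N + 1) n, RFpp_succ q b (N + 1) n]
  field_simp
  ring

/-- The Rogers–Fine identity:
`(1−z) ∑ z^n (aq;q)_n/(bq;q)_n
  = ∑ (1 − a z q^{2n+1}) (bz)^n q^{n²} (aq;q)_n (azq/b;q)_n / ((bq;q)_n (zq;q)_n)`. -/
theorem rogers_fine (q z a b : ℂ) (hq : ‖q‖ < 1) (hz : ‖z‖ < 1)
    (hb : b ≠ 0) (hbq : ∀ m : ℕ, 1 - b * q ^ (m + 1) ≠ 0) :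
    Summable (fun n : ℕ => z ^ n * qPoch q (a * q) n / qPoch q (b * q) n) ∧
    Summable (fun n : ℕ =>
      (1 - a * z * q ^ (2 * n + 1)) * (b * z) ^ n * q ^ (n ^ 2) *
        (qPoch q (a * q) n * qPoch q (a * z * q / b) n) /
        (qPoch q (b * q) n * qPoch q (z * q) n)) ∧
    (1 - z) * ∑' n : ℕ, z ^ n * qPoch q (a * q) n / qPoch q (b * q) n
      = ∑' n : ℕ,
          (1 - a * z * q ^ (2 * n + 1)) * (b * z) ^ n * q ^ (n ^ 2) *
            (qPoch q (a * q) n * qPoch q (a * z * q / b) n) /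
            (qPoch q (b * q) n * qPoch q (z * q) n) := by
  have hq0 : (0:ℝ) ≤ ‖q‖ := norm_nonneg q
  have hq1 : ∀ k : ℕ, ‖q‖ ^ k ≤ 1 := fun k => pow_le_one₀ hq0 hq.le
  have hzq : ∀ m : ℕ, 1 - z * q ^ (m + 1) ≠ 0 := by
    intro m h
    rw [sub_eq_zero] at h
    have h1 : ‖z * q ^ (m+1)‖ < 1 := by
      rw [norm_mul, norm_pow]
      calc ‖z‖ * ‖q‖ ^ (m+1) ≤ ‖z‖ * 1 :=
            mul_le_mul_of_nonneg_left (hq1 (m+1)) (norm_nonneg z)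
        _ = ‖z‖ := mul_one _
        _ < 1 := hz
    rw [← h] at h1
    simp at h1
  obtain ⟨εB, hεB, hBlb⟩ := RFpp_norm_lb q b hq hbq
  obtain ⟨εZ, hεZ, hZlb⟩ := RFpp_norm_lb q z hq hzq
  set CA := Real.exp (‖a‖ * ‖q‖ / (1 - ‖q‖)) with hCAdef
  have hCA0 : 0 < CA := Real.exp_pos _
  have hAub : ∀ s n, ‖RFpp q a s n‖ ≤ CA := RFpp_norm_le q a hq
  -- summability of the u and x families
  have hnorm_u : ∀ N n, ‖RFu q z a b N n‖
      = ‖z‖ ^ n * ‖q‖ ^ (N * n) * ‖RFpp q a N n‖ / ‖RFpp q b N n‖ := by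
    intro N n; rw [RFu, norm_div, norm_mul, norm_mul, norm_pow, norm_pow]
  have hu_bound : ∀ N n, ‖RFu q z a b N n‖ ≤ (CA / εB) * ‖z‖ ^ n := by
    intro N n
    rw [hnorm_u]
    calc ‖z‖ ^ n * ‖q‖ ^ (N * n) * ‖RFpp q a N n‖ / ‖RFpp q b N n‖
        ≤ ‖z‖ ^ n * 1 * CA / εB := by
          gcongr <;> first
            | exact hq1 _
            | exact hAub N n
            | exact hBlb _ _
            | exact hCA0.le
            | positivity
      _ = (CA / εB) * ‖z‖ ^ n := by ring
  have su : ∀ N, Summable (fun n => RFu q z a b N n) := fun N =>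
    Summable.of_norm_bounded
      (((summable_geometric_of_lt_one (norm_nonneg z) hz)).mul_left _) (hu_bound N)
  have hx_bound : ∀ N n, ‖RFx q z a b N n‖ ≤ (CA / εB) * ‖z‖ ^ n := by
    intro N n
    rw [RFx, norm_div, norm_mul, norm_mul, norm_pow, norm_pow]
    calc ‖z‖ ^ n * ‖q‖ ^ ((N+1) * n) * ‖RFpp q a N n‖ / ‖RFpp q b (N+1) n‖
        ≤ ‖z‖ ^ n * 1 * CA / εB := by
          gcongr <;> first
            | exact hq1 _
            | exact hAub N n
            | exact hBlb _ _
            | exact hCA0.le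
            | positivity
      _ = (CA / εB) * ‖z‖ ^ n := by ring
  have sx : ∀ N, Summable (fun n => RFx q z a b N n) := fun N =>
    Summable.of_norm_bounded
      (((summable_geometric_of_lt_one (norm_nonneg z) hz)).mul_left _) (hx_bound N)
  have hu0 : ∀ N, RFu q z a b N 0 = 1 := by intro N; simp [RFu, RFpp]
  have hx0 : ∀ N, RFx q z a b N 0 = 1 := by intro N; simp [RFx, RFpp]
  -- the first functional equation
  have star : ∀ N, (1 - z * q ^ N) * RFF q z a b N
      = 1 + ((b - a) * z * q ^ (2*N+1) / (1 - b * q ^ (N+1))) * (∑' n, RFx q z a b N n) := by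
    intro N
    have hs1 : Summable (fun n => RFu q z a b N (n+1)) := (summable_nat_add_iff 1).2 (su N)
    have hs2 : Summable (fun n => z * q ^ N * RFu q z a b N n) := (su N).mul_left _
    have h1 : RFF q z a b N = 1 + ∑' n, RFu q z a b N (n+1) := by
      rw [RFF, Summable.tsum_eq_zero_add (su N), hu0]
    have h2 : z * q ^ N * RFF q z a b N = ∑' n, z * q ^ N * RFu q z a b N n := by
      rw [RFF, tsum_mul_left]
    calc (1 - z * q ^ N) * RFF q z a b N
        = (1 + ∑' n, RFu q z a b N (n+1)) - ∑' n, z * q ^ N * RFu q z a b N n := by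
          rw [← h1, ← h2]; ring
      _ = 1 + ∑' n, (RFu q z a b N (n+1) - z * q ^ N * RFu q z a b N n) := by
          rw [(hs1.hasSum.sub hs2.hasSum).tsum_eq]; ring
      _ = 1 + ∑' n, ((b - a) * z * q ^ (2*N+1) / (1 - b * q ^ (N+1))) * RFx q z a b N n := by
          rw [tsum_congr (fun n => RF_T1 q z a b hbq N n)]
      _ = 1 + ((b - a) * z * q ^ (2*N+1) / (1 - b * q ^ (N+1))) * (∑' n, RFx q z a b N n) := by
          rw [tsum_mul_left]
  -- the second functional equation
  have hRrel : ∀ N, (b - a) * (∑' n, RFx q z a b N n)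
      = -a * (1 - b * q ^ (N+1))
        + (1 - a * q ^ (N+1)) * (b - a * z * q ^ (N+1)) * RFF q z a b (N+1) := by
    intro N
    have hs0 : Summable (fun n => (b - a) * RFx q z a b N n) := (sx N).mul_left _
    have hsu1 : Summable (fun n => b * RFu q z a b (N+1) (n+1)) :=
      ((summable_nat_add_iff 1).2 (su (N+1))).mul_left _
    have hsu2 : Summable (fun n => a * z * q ^ (N+1) * RFu q z a b (N+1) n) :=
      (su (N+1)).mul_left _
    have hshift : ∑' n, RFu q z a b (N+1) (n+1) = RFF q z a b (N+1) - 1 := by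
      have h := Summable.tsum_eq_zero_add (su (N+1))
      rw [hu0] at h
      rw [← RFF] at h
      linear_combination -h
    have h1 : (b - a) * (∑' n, RFx q z a b N n)
        = (b - a) + ∑' n, (b - a) * RFx q z a b N (n+1) := by
      rw [← tsum_mul_left, Summable.tsum_eq_zero_add hs0, hx0, mul_one]
    have h2 : ∑' n, (b - a) * RFx q z a b N (n+1)
        = (1 - a * q ^ (N+1)) * (b * (RFF q z a b (N+1) - 1)
            - a * z * q ^ (N+1) * RFF q z a b (N+1)) := by
      rw [tsum_congr (fun n => RF_T2 q z a b hbq N n), tsum_mul_left]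
      congr 1
      rw [(hsu1.hasSum.sub hsu2.hasSum).tsum_eq]
      congr 1
      · rw [tsum_mul_left, hshift]
      · rw [tsum_mul_left, RFF]
    rw [h1, h2]
    ring
  -- the combined step
  have hstep : ∀ N, (1 - z * q ^ N) * RFF q z a b N
      = (1 - a * z * q ^ (2*N+1))
        + RFB q z a b N * ((1 - z * q ^ (N+1)) * RFF q z a b (N+1)) := by
    intro N
    have h1 : (1:ℂ) - b * q ^ (N+1) ≠ 0 := hbq N
    have h2 : (1:ℂ) - z * q ^ (N+1) ≠ 0 := hzq N
    have e : ((b - a) * z * q ^ (2*N+1) / (1 - b * q ^ (N+1))) * (∑' n, RFx q z a b N n)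
        = (z * q ^ (2*N+1) / (1 - b * q ^ (N+1))) * ((b - a) * (∑' n, RFx q z a b N n)) := by
      ring
    rw [star N, e, hRrel N, RFB]
    field_simp
    ring
  -- telescoping
  have hPsucc : ∀ N, RFP q z a b (N+1) = RFP q z a b N * RFB q z a b N := by
    intro N; rw [RFP, RFP, Finset.prod_range_succ]
  have htele : ∀ N, RFS q z a b N = RFT q z a b N + RFS q z a b (N+1) := by
    intro N
    rw [RFS, RFS, RFT, hstep N, hPsucc]
    ring
  have hpartial : ∀ N, ∑ n ∈ Finset.range N, RFT q z a b n
      = RFS q z a b 0 - RFS q z a b N := by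
    intro N
    induction N with
    | zero => simp
    | succ n ih => rw [Finset.sum_range_succ, ih, htele n]; ring
  -- bounds for the product
  set M : ℝ := (1 + ‖a‖) * (‖b‖ + ‖a‖) / (εB * εZ) with hMdef
  have hM0 : 0 ≤ M := by positivity
  have hppb1 : ∀ k : ℕ, εB ≤ ‖1 - b * q ^ (k+1)‖ := by
    intro k
    have h := hBlb k 1
    rw [RFpp] at h
    simpa using h
  have hppz1 : ∀ k : ℕ, εZ ≤ ‖1 - z * q ^ (k+1)‖ := by
    intro k
    have h := hZlb k 1
    rw [RFpp] at h
    simpa using h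
  have hz1 : ‖z‖ ≤ 1 := hz.le
  have hBbd : ∀ k, ‖RFB q z a b k‖ ≤ M * ‖q‖ ^ (2*k+1) := by
    intro k
    rw [RFB, norm_div, norm_mul, norm_mul, norm_mul, norm_mul, norm_pow]
    have n1 : ‖1 - a * q ^ (k+1)‖ ≤ 1 + ‖a‖ := by
      calc ‖1 - a * q^(k+1)‖ ≤ ‖(1:ℂ)‖ + ‖a * q^(k+1)‖ := norm_sub_le _ _
        _ = 1 + ‖a‖ * ‖q‖^(k+1) := by simp [norm_mul, norm_pow]
        _ ≤ 1 + ‖a‖ * 1 := by gcongr; exact hq1 _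
        _ = 1 + ‖a‖ := by ring
    have n2 : ‖b - a * z * q ^ (k+1)‖ ≤ ‖b‖ + ‖a‖ := by
      calc ‖b - a * z * q^(k+1)‖ ≤ ‖b‖ + ‖a * z * q^(k+1)‖ := norm_sub_le _ _
        _ = ‖b‖ + ‖a‖ * ‖z‖ * ‖q‖^(k+1) := by simp [norm_mul, norm_pow]
        _ ≤ ‖b‖ + ‖a‖ * 1 * 1 := by gcongr <;> first | exact hz1 | exact hq1 _
        _ = ‖b‖ + ‖a‖ := by ring
    calc ‖z‖ * ‖q‖^(2*k+1) * ‖1 - a*q^(k+1)‖ * ‖b - a*z*q^(k+1)‖ /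
          (‖1 - b*q^(k+1)‖ * ‖1 - z*q^(k+1)‖)
        ≤ 1 * ‖q‖^(2*k+1) * (1+‖a‖) * (‖b‖+‖a‖) / (εB * εZ) := by
          gcongr <;> first
            | exact hz1 | exact n1 | exact n2 | exact hppb1 k | exact hppz1 k | positivity
      _ = M * ‖q‖^(2*k+1) := by rw [hMdef]; ring
  have hsum_odd : ∀ N : ℕ, ∑ k ∈ Finset.range N, (2*k+1) = N^2 := by
    intro N
    induction N with
    | zero => simp
    | succ n ih => rw [Finset.sum_range_succ, ih]; ring
  have hPbd : ∀ N, ‖RFP q z a b N‖ ≤ M^N * ‖q‖^(N^2) := by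
    intro N
    rw [RFP, norm_prod]
    calc ∏ k ∈ Finset.range N, ‖RFB q z a b k‖
        ≤ ∏ k ∈ Finset.range N, (M * ‖q‖^(2*k+1)) :=
          Finset.prod_le_prod (fun k _ => norm_nonneg _) (fun k _ => hBbd k)
      _ = M^N * ‖q‖^(N^2) := by
          rw [Finset.prod_mul_distrib, Finset.prod_const, Finset.card_range,
            Finset.prod_pow_eq_pow_sum, hsum_odd]
  set CF : ℝ := (CA / εB) * (1 - ‖z‖)⁻¹ with hCFdef
  have hFbd : ∀ N, ‖RFF q z a b N‖ ≤ CF := by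
    intro N
    have hgs : Summable (fun n : ℕ => (CA/εB) * ‖z‖^n) :=
      (summable_geometric_of_lt_one (norm_nonneg z) hz).mul_left _
    have hnsm : Summable (fun n => ‖RFu q z a b N n‖) :=
      Summable.of_nonneg_of_le (fun n => norm_nonneg _) (hu_bound N) hgs
    calc ‖RFF q z a b N‖ ≤ ∑' n, ‖RFu q z a b N n‖ := by
          rw [RFF]; exact norm_tsum_le_tsum_norm hnsm
      _ ≤ ∑' n : ℕ, (CA/εB) * ‖z‖^n := Summable.tsum_le_tsum (hu_bound N) hnsm hgs
      _ = (CA/εB) * ∑' n : ℕ, ‖z‖^n := tsum_mul_left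
      _ = CF := by rw [tsum_geometric_of_lt_one (norm_nonneg z) hz, hCFdef]
  have hCF0 : 0 ≤ CF := le_trans (norm_nonneg _) (hFbd 0)
  have hSbd : ∀ N, ‖RFS q z a b N‖ ≤ 2 * CF * (M^N * ‖q‖^(N^2)) := by
    intro N
    rw [RFS, norm_mul, norm_mul]
    have h1 : ‖1 - z * q^N‖ ≤ 2 := by
      calc ‖1 - z*q^N‖ ≤ ‖(1:ℂ)‖ + ‖z * q^N‖ := norm_sub_le _ _
        _ = 1 + ‖z‖*‖q‖^N := by simp [norm_mul, norm_pow]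
        _ ≤ 1 + 1*1 := by gcongr <;> first | exact hz1 | exact hq1 _
        _ = 2 := by norm_num
    calc ‖RFP q z a b N‖ * (‖1 - z*q^N‖ * ‖RFF q z a b N‖)
        ≤ (M^N * ‖q‖^(N^2)) * (2 * CF) := by
          refine mul_le_mul (hPbd N) ?_ (by positivity) (by positivity)
          exact mul_le_mul h1 (hFbd N) (norm_nonneg _) (by norm_num)
      _ = 2 * CF * (M^N * ‖q‖^(N^2)) := by ring
  have htM : Filter.Tendsto (fun N : ℕ => M * ‖q‖^N) Filter.atTop (nhds 0) := by
    simpa using (tendsto_pow_atTop_nhds_zero_of_lt_one hq0 hq).const_mul M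
  obtain ⟨N0, hN0⟩ :=
    Filter.eventually_atTop.1 (htM.eventually_le_const (by norm_num : (0:ℝ) < 1/2))
  have hMq : ∀ N : ℕ, M^N * ‖q‖^(N^2) = (M * ‖q‖^N)^N := by
    intro N; rw [mul_pow, ← pow_mul, sq]
  have hpow0 : Filter.Tendsto (fun N : ℕ => M^N * ‖q‖^(N^2)) Filter.atTop (nhds 0) := by
    apply squeeze_zero' (Filter.Eventually.of_forall fun N => by positivity)
      (Filter.eventually_atTop.2 ⟨N0, fun N hN => ?_⟩)
      (tendsto_pow_atTop_nhds_zero_of_lt_one (by norm_num) (by norm_num : (1:ℝ)/2 < 1))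
    rw [hMq]
    exact pow_le_pow_left₀ (by positivity) (hN0 N hN) N
  have hS0 : Filter.Tendsto (fun N => RFS q z a b N) Filter.atTop (nhds 0) := by
    apply squeeze_zero_norm hSbd
    simpa using hpow0.const_mul (2*CF)
  -- summability of RFT
  have hsT : Summable (fun n => RFT q z a b n) := by
    apply Summable.of_norm_bounded_eventually_nat (g := fun n => (1+‖a‖) * (1/2)^n)
      ((summable_geometric_of_lt_one (by norm_num) (by norm_num : (1:ℝ)/2 < 1)).mul_left _)
    refine Filter.eventually_atTop.2 ⟨N0, fun n hn => ?_⟩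
    rw [RFT, norm_mul]
    have h1 : ‖1 - a*z*q^(2*n+1)‖ ≤ 1 + ‖a‖ := by
      calc ‖1 - a*z*q^(2*n+1)‖ ≤ ‖(1:ℂ)‖ + ‖a*z*q^(2*n+1)‖ := norm_sub_le _ _
        _ = 1 + ‖a‖*‖z‖*‖q‖^(2*n+1) := by simp [norm_mul, norm_pow]
        _ ≤ 1 + ‖a‖*1*1 := by gcongr <;> first | exact hz1 | exact hq1 _
        _ = 1 + ‖a‖ := by ring
    calc ‖RFP q z a b n‖ * ‖1 - a*z*q^(2*n+1)‖
        ≤ (M^n * ‖q‖^(n^2)) * (1+‖a‖) :=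
          mul_le_mul (hPbd n) h1 (norm_nonneg _) (by positivity)
      _ ≤ (1/2)^n * (1+‖a‖) := by
          refine mul_le_mul_of_nonneg_right ?_ (by positivity)
          rw [hMq]
          exact pow_le_pow_left₀ (by positivity) (hN0 n hn) n
      _ = (1+‖a‖) * (1/2)^n := by ring
  have hTsum : ∑' n, RFT q z a b n = RFS q z a b 0 := by
    have h1 := hsT.hasSum.tendsto_sum_nat
    have h2 : Filter.Tendsto (fun N => ∑ n ∈ Finset.range N, RFT q z a b n)
        Filter.atTop (nhds (RFS q z a b 0)) := by
      have he : (fun N => ∑ n ∈ Finset.range N, RFT q z a b n)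
          = fun N => RFS q z a b 0 - RFS q z a b N := funext hpartial
      rw [he]
      simpa using tendsto_const_nhds.sub hS0
    exact tendsto_nhds_unique h1 h2
  -- conversion to the statement's form
  have hqp : ∀ (c : ℂ) (n : ℕ), RFpp q c 0 n = qPoch q (c*q) n := by
    intro c n
    rw [RFpp, qPoch]
    exact Finset.prod_congr rfl fun i _ => by ring_nf
  have hLeq : ∀ n, z ^ n * qPoch q (a*q) n / qPoch q (b*q) n = RFu q z a b 0 n := by
    intro n
    rw [RFu, hqp, hqp]
    norm_num
  have hTe : ∀ n, RFT q z a b n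
      = (1 - a*z*q^(2*n+1)) * (b*z)^n * q^(n^2) *
          (qPoch q (a*q) n * qPoch q (a*z*q/b) n) /
          (qPoch q (b*q) n * qPoch q (z*q) n) := by
    intro n
    have hd1 : qPoch q (b*q) n ≠ 0 := by rw [← hqp]; exact RFpp_ne_zero hbq 0 n
    have hd2 : qPoch q (z*q) n ≠ 0 := by rw [← hqp]; exact RFpp_ne_zero hzq 0 n
    have e1a : ∏ _k ∈ Finset.range n, z = z^n := by
      rw [Finset.prod_const, Finset.card_range]
    have e1b : ∏ k ∈ Finset.range n, q^(2*k+1) = q^(n^2) := by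
      rw [Finset.prod_pow_eq_pow_sum, hsum_odd]
    have e2 : ∏ k ∈ Finset.range n, (1 - a*q^(k+1)) = qPoch q (a*q) n := by
      rw [qPoch]; exact Finset.prod_congr rfl fun i _ => by ring_nf
    have e3 : ∏ k ∈ Finset.range n, (b - a*z*q^(k+1)) = b^n * qPoch q (a*z*q/b) n := by
      calc ∏ k ∈ Finset.range n, (b - a*z*q^(k+1))
          = ∏ k ∈ Finset.range n, (b * (1 - a*z*q/b * q^k)) :=
            Finset.prod_congr rfl fun k _ => by field_simp; ring
        _ = b^n * qPoch q (a*z*q/b) n := by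
            rw [Finset.prod_mul_distrib, Finset.prod_const, Finset.card_range, qPoch]
    have e4 : ∏ k ∈ Finset.range n, (1 - b*q^(k+1)) = qPoch q (b*q) n := by
      rw [qPoch]; exact Finset.prod_congr rfl fun i _ => by ring_nf
    have e5 : ∏ k ∈ Finset.range n, (1 - z*q^(k+1)) = qPoch q (z*q) n := by
      rw [qPoch]; exact Finset.prod_congr rfl fun i _ => by ring_nf
    have hP : RFP q z a b n
        = (z^n * q^(n^2) * qPoch q (a*q) n * (b^n * qPoch q (a*z*q/b) n)) /
            (qPoch q (b*q) n * qPoch q (z*q) n) := by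
      rw [RFP]
      simp only [RFB]
      rw [Finset.prod_div_distrib, Finset.prod_mul_distrib, Finset.prod_mul_distrib,
        Finset.prod_mul_distrib, Finset.prod_mul_distrib, e1a, e1b, e2, e3, e4, e5]
    rw [RFT, hP]
    field_simp
    ring
  refine ⟨(su 0).congr (fun n => (hLeq n).symm), hsT.congr (fun n => hTe n), ?_⟩
  calc (1 - z) * ∑' n : ℕ, z ^ n * qPoch q (a*q) n / qPoch q (b*q) n
      = (1 - z) * RFF q z a b 0 := by rw [tsum_congr hLeq, RFF]
    _ = RFS q z a b 0 := by rw [RFS, RFP]; simp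
    _ = ∑' n, RFT q z a b n := hTsum.symm
    _ = ∑' n : ℕ, (1 - a*z*q^(2*n+1)) * (b*z)^n * q^(n^2) *
          (qPoch q (a*q) n * qPoch q (a*z*q/b) n) /
          (qPoch q (b*q) n * qPoch q (z*q) n) := tsum_congr hTe
end

section
/- For all q, z ∈ ℂ with |q| < 1 and |z| < 1, the series ∑_{n=0}^∞ z^n · (z;q)_{n+1} / (−zq;q)_n converges and equals 1 + 2 ∑_{n=1}^∞ (−1)^n z^{2n} q^{n²}. -/
open Filter Finset Topology

namespace CO


lemma qPoch_zero (q x : ℂ) : qPoch q x 0 = 1 := by simp [qPoch]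

lemma qPoch_succ (q x : ℂ) (n : ℕ) : qPoch q x (n+1) = qPoch q x n * (1 - x * q ^ n) :=
  Finset.prod_range_succ _ _

lemma qPoch_succ' (q x : ℂ) (n : ℕ) : qPoch q x (n+1) = (1 - x) * qPoch q (x*q) n := by
  rw [qPoch, qPoch, Finset.prod_range_succ', mul_comm]
  rw [show (1 - x * q ^ 0) = 1 - x by simp]
  congr 1
  exact Finset.prod_congr rfl fun i _ => by ring

lemma one_add_ne {z q : ℂ} (hq : ‖q‖ < 1) (hz : ‖z‖ < 1) (k : ℕ) :
    (1 + z * q ^ (k+1)) ≠ 0 := by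
  intro h
  have h1 : ‖z * q ^ (k+1)‖ < 1 := by
    rw [norm_mul, norm_pow]
    calc ‖z‖ * ‖q‖ ^ (k+1) ≤ ‖z‖ * 1 := by
          gcongr; exact pow_le_one₀ (norm_nonneg _) hq.le
      _ < 1 := by simpa using hz
  have h2 : z * q ^ (k+1) = -1 := by linear_combination h
  rw [h2] at h1; simp at h1

lemma qPoch_ne {z q : ℂ} (hq : ‖q‖ < 1) (hz : ‖z‖ < 1) (n : ℕ) :
    qPoch q (-(z*q)) n ≠ 0 := by
  rw [qPoch]
  apply Finset.prod_ne_zero_iff.2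
  intro i _
  have : 1 - -(z*q) * q ^ i = 1 + z * q ^ (i+1) := by ring
  rw [this]
  exact one_add_ne hq hz i


noncomputable def tt (q z : ℂ) (n : ℕ) : ℂ := z ^ n * qPoch q z (n + 1) / qPoch q (-(z * q)) n
noncomputable def CC (q z : ℂ) (n : ℕ) : ℂ := z ^ (n+1) * qPoch q (z*q) (n+1) / qPoch q (-(z*q)) n

lemma tt_succ {q z : ℂ} (hq : ‖q‖ < 1) (hz : ‖z‖ < 1) (n : ℕ) :
    tt q z (n+1) = tt q z n * (z * (1 - z * q ^ (n+1)) / (1 + z * q ^ (n+1))) := by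
  have hb : qPoch q (-(z*q)) n ≠ 0 := qPoch_ne hq hz n
  have h1 : (1 + z * q ^ (n+1)) ≠ 0 := one_add_ne hq hz n
  rw [tt, tt, qPoch_succ q z (n+1), qPoch_succ q (-(z*q)) n]
  rw [show (1 - -(z*q) * q ^ n) = 1 + z * q ^ (n+1) by ring]
  field_simp
  ring

lemma CC_succ {q z : ℂ} (hq : ‖q‖ < 1) (hz : ‖z‖ < 1) (n : ℕ) :
    CC q z (n+1) = CC q z n * (z * (1 - z * q ^ (n+2)) / (1 + z * q ^ (n+1))) := by
  have hb : qPoch q (-(z*q)) n ≠ 0 := qPoch_ne hq hz n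
  have h1 : (1 + z * q ^ (n+1)) ≠ 0 := one_add_ne hq hz n
  rw [CC, CC, qPoch_succ q (z*q) (n+1), qPoch_succ q (-(z*q)) n]
  rw [show (1 - -(z*q) * q ^ n) = 1 + z * q ^ (n+1) by ring]
  rw [show (1 - z*q * q ^ (n+1)) = 1 - z * q ^ (n+2) by ring]
  field_simp
  ring

lemma ratio_tendsto {q z : ℂ} (hq : ‖q‖ < 1) (c : ℂ) :
    Tendsto (fun n : ℕ => ‖z * (1 - z * c * q ^ (n+1)) / (1 + z * q ^ (n+1))‖) atTop (𝓝 ‖z‖) := by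
  have hq0 : Tendsto (fun n : ℕ => q ^ (n+1)) atTop (𝓝 0) := by
    have := tendsto_pow_atTop_nhds_zero_of_norm_lt_one hq
    exact this.comp (tendsto_add_atTop_nat 1)
  have : Tendsto (fun n : ℕ => z * (1 - z * c * q ^ (n+1)) / (1 + z * q ^ (n+1))) atTop
      (𝓝 (z * (1 - z * c * 0) / (1 + z * 0))) := by
    apply Tendsto.div
    · exact tendsto_const_nhds.mul (tendsto_const_nhds.sub (tendsto_const_nhds.mul hq0))
    · exact tendsto_const_nhds.add (tendsto_const_nhds.mul hq0)
    · simp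
  have h2 := this.norm
  simpa using h2

lemma summable_tt {q z : ℂ} (hq : ‖q‖ < 1) (hz : ‖z‖ < 1) : Summable (tt q z) := by
  apply summable_of_ratio_norm_eventually_le (r := (1+‖z‖)/2) (by linarith)
  have h1 := ratio_tendsto (z := z) hq 1
  have h2 : ∀ᶠ n in atTop,
      ‖z * (1 - z * 1 * q ^ (n+1)) / (1 + z * q ^ (n+1))‖ < (1+‖z‖)/2 :=
    h1.eventually_lt_const (by linarith)
  filter_upwards [h2] with n hn
  rw [tt_succ hq hz n, norm_mul]
  have := norm_nonneg (tt q z n)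
  have hn' : ‖z * (1 - z * q ^ (n+1)) / (1 + z * q ^ (n+1))‖ < (1+‖z‖)/2 := by
    simpa using hn
  nlinarith [norm_nonneg (z * (1 - z * q ^ (n+1)) / (1 + z * q ^ (n+1)))]

lemma summable_CC {q z : ℂ} (hq : ‖q‖ < 1) (hz : ‖z‖ < 1) : Summable (CC q z) := by
  apply summable_of_ratio_norm_eventually_le (r := (1+‖z‖)/2) (by linarith)
  have h1 := ratio_tendsto (z := z) hq q
  have h2 : ∀ᶠ n in atTop,
      ‖z * (1 - z * q * q ^ (n+1)) / (1 + z * q ^ (n+1))‖ < (1+‖z‖)/2 :=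
    h1.eventually_lt_const (by linarith)
  filter_upwards [h2] with n hn
  rw [CC_succ hq hz n, norm_mul]
  have hn' : ‖z * (1 - z * q ^ (n+2)) / (1 + z * q ^ (n+1))‖ < (1+‖z‖)/2 := by
    rw [show z * q ^ (n+2) = z * q * q ^ (n+1) by ring]
    exact hn
  nlinarith [norm_nonneg (tt q z n), norm_nonneg (CC q z n),
    norm_nonneg (z * (1 - z * q ^ (n+2)) / (1 + z * q ^ (n+1)))]


lemma one_add_zq_ne {z q : ℂ} (hq : ‖q‖ < 1) (hz : ‖z‖ < 1) : (1 + z * q) ≠ 0 := by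
  have := one_add_ne hq hz 0
  simpa using this

lemma hzq {z q : ℂ} (hq : ‖q‖ < 1) (hz : ‖z‖ < 1) : ‖z * q‖ < 1 := by
  rw [norm_mul]
  nlinarith [norm_nonneg z, norm_nonneg q]

/-- the key telescoping identity -/
lemma key_step {q z : ℂ} (hq : ‖q‖ < 1) (hz : ‖z‖ < 1) (n : ℕ) :
    tt q z (n+1) + z^2 * q * tt q (z*q) n = CC q z n - CC q z (n+1) := by
  have hb : qPoch q (-(z*q)) n ≠ 0 := qPoch_ne hq hz n
  have hb1 : qPoch q (-(z*q)) (n+1) ≠ 0 := qPoch_ne hq hz (n+1)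
  have hc : qPoch q (-(z*q*q)) n ≠ 0 := by
    have := qPoch_ne hq (hzq hq hz) n
    exact this
  have h1 : (1 + z * q ^ (n+1)) ≠ 0 := one_add_ne hq hz n
  have h0 : (1 + z * q) ≠ 0 := one_add_zq_ne hq hz
  -- relation between the two "denominator" Pochhammers
  have hrel : qPoch q (-(z*q)) (n+1) = (1 + z*q) * qPoch q (-(z*q*q)) n := by
    rw [qPoch_succ' q (-(z*q)) n, show (-(z*q))*q = -(z*q*q) from by ring]
    ring
  have hrel2 : qPoch q (-(z*q)) (n+1) = qPoch q (-(z*q)) n * (1 + z * q ^ (n+1)) := by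
    rw [qPoch_succ q (-(z*q)) n]; ring
  -- numerator Pochhammers in terms of a := qPoch q (z*q) n
  have e3 : qPoch q (z*q) (n+1) = qPoch q (z*q) n * (1 - z * q ^ (n+1)) := by
    rw [qPoch_succ q (z*q) n]; ring
  have hcval : qPoch q (-(z*q*q)) n = qPoch q (-(z*q)) n * (1 + z * q ^ (n+1)) / (1 + z*q) := by
    rw [eq_div_iff h0]
    linear_combination hrel2 - hrel
  have e4 : qPoch q (z*q) (n+1+1) =
      qPoch q (z*q) n * (1 - z * q ^ (n+1)) * (1 - z * q * q ^ (n+1)) := by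
    rw [qPoch_succ q (z*q) (n+1), e3]
  have e1 : qPoch q z (n+1+1) = (1 - z) * (qPoch q (z*q) n * (1 - z * q ^ (n+1))) := by
    rw [qPoch_succ' q z (n+1), qPoch_succ q (z*q) n]; ring
  simp only [tt, CC]
  rw [e1, e3, e4, hrel2, hcval]
  field_simp
  ring


lemma tt_zero (q z : ℂ) : tt q z 0 = 1 - z := by
  simp [tt, qPoch]

lemma CC_zero (q z : ℂ) : CC q z 0 = z * (1 - z*q) := by
  simp [CC, qPoch]

lemma feq_L {q z : ℂ} (hq : ‖q‖ < 1) (hz : ‖z‖ < 1) :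
    ∑' n, tt q z n = 1 - z^2*q - z^2*q * ∑' n, tt q (z*q) n := by
  have hs : Summable (tt q z) := summable_tt hq hz
  have hsq : Summable (tt q (z*q)) := summable_tt hq (hzq hq hz)
  have hsC : Summable (CC q z) := summable_CC hq hz
  have hsC1 : Summable (fun n => CC q z (n+1)) := (summable_nat_add_iff 1).2 hsC
  have hg : Summable (fun n => CC q z n - CC q z (n+1)) := hsC.sub hsC1
  have htel : ∑' n, (CC q z n - CC q z (n+1)) = CC q z 0 := by
    have hps := hg.hasSum.tendsto_sum_nat
    have heq : ∀ N, ∑ i ∈ range N, (CC q z i - CC q z (i+1)) = CC q z 0 - CC q z N :=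
      fun N => Finset.sum_range_sub' (CC q z) N
    have h2 : Tendsto (fun N => ∑ i ∈ range N, (CC q z i - CC q z (i+1))) atTop
        (𝓝 (CC q z 0 - 0)) := by
      simp only [heq]
      exact tendsto_const_nhds.sub hsC.tendsto_atTop_zero
    have := tendsto_nhds_unique hps h2
    simpa using this
  have hterm : ∀ n, tt q z (n+1) = (CC q z n - CC q z (n+1)) - z^2*q * tt q (z*q) n :=
    fun n => by linear_combination key_step hq hz n
  have hsum1 : ∑' n, tt q z (n+1) = CC q z 0 - z^2*q * ∑' n, tt q (z*q) n := by
    rw [tsum_congr hterm, Summable.tsum_sub hg (hsq.mul_left _), htel, tsum_mul_left]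
  have hzero := Summable.tsum_eq_zero_add hs
  rw [hzero, hsum1, tt_zero, CC_zero]
  ring


noncomputable def gg (q z : ℂ) (n : ℕ) : ℂ := (-1:ℂ)^(n+1) * z^(2*(n+1)) * q^((n+1)^2)

lemma summable_gg {q z : ℂ} (hq : ‖q‖ < 1) (hz : ‖z‖ < 1) : Summable (gg q z) := by
  apply Summable.of_norm_bounded (g := fun n => (‖z‖^2*‖q‖)^(n+1))
  · apply Summable.comp_injective _ (add_left_injective 1)
    · exact summable_geometric_of_lt_one (by positivity)
        (by nlinarith [norm_nonneg z, norm_nonneg q, sq_nonneg ‖z‖])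
  · intro n
    rw [gg, norm_mul, norm_mul, norm_pow, norm_pow, norm_pow]
    simp only [norm_neg, norm_one, one_pow, one_mul]
    rw [mul_pow, ← pow_mul]
    apply mul_le_mul_of_nonneg_left _ (by positivity)
    exact pow_le_pow_of_le_one (norm_nonneg _) hq.le (Nat.le_self_pow (by norm_num) _)
lemma feq_G {q z : ℂ} (hq : ‖q‖ < 1) (hz : ‖z‖ < 1) :
    (1 + 2 * ∑' n, gg q z n) = 1 - z^2*q - z^2*q * (1 + 2 * ∑' n, gg q (z*q) n) := by
  have hs : Summable (gg q z) := summable_gg hq hz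
  have hsq : Summable (gg q (z*q)) := summable_gg hq (hzq hq hz)
  have hterm : ∀ n, z^2*q * gg q (z*q) n = - gg q z (n+1) := by
    intro n
    rw [gg, gg]
    rw [show (2*(n+1+1)) = 2*(n+1) + 2 from by ring,
        show ((n+1+1)^2 : ℕ) = (n+1)^2 + (2*(n+1) + 1) from by ring,
        pow_add, pow_add, mul_pow]
    ring
  have h1 : z^2*q * ∑' n, gg q (z*q) n = - ∑' n, gg q z (n+1) := by
    rw [← tsum_mul_left, tsum_congr hterm, tsum_neg]
  have h0 : ∑' n, gg q z n = gg q z 0 + ∑' n, gg q z (n+1) := Summable.tsum_eq_zero_add hs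
  have hg0 : gg q z 0 = - (z^2*q) := by norm_num [gg]
  rw [h0, hg0]
  linear_combination (2:ℂ) * h1

lemma one_sub_norm_le {x : ℂ} : 1 - ‖x‖ ≤ ‖1 + x‖ := by
  have h : (1:ℝ) ≤ ‖1 + x‖ + ‖x‖ := by
    calc (1:ℝ) = ‖(1 + x) + (-x)‖ := by norm_num
      _ ≤ ‖1+x‖ + ‖-x‖ := norm_add_le _ _
      _ = ‖1+x‖ + ‖x‖ := by rw [norm_neg]
  linarith

lemma norm_tt_le {q w : ℂ} (hq : ‖q‖ < 1) (hw : ‖w‖ ≤ 1/4) (n : ℕ) :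
    ‖tt q w n‖ ≤ (5/4) * (5/3*‖w‖)^n := by
  have hup : ‖qPoch q w (n+1)‖ ≤ (5/4)^(n+1) := by
    rw [qPoch]
    calc ‖∏ i ∈ range (n+1), (1 - w * q ^ i)‖ ≤ ∏ i ∈ range (n+1), ‖1 - w * q ^ i‖ :=
          norm_prod_le _ _
      _ ≤ ∏ _i ∈ range (n+1), (5/4 : ℝ) := by
          apply Finset.prod_le_prod (fun i _ => norm_nonneg _)
          intro i _
          calc ‖1 - w * q ^ i‖ ≤ ‖(1:ℂ)‖ + ‖w * q ^ i‖ := norm_sub_le _ _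
            _ ≤ 1 + 1/4 := by
                rw [norm_one, norm_mul, norm_pow]
                have h1 : ‖q‖^i ≤ 1 := pow_le_one₀ (norm_nonneg _) hq.le
                have h2 : ‖w‖ * ‖q‖^i ≤ 1/4 * 1 := by
                  apply mul_le_mul hw h1 (by positivity) (by norm_num)
                linarith
            _ = 5/4 := by norm_num
      _ = (5/4)^(n+1) := by rw [Finset.prod_const, Finset.card_range]
  have hdn : (3/4)^n ≤ ‖qPoch q (-(w*q)) n‖ := by
    rw [qPoch, norm_prod]
    calc ((3:ℝ)/4)^n = ∏ _i ∈ range n, (3/4 : ℝ) := by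
          rw [Finset.prod_const, Finset.card_range]
      _ ≤ ∏ i ∈ range n, ‖1 - -(w*q) * q ^ i‖ := by
          apply Finset.prod_le_prod (fun i _ => by norm_num)
          intro i _
          have : 1 - -(w*q) * q ^ i = 1 + w * (q^(i+1)) := by ring
          rw [this]
          have h1 : ‖w * q^(i+1)‖ ≤ 1/4 := by
            rw [norm_mul, norm_pow]
            have h1 : ‖q‖^(i+1) ≤ 1 := pow_le_one₀ (norm_nonneg _) hq.le
            calc ‖w‖ * ‖q‖^(i+1) ≤ 1/4 * 1 := mul_le_mul hw h1 (by positivity) (by norm_num)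
              _ = 1/4 := by norm_num
          have := one_sub_norm_le (x := w * q^(i+1))
          linarith
  rw [tt, norm_div, norm_mul, norm_pow]
  have hq0 : (0:ℝ) < (3/4)^n := by positivity
  have hd0 : (0:ℝ) < ‖qPoch q (-(w*q)) n‖ := lt_of_lt_of_le hq0 hdn
  calc ‖w‖^n * ‖qPoch q w (n+1)‖ / ‖qPoch q (-(w*q)) n‖
      ≤ ‖w‖^n * (5/4)^(n+1) / (3/4)^n := by
        apply div_le_div₀ (by positivity) _ hq0 hdn
        exact mul_le_mul_of_nonneg_left hup (by positivity)
    _ = (5/4) * (5/3*‖w‖)^n := by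
        rw [mul_pow, pow_succ]
        field_simp
        have h35 : ((3:ℝ)/4)^n * (5/3)^n = (5/4)^n := by rw [← mul_pow]; norm_num
        linear_combination (-(‖w‖^n)) * h35

lemma L_near {q w : ℂ} (hq : ‖q‖ < 1) (hw : ‖w‖ ≤ 1/4) :
    ‖(∑' n, tt q w n) - 1‖ ≤ 5 * ‖w‖ := by
  have hw1 : ‖w‖ < 1 := by linarith
  have hs : Summable (tt q w) := summable_tt hq hw1
  set x : ℝ := 5/3 * ‖w‖ with hx
  have hx0 : 0 ≤ x := by positivity
  have hx1 : x < 1 := by rw [hx]; linarith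
  have hb : ∀ n, ‖tt q w (n+1)‖ ≤ (5/4) * x^(n+1) := fun n => norm_tt_le hq hw (n+1)
  have hgs : Summable (fun n : ℕ => (5/4 : ℝ) * x^(n+1)) := by
    apply Summable.mul_left
    exact ((summable_geometric_of_lt_one hx0 hx1).mul_right x).congr
      (fun n => by rw [pow_succ])
  have hsn : Summable (fun n => ‖tt q w (n+1)‖) :=
    Summable.of_nonneg_of_le (fun n => norm_nonneg _) hb hgs
  have hS1 : ‖∑' n, tt q w (n+1)‖ ≤ (5/4) * (x * (1-x)⁻¹) := by
    calc ‖∑' n, tt q w (n+1)‖ ≤ ∑' n, ‖tt q w (n+1)‖ := norm_tsum_le_tsum_norm hsn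
      _ ≤ ∑' n : ℕ, (5/4 : ℝ) * x^(n+1) := Summable.tsum_le_tsum hb hsn hgs
      _ = (5/4) * (x * (1-x)⁻¹) := by
          rw [tsum_mul_left]
          congr 1
          have : ∑' n : ℕ, x^(n+1) = ∑' n : ℕ, x^n * x :=
            tsum_congr (fun n => by rw [pow_succ])
          rw [this, tsum_mul_right, tsum_geometric_of_lt_one hx0 hx1]
          ring
  rw [Summable.tsum_eq_zero_add hs, tt_zero]
  have h2 : (1 - w + ∑' n, tt q w (n+1)) - 1 = (∑' n, tt q w (n+1)) - w := by ring
  rw [h2]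
  have h3 : ‖(∑' n, tt q w (n+1)) - w‖ ≤ ‖∑' n, tt q w (n+1)‖ + ‖w‖ := norm_sub_le _ _
  -- numeric: (5/4) x (1-x)⁻¹ ≤ 4‖w‖ since x ≤ 5/12
  have hx12 : x ≤ 5/12 := by rw [hx]; linarith
  have h4 : (5/4) * (x * (1-x)⁻¹) ≤ 4 * ‖w‖ := by
    rw [hx]
    have h5 : (0:ℝ) < 1 - 5/3 * ‖w‖ := by linarith
    have h6 : (1 - 5/3*‖w‖)⁻¹ ≤ (7/12 : ℝ)⁻¹ := by
      apply inv_anti₀ (by norm_num) (by linarith)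
    have h7 : (0:ℝ) ≤ 5/4 * (5/3 * ‖w‖) := by positivity
    calc 5/4 * (5/3*‖w‖ * (1 - 5/3*‖w‖)⁻¹) = (5/4 * (5/3*‖w‖)) * (1 - 5/3*‖w‖)⁻¹ := by ring
      _ ≤ (5/4 * (5/3*‖w‖)) * (7/12:ℝ)⁻¹ := by exact mul_le_mul_of_nonneg_left h6 h7
      _ ≤ 4 * ‖w‖ := by nlinarith [norm_nonneg w]
  linarith

lemma G_near {q w : ℂ} (hq : ‖q‖ < 1) (hw : ‖w‖ ≤ 1/4) :
    ‖(1 + 2 * ∑' n, gg q w n) - 1‖ ≤ (2 / (1 - ‖q‖)) * ‖w‖ := by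
  have hw1 : ‖w‖ < 1 := by linarith
  have hq1 : (0:ℝ) < 1 - ‖q‖ := by linarith
  have hb : ∀ n, ‖gg q w n‖ ≤ ‖w‖ * ‖q‖^(n+1) := by
    intro n
    rw [gg, norm_mul, norm_mul, norm_pow, norm_pow, norm_pow]
    simp only [norm_neg, norm_one, one_pow, one_mul]
    have h1 : ‖w‖^(2*(n+1)) ≤ ‖w‖ := by
      calc ‖w‖^(2*(n+1)) ≤ ‖w‖^1 :=
            pow_le_pow_of_le_one (norm_nonneg _) hw1.le (by omega)
        _ = ‖w‖ := pow_one _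
    have h2 : ‖q‖^((n+1)^2) ≤ ‖q‖^(n+1) :=
      pow_le_pow_of_le_one (norm_nonneg _) hq.le (Nat.le_self_pow (by norm_num) _)
    exact mul_le_mul h1 h2 (by positivity) (norm_nonneg _)
  have hgs : Summable (fun n : ℕ => ‖w‖ * ‖q‖^(n+1)) := by
    apply Summable.mul_left
    exact ((summable_geometric_of_lt_one (norm_nonneg q) hq).mul_right ‖q‖).congr
      (fun n => by rw [pow_succ])
  have hsn : Summable (fun n => ‖gg q w n‖) :=
    Summable.of_nonneg_of_le (fun n => norm_nonneg _) hb hgs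
  have hS : ‖∑' n, gg q w n‖ ≤ ‖w‖ * (‖q‖ * (1-‖q‖)⁻¹) := by
    calc ‖∑' n, gg q w n‖ ≤ ∑' n, ‖gg q w n‖ := norm_tsum_le_tsum_norm hsn
      _ ≤ ∑' n : ℕ, ‖w‖ * ‖q‖^(n+1) := Summable.tsum_le_tsum hb hsn hgs
      _ = ‖w‖ * (‖q‖ * (1-‖q‖)⁻¹) := by
          rw [tsum_mul_left]
          congr 1
          have : ∑' n : ℕ, ‖q‖^(n+1) = ∑' n : ℕ, ‖q‖^n * ‖q‖ :=
            tsum_congr (fun n => by rw [pow_succ])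
          rw [this, tsum_mul_right, tsum_geometric_of_lt_one (norm_nonneg q) hq]
          ring
  have h2 : (1 + 2 * ∑' n, gg q w n) - 1 = 2 * ∑' n, gg q w n := by ring
  rw [h2, norm_mul]
  have hqb : ‖q‖ * (1-‖q‖)⁻¹ ≤ (1-‖q‖)⁻¹ := by
    apply mul_le_of_le_one_left (by positivity) hq.le
  have : ‖(2:ℂ)‖ = 2 := by norm_num
  rw [this]
  calc 2 * ‖∑' n, gg q w n‖ ≤ 2 * (‖w‖ * (‖q‖ * (1-‖q‖)⁻¹)) := by linarith [hS]
    _ ≤ (2 / (1 - ‖q‖)) * ‖w‖ := by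
        rw [div_eq_mul_inv]
        nlinarith [norm_nonneg w, inv_nonneg.2 hq1.le, mul_le_mul_of_nonneg_left hqb (norm_nonneg w)]
  

noncomputable def DD (q w : ℂ) : ℂ := (∑' n, tt q w n) - (1 + 2 * ∑' n, gg q w n)

lemma feq_D {q w : ℂ} (hq : ‖q‖ < 1) (hw : ‖w‖ < 1) :
    DD q w = -(w^2*q) * DD q (w*q) := by
  rw [DD, DD, feq_L hq hw, feq_G hq hw]
  ring

lemma norm_DD_le {q w : ℂ} (hq : ‖q‖ < 1) (hw : ‖w‖ < 1) :
    ‖DD q w‖ ≤ ‖DD q (w*q)‖ := by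
  rw [feq_D hq hw, norm_mul, norm_neg, norm_mul, norm_pow]
  have h1 : ‖w‖^2 * ‖q‖ ≤ 1 := by nlinarith [norm_nonneg w, norm_nonneg q]
  nlinarith [norm_nonneg (DD q (w*q)), norm_nonneg w, norm_nonneg q, sq_nonneg ‖w‖]

lemma norm_pow_lt {q z : ℂ} (hq : ‖q‖ < 1) (hz : ‖z‖ < 1) (N : ℕ) : ‖z * q^N‖ < 1 := by
  rw [norm_mul, norm_pow]
  calc ‖z‖ * ‖q‖^N ≤ ‖z‖ * 1 := by
        apply mul_le_mul_of_nonneg_left (pow_le_one₀ (norm_nonneg _) hq.le) (norm_nonneg _)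
    _ < 1 := by simpa using hz

lemma DD_iter {q z : ℂ} (hq : ‖q‖ < 1) (hz : ‖z‖ < 1) (N : ℕ) :
    ‖DD q z‖ ≤ ‖DD q (z * q^N)‖ := by
  induction N with
  | zero => simp
  | succ n ih =>
    calc ‖DD q z‖ ≤ ‖DD q (z * q^n)‖ := ih
      _ ≤ ‖DD q (z * q^n * q)‖ := norm_DD_le hq (norm_pow_lt hq hz n)
      _ = ‖DD q (z * q^(n+1))‖ := by rw [pow_succ, mul_assoc]

lemma DD_zero {q z : ℂ} (hq : ‖q‖ < 1) (hz : ‖z‖ < 1) : DD q z = 0 := by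
  have hq1 : (0:ℝ) < 1 - ‖q‖ := by linarith
  set c : ℝ := 5 + 2 / (1 - ‖q‖) with hc
  have hc0 : 0 < c := by positivity
  have htend : Tendsto (fun N : ℕ => ‖z‖ * ‖q‖^N) atTop (𝓝 0) := by
    have := tendsto_pow_atTop_nhds_zero_of_lt_one (norm_nonneg q) hq
    simpa using this.const_mul ‖z‖
  have hev : ∀ᶠ N in atTop, ‖z‖ * ‖q‖^N < 1/4 := htend.eventually_lt_const (by norm_num)
  have hDDbound : ∀ᶠ N : ℕ in atTop, ‖DD q (z * q^N)‖ ≤ c * (‖z‖ * ‖q‖^N) := by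
    filter_upwards [hev] with N hN
    have hw : ‖z * q^N‖ ≤ 1/4 := by rw [norm_mul, norm_pow]; linarith
    have h1 := L_near (q := q) (w := z * q^N) hq hw
    have h2 := G_near (q := q) (w := z * q^N) hq hw
    have h3 : DD q (z*q^N) = ((∑' n, tt q (z*q^N) n) - 1) - ((1 + 2 * ∑' n, gg q (z*q^N) n) - 1) := by
      rw [DD]; ring
    rw [h3]
    calc ‖((∑' n, tt q (z*q^N) n) - 1) - ((1 + 2 * ∑' n, gg q (z*q^N) n) - 1)‖
        ≤ ‖(∑' n, tt q (z*q^N) n) - 1‖ + ‖(1 + 2 * ∑' n, gg q (z*q^N) n) - 1‖ := norm_sub_le _ _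
      _ ≤ 5 * ‖z*q^N‖ + (2/(1-‖q‖)) * ‖z*q^N‖ := by linarith
      _ = c * (‖z‖ * ‖q‖^N) := by rw [norm_mul, norm_pow, hc]; ring
  have htend2 : Tendsto (fun N : ℕ => ‖DD q (z*q^N)‖) atTop (𝓝 0) := by
    apply squeeze_zero' (Eventually.of_forall (fun N => norm_nonneg _)) hDDbound
    simpa using htend.const_mul c
  have hle : ‖DD q z‖ ≤ 0 :=
    ge_of_tendsto' htend2 (fun N => DD_iter hq hz N) |>.trans_eq rfl
  exact norm_le_zero_iff.mp hle


end CO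

/-- For `|q| < 1` and `|z| < 1`, the series `∑ z^n (z;q)_{n+1} / (−zq;q)_n`
converges and equals `1 + 2 ∑_{n≥1} (−1)^n z^{2n} q^{n²}`. -/
theorem coogan_ono_type_identity (q z : ℂ) (hq : ‖q‖ < 1) (hz : ‖z‖ < 1) :
    Summable (fun n : ℕ => z ^ n * qPoch q z (n + 1) / qPoch q (-(z * q)) n) ∧
    Summable (fun n : ℕ => (-1 : ℂ) ^ (n + 1) * z ^ (2 * (n + 1)) * q ^ ((n + 1) ^ 2)) ∧
    ∑' n : ℕ, z ^ n * qPoch q z (n + 1) / qPoch q (-(z * q)) n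
      = 1 + 2 * ∑' n : ℕ, (-1 : ℂ) ^ (n + 1) * z ^ (2 * (n + 1)) * q ^ ((n + 1) ^ 2) := by
  refine ⟨CO.summable_tt hq hz, CO.summable_gg hq hz, ?_⟩
  have h := CO.DD_zero hq hz
  rw [CO.DD, sub_eq_zero] at h
  exact h
end

section
/- Fix q, a, b ∈ ℂ and let F ∈ ℂ[[z]]. Let c : ℕ → ℂ be the unique sequence with [z^N]{F} = ∑_{n=0}^{N} c_n · [z^N]{ z^n (az;q)_n (bz;q)_n^{−1} } for all N ≥ 0. Then c_0 = [z^0]{F}, and for every n ≥ 1: c_n = [z^n]{ F · (bz;q)_{n−1} · (az;q)_n^{−1} } − a · ∑_{k=0}^{n−1} B_{n−k,1}(a,b) q^{(n−k)k} · [z^k]{ F · (bz;q)_k · (az;q)_{k+1}^{−1} }. -/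
open PowerSeries

/-- The polynomial `(xz;q)_n = ∏_{i=0}^{n-1} (1 - x q^i z)` viewed in `ℂ[[z]]`. -/
noncomputable def qpoly (q x : ℂ) (n : ℕ) : PowerSeries ℂ :=
  ∏ i ∈ Finset.range n, (1 - PowerSeries.C (x * q ^ i) * PowerSeries.X)

namespace QThm

open Finset

lemma constCoeff_qpoly (q x : ℂ) (n : ℕ) : constantCoeff (qpoly q x n) = 1 := by
  unfold qpoly
  rw [map_prod]
  apply Finset.prod_eq_one
  intro i _
  simp

lemma constCoeff_qpoly_ne (q x : ℂ) (n : ℕ) : constantCoeff (qpoly q x n) ≠ 0 := by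
  rw [constCoeff_qpoly]; exact one_ne_zero

lemma qpoly_mul_inv (q x : ℂ) (n : ℕ) : qpoly q x n * (qpoly q x n)⁻¹ = 1 :=
  PowerSeries.mul_inv_cancel _ (constCoeff_qpoly_ne q x n)

lemma inv_mul_inv (f g : PowerSeries ℂ) (hf : constantCoeff f ≠ 0)
    (hg : constantCoeff g ≠ 0) : (f * g)⁻¹ = f⁻¹ * g⁻¹ := by
  symm
  rw [PowerSeries.eq_inv_iff_mul_eq_one (by rw [map_mul]; exact mul_ne_zero hf hg)]
  have h1 := PowerSeries.mul_inv_cancel f hf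
  have h2 := PowerSeries.mul_inv_cancel g hg
  linear_combination (g * g⁻¹) * h1 + h2

lemma constCoeff_rescale (c : ℂ) (f : PowerSeries ℂ) :
    constantCoeff (rescale c f) = constantCoeff f := by
  rw [← coeff_zero_eq_constantCoeff_apply, ← coeff_zero_eq_constantCoeff_apply,
    coeff_rescale]
  simp

lemma rescale_inv (c : ℂ) (f : PowerSeries ℂ) (hf : constantCoeff f ≠ 0) :
    rescale c f⁻¹ = (rescale c f)⁻¹ := by
  rw [PowerSeries.eq_inv_iff_mul_eq_one (by rw [constCoeff_rescale]; exact hf)]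
  rw [← map_mul, mul_comm, PowerSeries.mul_inv_cancel f hf, map_one]

lemma rescale_C (c r : ℂ) : rescale c (C r) = C r := by
  ext n
  rw [coeff_rescale]
  cases n with
  | zero => simp
  | succ n => simp [coeff_C]

lemma qpoly_split (q x : ℂ) (m k : ℕ) :
    qpoly q x (m + k) = qpoly q x m * rescale (q ^ m) (qpoly q x k) := by
  unfold qpoly
  rw [Finset.prod_range_add, map_prod]
  congr 1
  apply Finset.prod_congr rfl
  intro i _
  have : rescale (q ^ m) (1 - C (x * q ^ i) * X) = 1 - C (x * q ^ (m + i)) * X := by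
    rw [map_sub, map_one, map_mul, rescale_X, rescale_C, ← mul_assoc, ← map_mul C]
    congr 2
    ring
  rw [this]

lemma CL (q a b : ℂ) (m r s d : ℕ) :
    (coeff (m + d)) (X ^ m * qpoly q a m * (qpoly q b m)⁻¹ *
        (qpoly q b (m + r) * (qpoly q a (m + s))⁻¹)) =
    q ^ (m * d) * (coeff d) (qpoly q b r * (qpoly q a s)⁻¹) := by
  have hb := qpoly_mul_inv q b m
  have ha := qpoly_mul_inv q a m
  have key : X ^ m * qpoly q a m * (qpoly q b m)⁻¹ *
      (qpoly q b (m + r) * (qpoly q a (m + s))⁻¹) =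
      X ^ m * rescale (q ^ m) (qpoly q b r * (qpoly q a s)⁻¹) := by
    rw [qpoly_split q b m r, qpoly_split q a m s,
      inv_mul_inv _ _ (constCoeff_qpoly_ne q a m)
        (by rw [constCoeff_rescale]; exact constCoeff_qpoly_ne q a s),
      map_mul (rescale (q ^ m)), rescale_inv _ _ (constCoeff_qpoly_ne q a s)]
    linear_combination (X ^ m * rescale (q ^ m) (qpoly q b r) *
        (rescale (q ^ m) (qpoly q a s))⁻¹ * qpoly q a m * (qpoly q a m)⁻¹) * hb +
      (X ^ m * rescale (q ^ m) (qpoly q b r) * (rescale (q ^ m) (qpoly q a s))⁻¹) * ha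
  rw [key, show m + d = d + m from by omega, coeff_X_pow_mul, coeff_rescale, ← pow_mul]


lemma coeff_phi_zero (q a b : ℂ) {N i : ℕ} (h : N < i) :
    (coeff N) (X ^ i * qpoly q a i * (qpoly q b i)⁻¹) = 0 := by
  rw [mul_assoc, coeff_X_pow_mul', if_neg (by omega)]

/-- If `f` has the expansion with coefficients `d`, then coefficients of `f * G`
expand accordingly. -/
lemma expand (q a b : ℂ) (f : PowerSeries ℂ) (d : ℕ → ℂ)
    (hf : ∀ N : ℕ, (coeff N) f = ∑ i ∈ range (N + 1),
        d i * (coeff N) (X ^ i * qpoly q a i * (qpoly q b i)⁻¹))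
    (n : ℕ) (G : PowerSeries ℂ) :
    (coeff n) (f * G) = ∑ i ∈ range (n + 1),
      d i * (coeff n) (X ^ i * qpoly q a i * (qpoly q b i)⁻¹ * G) := by
  set T : PowerSeries ℂ := ∑ i ∈ range (n + 1),
      C (d i) * (X ^ i * qpoly q a i * (qpoly q b i)⁻¹) with hT
  have hcoef : ∀ N, N ≤ n → (coeff N) f = (coeff N) T := by
    intro N hN
    rw [hT, map_sum]
    rw [hf N]
    rw [Finset.sum_subset
      (show Finset.range (N+1) ⊆ Finset.range (n+1) from Finset.range_subset_range.2 (by omega))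
      (fun i _ hi => by
        rw [coeff_phi_zero q a b (by simp at hi ⊢; omega), mul_zero])]
    apply Finset.sum_congr rfl
    intro i _
    rw [coeff_C_mul]
  have hmain : (coeff n) (f * G) = (coeff n) (T * G) := by
    rw [coeff_mul, coeff_mul]
    apply Finset.sum_congr rfl
    intro p hp
    rw [Finset.HasAntidiagonal.mem_antidiagonal] at hp
    rw [hcoef p.1 (by omega)]
  rw [hmain, hT, Finset.sum_mul, map_sum]
  apply Finset.sum_congr rfl
  intro i _
  rw [mul_assoc, coeff_C_mul]


-- ### the one-step factor lemmas
lemma constCoeff_lin_ne (r : ℂ) : constantCoeff (1 - C r * X) ≠ 0 := by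
  simp [map_sub, map_mul, constantCoeff_X]

lemma qpoly_succ (q x : ℂ) (n : ℕ) :
    qpoly q x (n + 1) = qpoly q x n * (1 - C (x * q ^ n) * X) := by
  unfold qpoly
  rw [Finset.prod_range_succ]

lemma qpoly_one (q x : ℂ) : qpoly q x 1 = 1 - C x * X := by
  unfold qpoly
  rw [Finset.prod_range_one, pow_zero, mul_one]

lemma qpoly_split_one (q x : ℂ) (k : ℕ) :
    qpoly q x (k + 1) = (1 - C x * X) * rescale q (qpoly q x k) := by
  have := qpoly_split q x 1 k
  rw [show (1:ℕ) + k = k + 1 from by omega, pow_one, qpoly_one] at this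
  exact this

-- ### coefficient of product with linear factor
lemma coeff_mul_lin (f : PowerSeries ℂ) (r : ℂ) (N : ℕ) :
    coeff (N + 1) (f * (1 - C r * X)) =
      coeff (N + 1) f - r * coeff N f := by
  rw [mul_sub, mul_one, map_sub, show f * (C r * X) = C r * (f * X) from by ring,
    coeff_C_mul, coeff_succ_mul_X]

-- ### relations
lemma rel2 (q a b : ℂ) (j : ℕ) :
    qpoly q b (j + 1) * (qpoly q a (j + 2))⁻¹ * (1 - C (a * q ^ (j + 1)) * X) =
    qpoly q b j * (qpoly q a (j + 1))⁻¹ * (1 - C (b * q ^ j) * X) := by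
  rw [qpoly_succ q b j, qpoly_succ q a (j + 1),
    inv_mul_inv _ _ (constCoeff_qpoly_ne q a (j + 1)) (constCoeff_lin_ne _)]
  have hL : (1 - C (a * q ^ (j + 1)) * X) * (1 - C (a * q ^ (j + 1)) * X)⁻¹ = 1 :=
    PowerSeries.mul_inv_cancel _ (constCoeff_lin_ne _)
  linear_combination (qpoly q b j * (1 - C (b * q ^ j) * X) * (qpoly q a (j + 1))⁻¹) * hL

lemma rel1 (q a b : ℂ) (j : ℕ) :
    qpoly q b (j + 1) * (qpoly q a (j + 2))⁻¹ * (1 - C a * X) =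
    (1 - C b * X) * rescale q (qpoly q b j * (qpoly q a (j + 1))⁻¹) := by
  rw [map_mul (rescale q), rescale_inv _ _ (constCoeff_qpoly_ne q a (j + 1)),
    qpoly_split_one q b j, qpoly_split_one q a (j + 1),
    inv_mul_inv _ _ (constCoeff_lin_ne _)
      (by rw [constCoeff_rescale]; exact constCoeff_qpoly_ne q a (j + 1))]
  have hL : (1 - C a * X) * (1 - C a * X)⁻¹ = 1 :=
    PowerSeries.mul_inv_cancel _ (constCoeff_lin_ne _)
  linear_combination ((1 - C b * X) * rescale q (qpoly q b j) *
    (rescale q (qpoly q a (j + 1)))⁻¹) * hL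

lemma diag_aux (a b : ℂ) (j : ℕ) (t : ℂ) :
    (t ^ (j + 1) - 1) *
      ((coeff (j + 1)) (qpoly t b j * (qpoly t a (j + 1))⁻¹) -
        a * (coeff j) (qpoly t b (j + 1) * (qpoly t a (j + 2))⁻¹)) = 0 := by
  have e1 := congrArg (coeff (j + 1)) (rel1 t a b j)
  have e2 := congrArg (coeff (j + 1)) (rel2 t a b j)
  rw [coeff_mul_lin, coeff_mul_lin] at e2
  rw [coeff_mul_lin] at e1
  rw [show (1 - C b * X) * rescale t (qpoly t b j * (qpoly t a (j + 1))⁻¹) =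
      (rescale t (qpoly t b j * (qpoly t a (j + 1))⁻¹)) * (1 - C b * X) from
      mul_comm _ _, coeff_mul_lin, coeff_rescale, coeff_rescale] at e1
  linear_combination e2 - e1


noncomputable def qpolyP (x : ℂ) (n : ℕ) : PowerSeries (Polynomial ℂ) :=
  ∏ i ∈ Finset.range n,
    (1 - PowerSeries.C (Polynomial.C x * Polynomial.X ^ i) * PowerSeries.X)

lemma constCoeff_qpolyP (x : ℂ) (n : ℕ) :
    constantCoeff (qpolyP x n) = 1 := by
  unfold qpolyP
  rw [map_prod]
  apply Finset.prod_eq_one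
  intro i _
  simp

noncomputable def VP (a b : ℂ) (j : ℕ) : PowerSeries (Polynomial ℂ) :=
  qpolyP b j * PowerSeries.invOfUnit (qpolyP a (j + 1)) 1

lemma map_qpolyP (t x : ℂ) (n : ℕ) :
    PowerSeries.map (Polynomial.evalRingHom t) (qpolyP x n) = qpoly t x n := by
  unfold qpolyP qpoly
  rw [map_prod]
  apply Finset.prod_congr rfl
  intro i _
  rw [map_sub, map_one, map_mul, PowerSeries.map_X, PowerSeries.map_C]
  simp

lemma map_VP (t a b : ℂ) (j : ℕ) :
    PowerSeries.map (Polynomial.evalRingHom t) (VP a b j) =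
      qpoly t b j * (qpoly t a (j + 1))⁻¹ := by
  unfold VP
  rw [map_mul, map_qpolyP]
  congr 1
  rw [← map_qpolyP t a (j + 1),
    PowerSeries.eq_inv_iff_mul_eq_one (by
      rw [map_qpolyP, constCoeff_qpoly]; exact one_ne_zero),
    ← map_mul, PowerSeries.invOfUnit_mul _ 1 (by rw [constCoeff_qpolyP]; rfl), map_one]

lemma coeff_VP (t a b : ℂ) (j N : ℕ) :
    Polynomial.eval t ((coeff N) (VP a b j)) =
      (coeff N) (qpoly t b j * (qpoly t a (j + 1))⁻¹) := by
  rw [← map_VP t a b j, PowerSeries.coeff_map]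
  rfl

lemma diag (q a b : ℂ) (j : ℕ) :
    (coeff (j + 1)) (qpoly q b j * (qpoly q a (j + 1))⁻¹) =
      a * (coeff j) (qpoly q b (j + 1) * (qpoly q a (j + 2))⁻¹) := by
  set D : Polynomial ℂ :=
    (coeff (j + 1)) (VP a b j) -
      Polynomial.C a * (coeff j) (VP a b (j + 1)) with hD
  have heval : ∀ t : ℂ, Polynomial.eval t D =
      (coeff (j + 1)) (qpoly t b j * (qpoly t a (j + 1))⁻¹) -
        a * (coeff j) (qpoly t b (j + 1) * (qpoly t a (j + 2))⁻¹) := by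
    intro t
    rw [hD, Polynomial.eval_sub, Polynomial.eval_mul, Polynomial.eval_C,
      coeff_VP, coeff_VP]
  have hzero : (Polynomial.X ^ (j + 1) - 1) * D = 0 := by
    apply Polynomial.funext
    intro t
    rw [Polynomial.eval_mul, Polynomial.eval_sub, Polynomial.eval_pow,
      Polynomial.eval_X, Polynomial.eval_one, Polynomial.eval_zero, heval]
    exact diag_aux a b j t
  have hXne : (Polynomial.X ^ (j + 1) - 1 : Polynomial ℂ) ≠ 0 := by
    have hm := Polynomial.monic_X_pow_sub_C (1 : ℂ) (Nat.succ_ne_zero j)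
    rw [Polynomial.C_1] at hm
    exact hm.ne_zero
  have hDzero : D = 0 := by
    rcases mul_eq_zero.mp hzero with h | h
    · exact absurd h hXne
    · exact h
  have := heval q
  rw [hDzero] at this
  simp at this
  linear_combination -this

noncomputable def Wc (q a b : ℂ) (s : ℕ) : ℂ :=
  (coeff s) (qpoly q b s * (qpoly q a (s + 1))⁻¹)

lemma hterm2 (q a b : ℂ) (m s : ℕ) :
    (coeff (m + s)) (X ^ m * qpoly q a m * (qpoly q b m)⁻¹ *
        (qpoly q b (m + s) * (qpoly q a (m + s + 1))⁻¹)) =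
    q ^ (m * s) * Wc q a b s := by
  have h := CL q a b m s (s + 1) s
  rw [show m + (s + 1) = m + s + 1 from by omega] at h
  exact h

lemma hterm1 (q a b : ℂ) (i e : ℕ) :
    (coeff (i + e + 1)) (X ^ i * qpoly q a i * (qpoly q b i)⁻¹ *
        (qpoly q b (i + e) * (qpoly q a (i + e + 1))⁻¹)) =
    q ^ (i * (e + 1)) * (coeff (e + 1)) (qpoly q b e * (qpoly q a (e + 1))⁻¹) := by
  have h := CL q a b i e (e + 1) (e + 1)
  rw [show i + (e + 1) = i + e + 1 from by omega] at h
  exact h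

lemma diagonal_one (q a b : ℂ) (m r s : ℕ) :
    (coeff m) (X ^ m * qpoly q a m * (qpoly q b m)⁻¹ *
        (qpoly q b r * (qpoly q a s)⁻¹)) = 1 := by
  rw [show X ^ m * qpoly q a m * (qpoly q b m)⁻¹ * (qpoly q b r * (qpoly q a s)⁻¹) =
      X ^ m * (qpoly q a m * ((qpoly q b m)⁻¹ * (qpoly q b r * (qpoly q a s)⁻¹)))
      from by ring]
  have h := coeff_X_pow_mul
    (qpoly q a m * ((qpoly q b m)⁻¹ * (qpoly q b r * (qpoly q a s)⁻¹))) m 0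
  rw [zero_add] at h
  rw [h, coeff_zero_eq_constantCoeff_apply]
  simp [map_mul, constCoeff_qpoly, PowerSeries.constantCoeff_inv]

lemma key (q a b : ℂ) (β : ℕ → ℂ) (hβ0 : β 0 = 0)
    (hX : ∀ N : ℕ, (coeff N) (X : PowerSeries ℂ) = ∑ i ∈ range (N + 1),
        β i * (coeff N) (X ^ i * qpoly q a i * (qpoly q b i)⁻¹)) (j : ℕ) :
    (coeff (j + 1)) (qpoly q b j * (qpoly q a (j + 1))⁻¹) =
      a * ∑ s ∈ range (j + 1), β (j + 1 - s) * q ^ ((j + 1 - s) * s) * Wc q a b s := by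
  rw [diag q a b j]
  congr 1
  have h1 : (coeff j) (qpoly q b (j + 1) * (qpoly q a (j + 2))⁻¹) =
      (coeff (j + 1)) ((X : PowerSeries ℂ) * (qpoly q b (j + 1) * (qpoly q a (j + 2))⁻¹)) := by
    rw [mul_comm (X : PowerSeries ℂ) _, coeff_succ_mul_X]
  rw [h1, expand q a b X β hX (j + 1) _]
  have h2 : ∀ i ∈ range (j + 2),
      β i * (coeff (j + 1)) (X ^ i * qpoly q a i * (qpoly q b i)⁻¹ *
        (qpoly q b (j + 1) * (qpoly q a (j + 2))⁻¹)) =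
      β i * (q ^ (i * (j + 1 - i)) * Wc q a b (j + 1 - i)) := by
    intro i hi
    simp only [mem_range] at hi
    obtain ⟨e, he⟩ : ∃ e, j + 1 = i + e := ⟨j + 1 - i, by omega⟩
    have h3 := hterm2 q a b i e
    rw [show j + 1 - i = e from by omega]
    rw [show j + 2 = i + e + 1 from by omega, show j + 1 = i + e from he]
    rw [h3]
  rw [Finset.sum_congr rfl h2]
  rw [← Finset.sum_range_reflect
    (fun i => β i * (q ^ (i * (j + 1 - i)) * Wc q a b (j + 1 - i))) (j + 2)]
  have h4 : ∀ l ∈ range (j + 2),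
      β (j + 2 - 1 - l) * (q ^ ((j + 2 - 1 - l) * (j + 1 - (j + 2 - 1 - l))) *
        Wc q a b (j + 1 - (j + 2 - 1 - l))) =
      β (j + 1 - l) * q ^ ((j + 1 - l) * l) * Wc q a b l := by
    intro l hl
    simp only [mem_range] at hl
    rw [show j + 2 - 1 - l = j + 1 - l from by omega,
      show j + 1 - (j + 1 - l) = l from by omega]
    ring
  rw [Finset.sum_congr rfl h4, Finset.sum_range_succ,
    show j + 1 - (j + 1) = 0 from by omega, hβ0]
  simp


end QThm

open QThm Finset in
/-- Theorem 1.5: explicit formula for the coefficients `c_n` of the expansion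
`F = ∑ c_n z^n (az;q)_n/(bz;q)_n`, in terms of the connection coefficients
`B_{n,k}(a,b)` of the expansion `z^k = ∑_{n≥k} B_{n,k}(a,b) z^n (az;q)_n/(bz;q)_n`. -/
theorem coefficient_formula (q a b : ℂ) (F : PowerSeries ℂ)
    (B : ℕ → ℕ → ℂ)
    (hB0 : ∀ n k : ℕ, n < k → B n k = 0)
    (hB : ∀ N k : ℕ,
      (PowerSeries.coeff N) (PowerSeries.X ^ k) =
        ∑ n ∈ Finset.range (N + 1),
          B n k * (PowerSeries.coeff N)
            (PowerSeries.X ^ n * qpoly q a n * (qpoly q b n)⁻¹))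
    (c : ℕ → ℂ)
    (hc : ∀ N : ℕ,
      (PowerSeries.coeff N) F =
        ∑ n ∈ Finset.range (N + 1),
          c n * (PowerSeries.coeff N)
            (PowerSeries.X ^ n * qpoly q a n * (qpoly q b n)⁻¹)) :
    c 0 = (PowerSeries.coeff 0) F ∧
    ∀ n : ℕ, 1 ≤ n →
      c n = (PowerSeries.coeff n) (F * qpoly q b (n - 1) * (qpoly q a n)⁻¹)
        - a * ∑ k ∈ Finset.range n,
            B (n - k) 1 * q ^ ((n - k) * k) *
              (PowerSeries.coeff k) (F * qpoly q b k * (qpoly q a (k + 1))⁻¹) := by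
  have hβ0 : B 0 1 = 0 := hB0 0 1 (by omega)
  have hX : ∀ N : ℕ, (coeff N) (X : PowerSeries ℂ) = ∑ i ∈ range (N + 1),
      B i 1 * (coeff N) (X ^ i * qpoly q a i * (qpoly q b i)⁻¹) := by
    intro N
    have h := hB N 1
    rwa [pow_one] at h
  constructor
  · have h := hc 0
    rw [Finset.sum_range_one] at h
    rw [h]
    have h1 : (coeff 0) ((X : PowerSeries ℂ) ^ 0 * qpoly q a 0 * (qpoly q b 0)⁻¹) = 1 := by
      have : qpoly q a 0 = 1 := Finset.prod_range_zero _
      have hb' : qpoly q b 0 = 1 := Finset.prod_range_zero _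
      have hone : (1 : PowerSeries ℂ)⁻¹ = 1 := by
        symm
        rw [PowerSeries.eq_inv_iff_mul_eq_one (by simp)]
        simp
      rw [pow_zero, this, hb', one_mul, one_mul, hone]
      simp
    rw [h1, mul_one]
  · intro n hn
    rcases n with _ | n'
    · omega
    simp only [Nat.add_sub_cancel]
    -- E2 : expansion of A_k
    have e2 : ∀ k : ℕ, (coeff k) (F * qpoly q b k * (qpoly q a (k + 1))⁻¹) =
        ∑ m ∈ range (k + 1), c m * (q ^ (m * (k - m)) * Wc q a b (k - m)) := by
      intro k
      rw [mul_assoc, expand q a b F c hc k _]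
      apply Finset.sum_congr rfl
      intro m hm
      simp only [mem_range] at hm
      obtain ⟨s, rfl⟩ : ∃ s, k = m + s := ⟨k - m, by omega⟩
      rw [Nat.add_sub_cancel_left, hterm2 q a b m s]
    -- E1 : expansion of the first coefficient
    have e1 : (coeff (n' + 1)) (F * qpoly q b n' * (qpoly q a (n' + 1))⁻¹) =
        c (n' + 1) + ∑ i ∈ range (n' + 1), c i * (q ^ (i * (n' - i + 1)) *
          (a * ∑ s ∈ range (n' - i + 1),
            B (n' - i + 1 - s) 1 * q ^ ((n' - i + 1 - s) * s) * Wc q a b s)) := by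
      rw [mul_assoc, expand q a b F c hc (n' + 1) _, Finset.sum_range_succ,
        diagonal_one q a b (n' + 1) n' (n' + 1), mul_one, add_comm]
      congr 1
      apply Finset.sum_congr rfl
      intro i hi
      simp only [mem_range] at hi
      obtain ⟨e, rfl⟩ : ∃ e, n' = i + e := ⟨n' - i, by omega⟩
      rw [Nat.add_sub_cancel_left, hterm1 q a b i e,
        key q a b (fun i => B i 1) hβ0 hX e]
    -- final sum identity
    have S : ∑ i ∈ range (n' + 1), c i * (q ^ (i * (n' - i + 1)) *
          (a * ∑ s ∈ range (n' - i + 1),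
            B (n' - i + 1 - s) 1 * q ^ ((n' - i + 1 - s) * s) * Wc q a b s)) =
        a * ∑ k ∈ range (n' + 1), B (n' + 1 - k) 1 * q ^ ((n' + 1 - k) * k) *
          ∑ m ∈ range (k + 1), c m * (q ^ (m * (k - m)) * Wc q a b (k - m)) := by
      have L1 : ∀ i ∈ range (n' + 1), c i * (q ^ (i * (n' - i + 1)) *
          (a * ∑ s ∈ range (n' - i + 1),
            B (n' - i + 1 - s) 1 * q ^ ((n' - i + 1 - s) * s) * Wc q a b s)) =
          ∑ s ∈ range (n' - i + 1),
            a * c i * B (n' - i + 1 - s) 1 *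
              (q ^ (i * (n' - i + 1)) * q ^ ((n' - i + 1 - s) * s)) * Wc q a b s := by
        intro i _
        rw [Finset.mul_sum, Finset.mul_sum, Finset.mul_sum]
        apply Finset.sum_congr rfl
        intro s _
        ring
      have R1 : ∀ k ∈ range (n' + 1), B (n' + 1 - k) 1 * q ^ ((n' + 1 - k) * k) *
          ∑ m ∈ range (k + 1), c m * (q ^ (m * (k - m)) * Wc q a b (k - m)) =
          ∑ s ∈ range (k + 1),
            B (n' + 1 - k) 1 * c (k - s) *
              (q ^ ((n' + 1 - k) * k) * q ^ ((k - s) * s)) * Wc q a b s := by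
        intro k _
        rw [Finset.mul_sum]
        rw [← Finset.sum_range_reflect
          (fun s => B (n' + 1 - k) 1 * c (k - s) *
            (q ^ ((n' + 1 - k) * k) * q ^ ((k - s) * s)) * Wc q a b s) (k + 1)]
        apply Finset.sum_congr rfl
        intro m hm
        simp only [mem_range] at hm
        rw [show k + 1 - 1 - m = k - m from by omega,
          show k - (k - m) = m from by omega]
        ring
      rw [Finset.sum_congr rfl L1, Finset.sum_congr rfl R1, Finset.mul_sum]
      simp only [Finset.mul_sum]
      rw [Finset.sum_sigma' (range (n' + 1)) _ _, Finset.sum_sigma' (range (n' + 1)) _ _]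
      apply Finset.sum_nbij' (fun p => (⟨p.1 + p.2, p.2⟩ : Σ _ : ℕ, ℕ))
        (fun p => (⟨p.1 - p.2, p.2⟩ : Σ _ : ℕ, ℕ))
      · intro p hp
        simp only [Finset.mem_sigma, mem_range] at hp ⊢
        omega
      · intro p hp
        simp only [Finset.mem_sigma, mem_range] at hp ⊢
        omega
      · intro p hp
        simp only [Finset.mem_sigma, mem_range] at hp
        simp only [Nat.add_sub_cancel]
      · intro p hp
        simp only [Finset.mem_sigma, mem_range] at hp
        have : p.1 - p.2 + p.2 = p.1 := by omega
        exact Sigma.ext (by simp [this]) (by simp)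
      · intro p hp
        simp only [Finset.mem_sigma, mem_range] at hp
        obtain ⟨hi, hs⟩ := hp
        obtain ⟨e, he⟩ : ∃ e, n' = p.1 + p.2 + e := ⟨n' - p.1 - p.2, by omega⟩
        rw [Nat.add_sub_cancel]
        rw [show n' - p.1 + 1 - p.2 = e + 1 from by omega,
          show n' + 1 - (p.1 + p.2) = e + 1 from by omega,
          show n' - p.1 + 1 = p.2 + e + 1 from by omega]
        ring
    rw [e1]
    have hA : ∑ k ∈ range (n' + 1), B (n' + 1 - k) 1 * q ^ ((n' + 1 - k) * k) *
        (coeff k) (F * qpoly q b k * (qpoly q a (k + 1))⁻¹) =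
        ∑ k ∈ range (n' + 1), B (n' + 1 - k) 1 * q ^ ((n' + 1 - k) * k) *
          ∑ m ∈ range (k + 1), c m * (q ^ (m * (k - m)) * Wc q a b (k - m)) := by
      apply Finset.sum_congr rfl
      intro k _
      rw [e2 k]
    rw [hA]
    linear_combination -S
end

section
/- Fix q, a, b ∈ ℂ. For all integers n > k ≥ 0, the coefficients B_{n,k}(a,b) satisfy the recurrence B_{n,k+1}(a,b) + (b − a) · ∑_{i=k+2}^{n} b^{i−k−2} B_{n,i}(a,b) = q^{n−k−1} · B_{n−1,k}(a,b). -/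
open PowerSeries

namespace BRecAux

lemma constantCoeff_qpoly (q x : ℂ) (n : ℕ) : constantCoeff (qpoly q x n) = 1 := by
  unfold qpoly; rw [map_prod]; simp

lemma constantCoeff_qpoly_ne (q x : ℂ) (n : ℕ) : constantCoeff (qpoly q x n) ≠ 0 := by
  rw [constantCoeff_qpoly]; exact one_ne_zero

lemma qpoly_mul_inv (q x : ℂ) (n : ℕ) : qpoly q x n * (qpoly q x n)⁻¹ = 1 :=
  PowerSeries.mul_inv_cancel _ (constantCoeff_qpoly_ne q x n)

noncomputable def cc (q a b : ℂ) (N m : ℕ) : ℂ :=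
  (coeff N) (X ^ m * qpoly q a m * (qpoly q b m)⁻¹)

lemma cc_eq_zero (q a b : ℂ) {N m : ℕ} (h : N < m) : cc q a b N m = 0 := by
  unfold cc
  rw [mul_assoc, coeff_X_pow_mul', if_neg (by omega)]

lemma cc_self (q a b : ℂ) (m : ℕ) : cc q a b m m = 1 := by
  unfold cc
  rw [mul_assoc, coeff_X_pow_mul', if_pos le_rfl, Nat.sub_self,
    coeff_zero_eq_constantCoeff_apply, map_mul, constantCoeff_qpoly,
    PowerSeries.constantCoeff_inv, constantCoeff_qpoly]
  norm_num

lemma rescale_C' (q c : ℂ) : PowerSeries.rescale q (C c) = C c := by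
  ext n
  rw [coeff_rescale, PowerSeries.coeff_C]
  split_ifs with h
  · simp [h]
  · simp

lemma rescale_qpoly (q x : ℂ) (m : ℕ) :
    PowerSeries.rescale q (qpoly q x m) = qpoly q (x * q) m := by
  unfold qpoly
  rw [map_prod]
  refine Finset.prod_congr rfl fun i _ => ?_
  rw [map_sub, map_one, map_mul, rescale_X, rescale_C']
  rw [← mul_assoc, ← map_mul]
  ring_nf

end BRecAux

namespace BRecAux2
open BRecAux

lemma rescale_qpoly_inv (q x : ℂ) (m : ℕ) :
    PowerSeries.rescale q ((qpoly q x m)⁻¹) = (qpoly q (x * q) m)⁻¹ := by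
  rw [PowerSeries.eq_inv_iff_mul_eq_one (constantCoeff_qpoly_ne q (x*q) m)]
  rw [← rescale_qpoly, ← map_mul, PowerSeries.inv_mul_cancel _ (constantCoeff_qpoly_ne q x m),
    map_one]

/-- Key coefficient relation for the `q`-shifted series. -/
lemma coeff_shift (q a b : ℂ) {k m : ℕ} (hkm : k ≤ m) (j : ℕ) :
    (coeff j) (C (q ^ (m - k)) *
        (X ^ m * qpoly q (a * q) m * (qpoly q (b * q) m)⁻¹)) =
      q ^ (j - k) * cc q a b j m := by
  have hr : X ^ m * qpoly q (a * q) m * (qpoly q (b * q) m)⁻¹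
      = X ^ m * PowerSeries.rescale q (qpoly q a m * (qpoly q b m)⁻¹) := by
    rw [map_mul, rescale_qpoly, rescale_qpoly_inv, mul_assoc]
  rw [hr, PowerSeries.coeff_C_mul, coeff_X_pow_mul']
  unfold cc
  rw [mul_assoc, coeff_X_pow_mul']
  split_ifs with h
  · rw [coeff_rescale, ← mul_assoc, ← pow_add]
    congr 2
    omega
  · simp

end BRecAux2

namespace BRecAux3
open BRecAux

lemma qpoly_succ (q x : ℂ) (m : ℕ) :
    qpoly q x (m + 1) = qpoly q (x * q) m * (1 - C x * X) := by
  unfold qpoly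
  rw [Finset.prod_range_succ']
  congr 1
  · refine Finset.prod_congr rfl fun i _ => ?_
    rw [show x * q ^ (i + 1) = x * q * q ^ i by ring]
  · rw [pow_zero, mul_one]

/-- `φ_{m+1} = H · (shifted φ_m)` where `H = X(1-aX)(1-bX)⁻¹`. -/
lemma phi_succ (q a b : ℂ) (m : ℕ) :
    X ^ (m + 1) * qpoly q a (m + 1) * (qpoly q b (m + 1))⁻¹
      = (X * (1 - C a * X) * (1 - C b * X)⁻¹) *
        (X ^ m * qpoly q (a * q) m * (qpoly q (b * q) m)⁻¹) := by
  rw [qpoly_succ q a m, qpoly_succ q b m, PowerSeries.mul_inv_rev, pow_succ]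
  ring

/-- coefficients of `(1 - C b X)⁻¹` are `b^r`. -/
lemma coeff_inv_one_sub (b : ℂ) (r : ℕ) :
    (coeff r) ((1 - C b * X)⁻¹) = b ^ r := by
  have h1 : constantCoeff (1 - C b * X) ≠ 0 := by
    simp
  have : (1 - C b * X)⁻¹ = PowerSeries.mk fun r => b ^ r := by
    rw [eq_comm, PowerSeries.eq_inv_iff_mul_eq_one h1]
    rw [mul_comm]
    ext n
    rw [sub_mul, one_mul, map_sub]
    cases n with
    | zero => simp
    | succ n =>
      rw [mul_assoc, PowerSeries.coeff_C_mul, PowerSeries.coeff_succ_X_mul]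
      simp [pow_succ, mul_comm]
  rw [this, PowerSeries.coeff_mk]

lemma coeff_H (a b : ℂ) (r : ℕ) :
    (coeff r) (X * (1 - C a * X) * (1 - C b * X)⁻¹)
      = if r = 0 then 0 else if r = 1 then 1 else (b - a) * b ^ (r - 2) := by
  rw [mul_assoc]
  cases r with
  | zero => simp [PowerSeries.coeff_zero_X_mul]
  | succ r =>
    rw [PowerSeries.coeff_succ_X_mul, sub_mul, one_mul, map_sub, mul_assoc,
      PowerSeries.coeff_C_mul, coeff_inv_one_sub]
    cases r with
    | zero => simp [PowerSeries.coeff_zero_X_mul]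
    | succ r =>
      rw [PowerSeries.coeff_succ_X_mul, coeff_inv_one_sub]
      simp only [Nat.succ_ne_zero, if_false, Nat.add_eq, Nat.add_sub_cancel]
      rw [if_neg (by omega)]
      rw [show r + 1 + 1 - 2 = r by omega, pow_succ]
      ring
end BRecAux3

namespace BRecAux4
open BRecAux BRecAux2 BRecAux3

variable (q a b : ℂ) (B : ℕ → ℕ → ℂ)

/-- the target value `[z^N] X^{k+1}(1-aX)(1-bX)⁻¹`. -/
noncomputable def hval (k N : ℕ) : ℂ :=
  if N = k + 1 then 1 else if k + 2 ≤ N then (b - a) * b ^ (N - k - 2) else 0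

section

variable (hB0 : ∀ n k : ℕ, n < k → B n k = 0)
  (hB : ∀ N k : ℕ,
    (PowerSeries.coeff N) (PowerSeries.X ^ k) =
      ∑ n ∈ Finset.range (N + 1),
        B n k * (PowerSeries.coeff N)
          (PowerSeries.X ^ n * qpoly q a n * (qpoly q b n)⁻¹))

include hB in
lemma hB' (N k : ℕ) :
    (if N = k then (1 : ℂ) else 0) = ∑ t ∈ Finset.range (N + 1), B t k * cc q a b N t := by
  have := hB N k
  rwa [PowerSeries.coeff_X_pow] at this

/-- The series `G`. -/
noncomputable def G (N k : ℕ) : PowerSeries ℂ :=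
  ∑ m ∈ Finset.Ico k N, C (B m k) *
    (C (q ^ (m - k)) * (X ^ m * qpoly q (a * q) m * (qpoly q (b * q) m)⁻¹))

include hB0 hB in
lemma coeff_G {N k j : ℕ} (hj : j < N) :
    (coeff j) (G q a b B N k) = if j = k then 1 else 0 := by
  unfold G
  rw [map_sum]
  have step : ∀ m ∈ Finset.Ico k N,
      (coeff j) (C (B m k) *
        (C (q ^ (m - k)) * (X ^ m * qpoly q (a * q) m * (qpoly q (b * q) m)⁻¹)))
      = q ^ (j - k) * (B m k * cc q a b j m) := by
    intro m hm
    rw [PowerSeries.coeff_C_mul, coeff_shift q a b (Finset.mem_Ico.mp hm).1]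
    ring
  rw [Finset.sum_congr rfl step, ← Finset.mul_sum]
  have e1 : ∑ m ∈ Finset.Ico k N, B m k * cc q a b j m
      = ∑ m ∈ Finset.range N, B m k * cc q a b j m := by
    refine Finset.sum_subset (fun m hm => Finset.mem_range.mpr (Finset.mem_Ico.mp hm).2) ?_
    intro m hm hm'
    rw [hB0 m k (by simp at hm hm' ⊢; omega), zero_mul]
  have e2 : ∑ m ∈ Finset.range (j + 1), B m k * cc q a b j m
      = ∑ m ∈ Finset.range N, B m k * cc q a b j m := by
    refine Finset.sum_subset (fun m hm => by simp at hm ⊢; omega) ?_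
    intro m hm hm'
    rw [cc_eq_zero q a b (by simp at hm hm' ⊢; omega), mul_zero]
  rw [e1, ← e2, ← hB' q a b B hB]
  split_ifs with h
  · subst h; simp
  · ring

include hB0 hB in
lemma lemD (N k : ℕ) :
    ∑ m ∈ Finset.Ico k N, B m k * (q ^ (m - k) * cc q a b N (m + 1)) = hval a b k N := by
  have term : ∀ m ∈ Finset.Ico k N,
      B m k * (q ^ (m - k) * cc q a b N (m + 1))
      = (coeff N) ((X * (1 - C a * X) * (1 - C b * X)⁻¹) *
          (C (B m k) * (C (q ^ (m - k)) *
            (X ^ m * qpoly q (a * q) m * (qpoly q (b * q) m)⁻¹)))) := by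
    intro m hm
    rw [show (X * (1 - C a * X) * (1 - C b * X)⁻¹) *
          (C (B m k) * (C (q ^ (m - k)) *
            (X ^ m * qpoly q (a * q) m * (qpoly q (b * q) m)⁻¹)))
        = C (B m k) * (C (q ^ (m - k)) *
            ((X * (1 - C a * X) * (1 - C b * X)⁻¹) *
            (X ^ m * qpoly q (a * q) m * (qpoly q (b * q) m)⁻¹))) by ring]
    rw [← phi_succ q a b m, PowerSeries.coeff_C_mul, PowerSeries.coeff_C_mul]
    rfl
  rw [Finset.sum_congr rfl term, ← map_sum, ← Finset.mul_sum, ← G]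
  rw [PowerSeries.coeff_mul, Finset.Nat.sum_antidiagonal_eq_sum_range_succ_mk]
  by_cases hkN : k + 1 ≤ N
  · rw [Finset.sum_eq_single (N - k)]
    · rw [coeff_G q a b B hB0 hB (show N - (N - k) < N by omega),
        if_pos (by omega), mul_one, coeff_H a b, hval]
      rw [if_neg (by omega)]
      split_ifs with h1 h2 h3 h4 <;> first | rfl | omega
    · intro i hi hne
      simp only [Finset.mem_range] at hi
      rcases Nat.eq_zero_or_pos i with rfl | hpos
      · rw [coeff_H a b, if_pos rfl, zero_mul]
      · rw [coeff_G q a b B hB0 hB (show N - i < N by omega), if_neg (by omega), mul_zero]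
    · intro h
      exact absurd (Finset.mem_range.mpr (by omega)) h
  · rw [hval, if_neg (by omega), if_neg (by omega)]
    refine Finset.sum_eq_zero fun i hi => ?_
    simp only [Finset.mem_range] at hi
    rcases Nat.eq_zero_or_pos i with rfl | hpos
    · rw [coeff_H a b, if_pos rfl, zero_mul]
    · rw [coeff_G q a b B hB0 hB (show N - i < N by omega), if_neg (by omega), mul_zero]

end

end BRecAux4

namespace BRecAux5
open BRecAux BRecAux2 BRecAux3 BRecAux4

variable (q a b : ℂ) (B : ℕ → ℕ → ℂ)

section
variable (hB0 : ∀ n k : ℕ, n < k → B n k = 0)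
  (hB : ∀ N k : ℕ,
    (PowerSeries.coeff N) (PowerSeries.X ^ k) =
      ∑ n ∈ Finset.range (N + 1),
        B n k * (PowerSeries.coeff N)
          (PowerSeries.X ^ n * qpoly q a n * (qpoly q b n)⁻¹))

include hB in
lemma lemE {n k : ℕ} (hkn : k < n) {N : ℕ} (hN : N ≤ n) :
    ∑ t ∈ Finset.range (N + 1),
      (B t (k + 1) + (b - a) * ∑ i ∈ Finset.Icc (k + 2) n, b ^ (i - k - 2) * B t i)
        * cc q a b N t = hval a b k N := by
  have expand : ∀ t ∈ Finset.range (N + 1),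
      (B t (k + 1) + (b - a) * ∑ i ∈ Finset.Icc (k + 2) n, b ^ (i - k - 2) * B t i)
        * cc q a b N t
      = B t (k + 1) * cc q a b N t
        + (b - a) * ∑ i ∈ Finset.Icc (k + 2) n, b ^ (i - k - 2) * (B t i * cc q a b N t) := by
    intro t _
    rw [add_mul, mul_assoc, Finset.sum_mul]
    congr 2
    exact Finset.sum_congr rfl fun i _ => mul_assoc _ _ _
  rw [Finset.sum_congr rfl expand, Finset.sum_add_distrib, ← hB' q a b B hB,
    ← Finset.mul_sum, Finset.sum_comm]
  have swap : ∑ i ∈ Finset.Icc (k + 2) n, ∑ t ∈ Finset.range (N + 1),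
      b ^ (i - k - 2) * (B t i * cc q a b N t)
      = ∑ i ∈ Finset.Icc (k + 2) n, (if N = i then b ^ (i - k - 2) else 0) := by
    refine Finset.sum_congr rfl fun i _ => ?_
    rw [← Finset.mul_sum, ← hB' q a b B hB]
    split_ifs with h <;> ring
  rw [swap, Finset.sum_ite_eq, hval]
  simp only [Finset.mem_Icc]
  split_ifs <;> first | (exfalso; omega) | ring

include hB0 hB in
lemma lemD' (N k : ℕ) :
    ∑ t ∈ Finset.range (N + 1),
      (if k + 1 ≤ t then q ^ (t - k - 1) * B (t - 1) k else 0) * cc q a b N t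
      = hval a b k N := by
  rw [← lemD q a b B hB0 hB N k]
  rw [show Finset.Ico k N = Finset.Ico k N from rfl]
  rw [← Finset.sum_subset (s₁ := Finset.Ico (k+1) (N+1))
      (fun t ht => Finset.mem_range.mpr (Finset.mem_Ico.mp ht).2)
      (fun t ht ht' => by
        rw [if_neg (by simp at ht ht' ⊢; omega), zero_mul])]
  rw [Finset.sum_Ico_eq_sum_range, Finset.sum_Ico_eq_sum_range]
  rw [show N + 1 - (k + 1) = N - k from by omega]
  refine Finset.sum_congr rfl fun i _ => ?_
  rw [if_pos (by omega)]
  rw [show k + 1 + i - k - 1 = i from by omega, show k + 1 + i - 1 = k + i from by omega,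
    show k + i - k = i from by omega, show k + 1 + i = k + i + 1 from by omega]
  ring

end

lemma uniq (α β : ℕ → ℂ) (n : ℕ)
    (h : ∀ N, N ≤ n → ∑ t ∈ Finset.range (N + 1), α t * cc q a b N t
      = ∑ t ∈ Finset.range (N + 1), β t * cc q a b N t) :
    ∀ N, N ≤ n → α N = β N := by
  intro N
  induction N using Nat.strong_induction_on with
  | _ N ih =>
    intro hN
    have hs := h N hN
    rw [Finset.sum_range_succ, Finset.sum_range_succ, cc_self, mul_one, mul_one] at hs
    rw [Finset.sum_congr rfl (fun t ht => by
      rw [ih t (Finset.mem_range.mp ht) (le_trans (le_of_lt (Finset.mem_range.mp ht)) hN)])] at hs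
    exact add_left_cancel hs

end BRecAux5


/-- Lemma 2.2: the connection coefficients `B_{n,k}(a,b)` satisfy
`B_{n,k+1} + (b−a) ∑_{i=k+2}^n b^{i−k−2} B_{n,i} = q^{n−k−1} B_{n−1,k}` for `n > k ≥ 0`. -/
theorem B_recurrence (q a b : ℂ)
    (B : ℕ → ℕ → ℂ)
    (hB0 : ∀ n k : ℕ, n < k → B n k = 0)
    (hB : ∀ N k : ℕ,
      (PowerSeries.coeff N) (PowerSeries.X ^ k) =
        ∑ n ∈ Finset.range (N + 1),
          B n k * (PowerSeries.coeff N)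
            (PowerSeries.X ^ n * qpoly q a n * (qpoly q b n)⁻¹)) :
    ∀ n k : ℕ, k < n →
      B n (k + 1) + (b - a) * ∑ i ∈ Finset.Icc (k + 2) n, b ^ (i - k - 2) * B n i
        = q ^ (n - k - 1) * B (n - 1) k := by
  intro n k hkn
  have key := BRecAux5.uniq q a b
    (fun t => B t (k + 1) + (b - a) * ∑ i ∈ Finset.Icc (k + 2) n, b ^ (i - k - 2) * B t i)
    (fun t => if k + 1 ≤ t then q ^ (t - k - 1) * B (t - 1) k else 0)
    n
    (fun N hN => by
      rw [BRecAux5.lemE q a b B hB hkn hN,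
        BRecAux5.lemD' q a b B hB0 hB N k])
    n le_rfl
  rw [if_pos (by omega : k + 1 ≤ n)] at key
  exact key
end

section
/- Fix q, a, b ∈ ℂ. For all integers n ≥ k ≥ 1, the coefficients B_{n,k}(a,b) satisfy the four-term recurrence B_{n,k}(a,b) − a · B_{n,k+1}(a,b) = q^{n−k} · B_{n−1,k−1}(a,b) − b q^{n−k−1} · B_{n−1,k}(a,b). -/
open PowerSeries

namespace BqAux

noncomputable def psi (q a b : ℂ) (n : ℕ) : PowerSeries ℂ :=
  X ^ n * qpoly q a n * (qpoly q b n)⁻¹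

lemma constCoeff_qpoly (q x : ℂ) (n : ℕ) : constantCoeff (qpoly q x n) = 1 := by
  simp [qpoly]

lemma coeff_psi_lt (q a b : ℂ) {n N : ℕ} (h : N < n) : coeff N (psi q a b n) = 0 := by
  rw [psi, mul_assoc, coeff_X_pow_mul', if_neg (by omega)]

lemma coeff_psi_self (q a b : ℂ) (n : ℕ) : coeff n (psi q a b n) = 1 := by
  rw [psi, mul_assoc, coeff_X_pow_mul', if_pos le_rfl, Nat.sub_self,
    coeff_zero_eq_constantCoeff, map_mul, constCoeff_qpoly, PowerSeries.constantCoeff_inv,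
    constCoeff_qpoly]
  norm_num

lemma qpoly_succ' (q x : ℂ) (n : ℕ) :
    qpoly q x (n + 1) =
      (∏ i ∈ Finset.range n, (1 - C (x * q ^ (i + 1)) * X)) * (1 - C x * X) := by
  rw [qpoly, Finset.prod_range_succ']
  simp

lemma rescale_C' (q c : ℂ) : rescale q (C c) = C c := by
  ext N
  rw [coeff_rescale, coeff_C]
  split_ifs with h
  · subst h; simp
  · simp

lemma rescale_qpoly (q x : ℂ) (n : ℕ) :
    rescale q (qpoly q x n) = ∏ i ∈ Finset.range n, (1 - C (x * q ^ (i + 1)) * X) := by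
  rw [qpoly, map_prod]
  refine Finset.prod_congr rfl fun i _ => ?_
  rw [map_sub, map_one, map_mul, rescale_X, rescale_C', ← mul_assoc, ← map_mul,
    mul_assoc, ← pow_succ]

lemma rescale_inv (q : ℂ) (f : PowerSeries ℂ) (hf : constantCoeff f = 1) :
    rescale q f⁻¹ = (rescale q f)⁻¹ := by
  have h0 : constantCoeff (rescale q f) ≠ 0 := by
    rw [← coeff_zero_eq_constantCoeff, coeff_rescale, pow_zero, one_mul,
      coeff_zero_eq_constantCoeff, hf]
    exact one_ne_zero
  rw [eq_inv_iff_mul_eq_one h0, ← map_mul,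
    PowerSeries.inv_mul_cancel f (by rw [hf]; exact one_ne_zero), map_one]

lemma key_rel (q a b : ℂ) (j : ℕ) :
    X * ((1 - C a * X) * rescale q (psi q a b j)) =
      C (q ^ j) * ((1 - C b * X) * psi q a b (j + 1)) := by
  have hb1 : (1 - C b * X : PowerSeries ℂ) * (1 - C b * X)⁻¹ = 1 :=
    PowerSeries.mul_inv_cancel _ (by simp)
  rw [psi, psi, map_mul, map_mul, rescale_inv _ _ (constCoeff_qpoly q b j),
    rescale_qpoly, rescale_qpoly, map_pow, rescale_X,
    qpoly_succ' q a j, qpoly_succ' q b j, PowerSeries.mul_inv_rev, mul_pow, ← map_pow]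
  set P : PowerSeries ℂ := ∏ i ∈ Finset.range j, (1 - C (a * q ^ (i + 1)) * X) with hP
  set Q : PowerSeries ℂ := ∏ i ∈ Finset.range j, (1 - C (b * q ^ (i + 1)) * X) with hQ
  linear_combination (-(C (q ^ j) * X ^ (j + 1) * P * (1 - C a * X) * Q⁻¹)) * hb1

lemma coeff_key_one (q a b : ℂ) (j : ℕ) :
    q ^ j * (coeff 1 (psi q a b (j + 1)) - b * coeff 0 (psi q a b (j + 1))) =
      coeff 0 (psi q a b j) := by
  have h := congrArg (coeff 1) (key_rel q a b j)
  set u := rescale q (psi q a b j) with hu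
  set p := psi q a b (j + 1) with hp
  have e1 : X * ((1 - C a * X) * u) = X * u - C a * (X * (X * u)) := by ring
  have e2 : C (q ^ j) * ((1 - C b * X) * p) =
      C (q ^ j) * p - C (q ^ j * b) * (X * p) := by
    rw [map_mul]; ring
  simp only [e1, e2, map_sub, coeff_C_mul, coeff_succ_X_mul] at h
  have h0 : coeff 0 (X * u) = 0 := by
    rw [coeff_zero_eq_constantCoeff, map_mul, constantCoeff_X, zero_mul]
  rw [h0, mul_zero, sub_zero, hu, coeff_rescale, pow_zero, one_mul] at h
  rw [h]; ring

lemma coeff_key (q a b : ℂ) (j N : ℕ) :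
    q ^ j * (coeff (N + 2) (psi q a b (j + 1)) - b * coeff (N + 1) (psi q a b (j + 1))) =
      q ^ (N + 1) * coeff (N + 1) (psi q a b j) - a * (q ^ N * coeff N (psi q a b j)) := by
  have h := congrArg (coeff (N + 2)) (key_rel q a b j)
  set u := rescale q (psi q a b j) with hu
  set p := psi q a b (j + 1) with hp
  have e1 : X * ((1 - C a * X) * u) = X * u - C a * (X * (X * u)) := by ring
  have e2 : C (q ^ j) * ((1 - C b * X) * p) =
      C (q ^ j) * p - C (q ^ j * b) * (X * p) := by
    rw [map_mul]; ring
  simp only [e1, e2, map_sub, coeff_C_mul, coeff_succ_X_mul] at h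
  rw [hu, coeff_rescale, coeff_rescale] at h
  rw [h]; ring

lemma qpoly_zero (x : ℂ) (m : ℕ) : qpoly 0 x (m + 1) = 1 - C x * X := by
  rw [qpoly_succ']
  simp

lemma psi_zero (a b : ℂ) (k : ℕ) (hk : 1 ≤ k) :
    psi 0 a b k - C b * psi 0 a b (k + 1) = X ^ k - C a * X ^ (k + 1) := by
  obtain ⟨t, rfl⟩ : ∃ t, k = t + 1 := ⟨k - 1, by omega⟩
  have hb1 : (1 - C b * X : PowerSeries ℂ) * (1 - C b * X)⁻¹ = 1 :=
    PowerSeries.mul_inv_cancel _ (by simp)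
  rw [psi, psi, qpoly_zero a t, qpoly_zero b t, qpoly_zero a (t + 1), qpoly_zero b (t + 1)]
  linear_combination (X ^ (t + 1) * (1 - C a * X)) * hb1

end BqAux

/-- The four-term recurrence for the connection coefficients `B_{n,k}(a,b)`:
`B_{n,k} − a B_{n,k+1} = q^{n−k} B_{n−1,k−1} − b q^{n−k−1} B_{n−1,k}` for `n ≥ k ≥ 1`. -/
theorem B_four_term_recurrence (q a b : ℂ)
    (B : ℕ → ℕ → ℂ)
    (hB0 : ∀ n k : ℕ, n < k → B n k = 0)
    (hB : ∀ N k : ℕ,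
      (PowerSeries.coeff N) (PowerSeries.X ^ k) =
        ∑ n ∈ Finset.range (N + 1),
          B n k * (PowerSeries.coeff N)
            (PowerSeries.X ^ n * qpoly q a n * (qpoly q b n)⁻¹)) :
    ∀ n k : ℕ, 1 ≤ k → k ≤ n →
      B n k - a * B n (k + 1)
        = q ^ ((n : ℤ) - (k : ℤ)) * B (n - 1) (k - 1)
          - b * q ^ ((n : ℤ) - (k : ℤ) - 1) * B (n - 1) k := by
  intro n k hk hkn
  have hBψ : ∀ N k' : ℕ, coeff N (X ^ k') =
      ∑ m ∈ Finset.range (N + 1), B m k' * coeff N (BqAux.psi q a b m) := by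
    intro N k'
    exact hB N k'
  have hdiag : ∀ m, B m m = 1 := by
    intro m
    have h := hBψ m m
    rw [Finset.sum_range_succ,
      Finset.sum_eq_zero (fun j hj => by rw [hB0 j m (Finset.mem_range.mp hj), zero_mul]),
      BqAux.coeff_psi_self, mul_one, coeff_X_pow, if_pos rfl, zero_add] at h
    exact h.symm
  have huniq : ∀ e : ℕ → ℂ,
      (∀ N, ∑ m ∈ Finset.range (N + 1), e m * coeff N (BqAux.psi q a b m) = 0) →
      ∀ m, e m = 0 := by
    intro e he m
    induction m using Nat.strong_induction_on with
    | _ m ih =>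
      have h := he m
      rw [Finset.sum_range_succ,
        Finset.sum_eq_zero (fun j hj => by rw [ih j (Finset.mem_range.mp hj), zero_mul]),
        BqAux.coeff_psi_self, mul_one, zero_add] at h
      exact h
  set E : ℕ → ℂ := fun m =>
    if m = 0 then 0 else
      q ^ ((m : ℤ) - (k : ℤ)) * B (m - 1) (k - 1) -
        b * q ^ ((m : ℤ) - (k : ℤ) - 1) * B (m - 1) k with hEdef
  have hE0 : E 0 = 0 := by simp [hEdef]
  have hEsucc : ∀ m : ℕ, E (m + 1) =
      q ^ ((m : ℤ) + 1 - k) * B m (k - 1) - b * q ^ ((m : ℤ) + 1 - k - 1) * B m k := by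
    intro m
    simp only [hEdef]
    rw [if_neg (Nat.succ_ne_zero m)]
    push_cast
    norm_num
  have hclaim : ∀ N, coeff N (X ^ k) - a * coeff N (X ^ (k + 1)) =
      ∑ m ∈ Finset.range (N + 1), E m * coeff N (BqAux.psi q a b m) := by
    by_cases hq : q = 0
    · subst hq
      intro N
      have hdz : ∀ m : ℕ, E m =
          (if m = k then 1 else 0) - b * (if m = k + 1 then 1 else 0) := by
        intro m
        match m with
        | 0 =>
          rw [hE0, if_neg (by omega), if_neg (by omega)]
          ring
        | s + 1 =>
          rw [hEsucc s]
          by_cases h1 : s + 1 = k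
          · rw [if_pos h1, if_neg (by omega)]
            have e1 : ((s : ℤ) + 1 - k) = 0 := by omega
            have e2 : ((s : ℤ) + 1 - k - 1) ≠ 0 := by omega
            rw [zero_zpow _ e2, e1, zpow_zero, show k - 1 = s from by omega, hdiag s]
            ring
          · by_cases h2 : s + 1 = k + 1
            · rw [if_neg h1, if_pos h2]
              have e1 : ((s : ℤ) + 1 - k) ≠ 0 := by omega
              have e2 : ((s : ℤ) + 1 - k - 1) = 0 := by omega
              rw [zero_zpow _ e1, e2, zpow_zero, show k = s from by omega, hdiag s]
              ring
            · rw [if_neg h1, if_neg h2, zero_zpow _ (by omega : ((s : ℤ) + 1 - k) ≠ 0),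
                zero_zpow _ (by omega : ((s : ℤ) + 1 - k - 1) ≠ 0)]
              ring
      have hresolve : ∀ m : ℕ,
          (if m ∈ Finset.range (N + 1) then coeff N (BqAux.psi 0 a b m) else 0) =
            coeff N (BqAux.psi 0 a b m) := by
        intro m
        split_ifs with h
        · rfl
        · exact (BqAux.coeff_psi_lt 0 a b (by
            have := Finset.mem_range.not.mp h
            omega)).symm
      have step1 : (∑ m ∈ Finset.range (N + 1), E m * coeff N (BqAux.psi 0 a b m))
          = ∑ m ∈ Finset.range (N + 1),
              ((if m = k then coeff N (BqAux.psi 0 a b m) else 0)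
                - b * (if m = k + 1 then coeff N (BqAux.psi 0 a b m) else 0)) :=
        Finset.sum_congr rfl fun m _ => by rw [hdz m]; split_ifs <;> ring
      have hpz := congrArg (coeff N) (BqAux.psi_zero a b k hk)
      rw [map_sub, map_sub, coeff_C_mul, coeff_C_mul] at hpz
      rw [step1, Finset.sum_sub_distrib, ← Finset.mul_sum, Finset.sum_ite_eq',
        Finset.sum_ite_eq', hresolve k, hresolve (k + 1)]
      linear_combination -hpz
    · -- q ≠ 0
      have hpow : ∀ (s : ℤ) (t : ℕ), s + t = 0 → q ^ s * q ^ t = 1 := by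
        intro s t h
        rw [← zpow_natCast q t, ← zpow_add₀ hq, h, zpow_zero]
      have hstep : ∀ N : ℕ,
          (∑ j ∈ Finset.range (N + 1),
            E (j + 1) * (coeff (N + 1) (BqAux.psi q a b (j + 1))
              - b * coeff N (BqAux.psi q a b (j + 1))))
          = (coeff (N + 1) (X ^ k : PowerSeries ℂ)
              - a * coeff (N + 1) (X ^ (k + 1) : PowerSeries ℂ))
            - b * (coeff N (X ^ k : PowerSeries ℂ)
              - a * coeff N (X ^ (k + 1) : PowerSeries ℂ)) := by
        intro N
        match N with
        | 0 =>
          rw [Finset.sum_range_one, BqAux.coeff_psi_self, BqAux.coeff_psi_lt q a b (by omega),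
            hEsucc 0]
          simp only [coeff_X_pow]
          rw [hB0 0 k hk]
          by_cases h1 : k = 1
          · subst h1
            norm_num [hdiag 0]
          · rw [hB0 0 (k - 1) (by omega), if_neg (by omega), if_neg (by omega),
              if_neg (by omega), if_neg (by omega)]
            ring
        | M + 1 =>
          have perterm : ∀ j ∈ Finset.range (M + 2),
              E (j + 1) * (coeff (M + 2) (BqAux.psi q a b (j + 1))
                - b * coeff (M + 1) (BqAux.psi q a b (j + 1)))
              = q ^ ((1 : ℤ) - k) * q ^ (M + 1) * (B j (k - 1) * coeff (M + 1) (BqAux.psi q a b j))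
                - a * (q ^ ((1 : ℤ) - k) * q ^ M) * (B j (k - 1) * coeff M (BqAux.psi q a b j))
                - b * (q ^ (-(k : ℤ)) * q ^ (M + 1)) * (B j k * coeff (M + 1) (BqAux.psi q a b j))
                + a * b * (q ^ (-(k : ℤ)) * q ^ M) * (B j k * coeff M (BqAux.psi q a b j)) := by
            intro j _
            have hck := BqAux.coeff_key q a b j M
            rw [hEsucc j]
            have ea1 : q ^ ((j : ℤ) + 1 - k) = q ^ ((1 : ℤ) - k) * q ^ j := by
              rw [← zpow_natCast q j, ← zpow_add₀ hq]
              congr 1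
              ring
            have ea2 : q ^ ((j : ℤ) + 1 - k - 1) = q ^ (-(k : ℤ)) * q ^ j := by
              rw [← zpow_natCast q j, ← zpow_add₀ hq]
              congr 1
              ring
            rw [ea1, ea2]
            linear_combination (q ^ ((1 : ℤ) - k) * B j (k - 1) - b * q ^ (-(k : ℤ)) * B j k) * hck
          rw [Finset.sum_congr rfl perterm, Finset.sum_add_distrib, Finset.sum_sub_distrib,
            Finset.sum_sub_distrib, ← Finset.mul_sum, ← Finset.mul_sum, ← Finset.mul_sum,
            ← Finset.mul_sum]
          have hS2 : (∑ j ∈ Finset.range (M + 2), B j (k - 1) * coeff M (BqAux.psi q a b j))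
              = coeff M (X ^ (k - 1) : PowerSeries ℂ) := by
            rw [Finset.sum_range_succ, BqAux.coeff_psi_lt q a b (by omega), mul_zero, add_zero,
              ← hBψ M (k - 1)]
          have hS4 : (∑ j ∈ Finset.range (M + 2), B j k * coeff M (BqAux.psi q a b j))
              = coeff M (X ^ k : PowerSeries ℂ) := by
            rw [Finset.sum_range_succ, BqAux.coeff_psi_lt q a b (by omega), mul_zero, add_zero,
              ← hBψ M k]
          rw [← hBψ (M + 1) (k - 1), ← hBψ (M + 1) k, hS2, hS4]
          simp only [coeff_X_pow]
          split_ifs <;>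
            first
            | (exfalso; omega)
            | (try rw [hpow ((1 : ℤ) - (k : ℤ)) (M + 1) (by omega)]
               try rw [hpow ((1 : ℤ) - (k : ℤ)) M (by omega)]
               try rw [hpow (-(k : ℤ)) (M + 1) (by omega)]
               try rw [hpow (-(k : ℤ)) M (by omega)]
               ring)
      intro N
      induction N with
      | zero =>
        rw [Finset.sum_range_one, hE0, zero_mul, coeff_X_pow, coeff_X_pow,
          if_neg (by omega), if_neg (by omega)]
        ring
      | succ N ih =>
        have hsum : (∑ m ∈ Finset.range (N + 2), E m * coeff (N + 1) (BqAux.psi q a b m))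
            = ∑ j ∈ Finset.range (N + 1), E (j + 1) * coeff (N + 1) (BqAux.psi q a b (j + 1)) := by
          rw [Finset.sum_range_succ', hE0, zero_mul, add_zero]
        have hsum2 : (∑ m ∈ Finset.range (N + 1), E m * coeff N (BqAux.psi q a b m))
            = ∑ j ∈ Finset.range (N + 1), E (j + 1) * coeff N (BqAux.psi q a b (j + 1)) := by
          rw [Finset.sum_range_succ', hE0, zero_mul, add_zero, Finset.sum_range_succ,
            BqAux.coeff_psi_lt q a b (by omega), mul_zero, add_zero]
        have hs := hstep N
        have hsplit : (∑ j ∈ Finset.range (N + 1),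
            E (j + 1) * (coeff (N + 1) (BqAux.psi q a b (j + 1))
              - b * coeff N (BqAux.psi q a b (j + 1))))
            = (∑ j ∈ Finset.range (N + 1), E (j + 1) * coeff (N + 1) (BqAux.psi q a b (j + 1)))
              - b * (∑ j ∈ Finset.range (N + 1), E (j + 1) * coeff N (BqAux.psi q a b (j + 1))) := by
          rw [Finset.mul_sum, ← Finset.sum_sub_distrib]
          exact Finset.sum_congr rfl fun j _ => by ring
        rw [hsplit] at hs
        rw [hsum]
        linear_combination (-1 : ℂ) * hs + b * ih + b * hsum2
  have hzero : ∀ m, ((B m k - a * B m (k + 1)) - E m) = 0 := by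
    refine huniq _ (fun N => ?_) 
    have h1 := hBψ N k
    have h2 := hBψ N (k + 1)
    have h3 := hclaim N
    have expand : (∑ m ∈ Finset.range (N + 1),
        ((B m k - a * B m (k + 1)) - E m) * coeff N (BqAux.psi q a b m))
        = (∑ m ∈ Finset.range (N + 1), B m k * coeff N (BqAux.psi q a b m))
          - a * (∑ m ∈ Finset.range (N + 1), B m (k + 1) * coeff N (BqAux.psi q a b m))
          - (∑ m ∈ Finset.range (N + 1), E m * coeff N (BqAux.psi q a b m)) := by
      rw [Finset.mul_sum, ← Finset.sum_sub_distrib, ← Finset.sum_sub_distrib]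
      exact Finset.sum_congr rfl fun m _ => by ring
    show (∑ m ∈ Finset.range (N + 1),
        ((B m k - a * B m (k + 1)) - E m) * coeff N (BqAux.psi q a b m)) = 0
    rw [expand]
    linear_combination (-1 : ℂ) * h1 + a * h2 + h3
  have h := hzero n
  rw [sub_eq_zero] at h
  have hEn : E n = q ^ ((n : ℤ) - (k : ℤ)) * B (n - 1) (k - 1)
      - b * q ^ ((n : ℤ) - (k : ℤ) - 1) * B (n - 1) k := by
    simp only [hEdef]
    rw [if_neg (by omega)]
  rw [h, hEn]
end

section
/- Fix q, a, b ∈ ℂ. For all integers n ≥ 1 and 0 ≤ k ≤ n: B_{n,k}(a,b) = [z^{n−k}]{ (bz;q)_{n−1} · (az;q)_n^{−1} } − a · ∑_{i=k}^{n−1} B_{n−i,1}(a,b) q^{(n−i)i} · [z^{i−k}]{ (bz;q)_i · (az;q)_{i+1}^{−1} }. -/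
open PowerSeries

namespace QAux

open Finset

variable {R : Type*} [CommRing R]

/-- geometric series `1/(1-rX)` -/
noncomputable def geo (r : R) : R⟦X⟧ := PowerSeries.mk fun m => r ^ m

lemma one_sub_mul_geo (r : R) : (1 - PowerSeries.C r * X) * geo r = 1 := by
  ext n
  rw [sub_mul, one_mul, map_sub]
  cases n with
  | zero => simp [geo]
  | succ n =>
      rw [mul_assoc, coeff_C_mul, coeff_succ_X_mul]
      simp [geo, pow_succ, mul_comm]

noncomputable def qp (q x : R) (n : ℕ) : R⟦X⟧ :=
  ∏ i ∈ Finset.range n, (1 - PowerSeries.C (x * q ^ i) * X)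

noncomputable def qi (q x : R) (n : ℕ) : R⟦X⟧ :=
  ∏ i ∈ Finset.range n, geo (x * q ^ i)

lemma qp_mul_qi (q x : R) (n : ℕ) : qp q x n * qi q x n = 1 := by
  rw [qp, qi, ← prod_mul_distrib]
  exact prod_eq_one fun i _ => one_sub_mul_geo _

lemma qp_add (q x : R) (m s : ℕ) : qp q x (m + s) = qp q x m * qp q (x * q ^ m) s := by
  rw [qp, qp, qp, prod_range_add]
  congr 1
  refine prod_congr rfl fun i _ => ?_
  rw [pow_add, mul_assoc]

lemma qi_add (q x : R) (m s : ℕ) : qi q x (m + s) = qi q x m * qi q (x * q ^ m) s := by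
  rw [qi, qi, qi, prod_range_add]
  congr 1
  refine prod_congr rfl fun i _ => ?_
  rw [pow_add, mul_assoc]

lemma qp_succ' (q x : R) (n : ℕ) :
    qp q x (n + 1) = (1 - PowerSeries.C x * X) * qp q (x * q) n := by
  rw [qp, prod_range_succ', pow_zero, mul_one, mul_comm, qp]
  congr 1
  exact prod_congr rfl fun i _ => by rw [pow_succ', ← mul_assoc]

lemma qi_succ' (q x : R) (n : ℕ) :
    qi q x (n + 1) = geo x * qi q (x * q) n := by
  rw [qi, prod_range_succ', pow_zero, mul_one, mul_comm, qi]
  congr 1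
  exact prod_congr rfl fun i _ => by rw [pow_succ', ← mul_assoc]

lemma rescale_geo (c r : R) : rescale c (geo r) = geo (r * c) := by
  ext n
  simp [geo, coeff_rescale, mul_pow, mul_comm]

lemma rescale_one_sub (c y : R) :
    rescale c (1 - PowerSeries.C y * X) = 1 - PowerSeries.C (y * c) * X := by
  ext n
  rw [coeff_rescale]
  rcases n with _ | _ | n <;>
    simp [coeff_one, coeff_C_mul] <;> ring

lemma rescale_qp (c q x : R) (n : ℕ) : rescale c (qp q x n) = qp q (x * c) n := by
  rw [qp, map_prod, qp]
  refine prod_congr rfl fun i _ => ?_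
  rw [rescale_one_sub, mul_right_comm]

lemma rescale_qi (c q x : R) (n : ℕ) : rescale c (qi q x n) = qi q (x * c) n := by
  rw [qi, map_prod, qi]
  refine prod_congr rfl fun i _ => ?_
  rw [rescale_geo, mul_right_comm]

/-- `W q a b p = (bz;q)_p / (az;q)_{p+1}` -/
noncomputable def W (q a b : R) (p : ℕ) : R⟦X⟧ := qp q b p * qi q a (p + 1)

lemma qp_succ (q x : R) (n : ℕ) :
    qp q x (n + 1) = qp q x n * (1 - PowerSeries.C (x * q ^ n) * X) := by
  rw [qp, prod_range_succ, qp]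

lemma qi_succ (q x : R) (n : ℕ) :
    qi q x (n + 1) = qi q x n * geo (x * q ^ n) := by
  rw [qi, prod_range_succ, qi]

lemma identI (q a b : R) (j : ℕ) :
    (1 - PowerSeries.C b * X) * rescale q (W q a b j)
      = (1 - PowerSeries.C a * X) * W q a b (j + 1) := by
  rw [W, W, map_mul, rescale_qp, rescale_qi]
  have h1 : (1 - PowerSeries.C b * X) * qp q (b * q) j = qp q b (j + 1) := (qp_succ' q b j).symm
  have h2 : qi q a (j + 1 + 1) = geo a * qi q (a * q) (j + 1) := qi_succ' q a (j + 1)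
  calc (1 - PowerSeries.C b * X) * (qp q (b * q) j * qi q (a * q) (j + 1))
      = ((1 - PowerSeries.C b * X) * qp q (b * q) j) * qi q (a * q) (j + 1) := by ring
    _ = qp q b (j + 1) * qi q (a * q) (j + 1) := by rw [h1]
    _ = ((1 - PowerSeries.C a * X) * geo a) * (qp q b (j + 1) * qi q (a * q) (j + 1)) := by
        rw [one_sub_mul_geo, one_mul]
    _ = (1 - PowerSeries.C a * X) * (qp q b (j + 1) * qi q a (j + 1 + 1)) := by
        rw [h2]; ring

lemma identII (q a b : R) (j : ℕ) :
    (1 - PowerSeries.C (a * q ^ (j + 1)) * X) * W q a b (j + 1)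
      = (1 - PowerSeries.C (b * q ^ j) * X) * W q a b j := by
  rw [W, W, qi_succ q a (j + 1)]
  calc (1 - PowerSeries.C (a * q ^ (j + 1)) * X) *
        (qp q b (j + 1) * (qi q a (j + 1) * geo (a * q ^ (j + 1))))
      = ((1 - PowerSeries.C (a * q ^ (j + 1)) * X) * geo (a * q ^ (j + 1))) *
          (qp q b (j + 1) * qi q a (j + 1)) := by ring
    _ = qp q b (j + 1) * qi q a (j + 1) := by rw [one_sub_mul_geo, one_mul]
    _ = (1 - PowerSeries.C (b * q ^ j) * X) * (qp q b j * qi q a (j + 1)) := by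
        rw [qp_succ q b j]; ring

lemma coeff_one_sub_mul (c : R) (f : R⟦X⟧) (n : ℕ) :
    coeff (n + 1) ((1 - PowerSeries.C c * X) * f)
      = coeff (n + 1) f - c * coeff n f := by
  rw [sub_mul, one_mul, map_sub, mul_assoc, coeff_C_mul, coeff_succ_X_mul]

lemma key_domain [IsDomain R] (q a b : R) (j : ℕ) (hq : q ^ (j + 1) ≠ 1) :
    coeff (j + 1) (W q a b j) = a * coeff j (W q a b (j + 1)) := by
  set x := coeff (j + 1) (W q a b j) with hx
  set u := coeff j (W q a b j) with hu
  set v := coeff (j + 1) (W q a b (j + 1)) with hv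
  set y := coeff j (W q a b (j + 1)) with hy
  have e1 : q ^ (j + 1) * x - b * (q ^ j * u) = v - a * y := by
    have := congrArg (coeff (j + 1)) (identI q a b j)
    rwa [coeff_one_sub_mul, coeff_one_sub_mul, coeff_rescale, coeff_rescale] at this
  have e2 : v - a * q ^ (j + 1) * y = x - b * q ^ j * u := by
    have := congrArg (coeff (j + 1)) (identII q a b j)
    rwa [coeff_one_sub_mul, coeff_one_sub_mul] at this
  have e3 : (q ^ (j + 1) - 1) * (x - a * y) = 0 := by linear_combination e1 + e2
  rcases mul_eq_zero.mp e3 with h | h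
  · exact absurd (sub_eq_zero.mp h) hq
  · exact sub_eq_zero.mp h

section Map
variable {S : Type*} [CommRing S] (φ : R →+* S)

lemma map_geo (r : R) : PowerSeries.map φ (geo r) = geo (φ r) := by
  ext n; simp [geo, coeff_map]

lemma map_qp (q x : R) (n : ℕ) :
    PowerSeries.map φ (qp q x n) = qp (φ q) (φ x) n := by
  rw [qp, map_prod, qp]
  refine prod_congr rfl fun i _ => ?_
  rw [map_sub, map_one, map_mul, PowerSeries.map_C, PowerSeries.map_X, map_mul, map_pow]

lemma map_qi (q x : R) (n : ℕ) :
    PowerSeries.map φ (qi q x n) = qi (φ q) (φ x) n := by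
  rw [qi, map_prod, qi]
  refine prod_congr rfl fun i _ => ?_
  rw [map_geo, map_mul, map_pow]

lemma map_W (q a b : R) (p : ℕ) :
    PowerSeries.map φ (W q a b p) = W (φ q) (φ a) (φ b) p := by
  rw [W, map_mul, map_qp, map_qi, W]

end Map

lemma key (q a b : ℂ) (j : ℕ) :
    coeff (j + 1) (W q a b j) = a * coeff j (W q a b (j + 1)) := by
  have hq : (Polynomial.X : Polynomial ℂ) ^ (j + 1) ≠ 1 := by
    intro h
    have := congrArg Polynomial.natDegree h
    simp [Polynomial.natDegree_X_pow] at this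
  have hk := key_domain (Polynomial.X : Polynomial ℂ) (Polynomial.C a) (Polynomial.C b) j hq
  have hkk := congrArg (Polynomial.eval q) hk
  rw [Polynomial.eval_mul, Polynomial.eval_C] at hkk
  have hc : ∀ (p m : ℕ), Polynomial.eval q (coeff m
      (W Polynomial.X (Polynomial.C a) (Polynomial.C b) p)) = coeff m (W q a b p) := by
    intro p m
    have hmap := map_W (Polynomial.evalRingHom q) Polynomial.X (Polynomial.C a) (Polynomial.C b) p
    have h2 := congrArg (coeff m) hmap
    rw [PowerSeries.coeff_map] at h2
    simpa using h2
  rw [hc, hc] at hkk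
  exact hkk

lemma core1 (q a b : R) (m s : ℕ) :
    (X ^ m * qp q a m * qi q b m) * W q a b (m + s)
      = X ^ m * rescale (q ^ m) (W q a b s) := by
  rw [W, W, map_mul, rescale_qp, rescale_qi, qp_add q b m s, Nat.add_assoc,
    qi_add q a m (s + 1)]
  calc (X ^ m * qp q a m * qi q b m) *
        (qp q b m * qp q (b * q ^ m) s * (qi q a m * qi q (a * q ^ m) (s + 1)))
      = (qp q a m * qi q a m) * ((qp q b m * qi q b m) *
          (X ^ m * (qp q (b * q ^ m) s * qi q (a * q ^ m) (s + 1)))) := by ring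
    _ = X ^ m * (qp q (b * q ^ m) s * qi q (a * q ^ m) (s + 1)) := by
        rw [qp_mul_qi, qp_mul_qi, one_mul, one_mul]

lemma core2 (q a b : R) (p : ℕ) :
    (X ^ (p + 1) * qp q a (p + 1) * qi q b (p + 1)) * W q a b p
      = X ^ (p + 1) * geo (b * q ^ p) := by
  rw [W, qi_succ q b p]
  calc (X ^ (p + 1) * qp q a (p + 1) * (qi q b p * geo (b * q ^ p))) *
        (qp q b p * qi q a (p + 1))
      = (qp q a (p + 1) * qi q a (p + 1)) * ((qp q b p * qi q b p) *
          (X ^ (p + 1) * geo (b * q ^ p))) := by ring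
    _ = X ^ (p + 1) * geo (b * q ^ p) := by
        rw [qp_mul_qi, qp_mul_qi, one_mul, one_mul]

lemma inv_qpoly (q x : ℂ) (n : ℕ) : (qpoly q x n)⁻¹ = qi q x n := by
  have h : qpoly q x n = qp q x n := rfl
  have hcc : constantCoeff (qpoly q x n) ≠ 0 := by
    have h1 := congrArg (constantCoeff) (qp_mul_qi q x n)
    rw [map_mul, map_one] at h1
    exact left_ne_zero_of_mul_eq_one (h ▸ h1)
  rw [PowerSeries.inv_eq_iff_mul_eq_one hcc, h, mul_comm]
  exact qp_mul_qi q x n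

end QAux

open QAux Finset in
/-- Theorem 2.6 (matrix inversion): explicit formula for the entries
`B_{n,k}(a,b)` of the inverse matrix:
`B_{n,k} = [z^{n−k}]{(bz;q)_{n−1}/(az;q)_n}
  − a ∑_{i=k}^{n−1} B_{n−i,1} q^{(n−i)i} [z^{i−k}]{(bz;q)_i/(az;q)_{i+1}}`. -/
theorem B_explicit_formula (q a b : ℂ)
    (B : ℕ → ℕ → ℂ)
    (hB0 : ∀ n k : ℕ, n < k → B n k = 0)
    (hB : ∀ N k : ℕ,
      (PowerSeries.coeff N) (PowerSeries.X ^ k) =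
        ∑ n ∈ Finset.range (N + 1),
          B n k * (PowerSeries.coeff N)
            (PowerSeries.X ^ n * qpoly q a n * (qpoly q b n)⁻¹)) :
    ∀ n k : ℕ, 1 ≤ n → k ≤ n →
      B n k = (PowerSeries.coeff (n - k)) (qpoly q b (n - 1) * (qpoly q a n)⁻¹)
        - a * ∑ i ∈ Finset.Icc k (n - 1),
            B (n - i) 1 * q ^ ((n - i) * i) *
              (PowerSeries.coeff (i - k)) (qpoly q b i * (qpoly q a (i + 1))⁻¹) := by
  intro n k hn hk
  have hf0 : ∀ (i m : ℕ), i < m →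
      coeff i (X ^ m * qpoly q a m * (qpoly q b m)⁻¹) = 0 := by
    intro i m him
    rw [mul_assoc, coeff_X_pow_mul', if_neg (by omega)]
  have STEP : ∀ (N k' : ℕ) (g : PowerSeries ℂ),
      coeff N (X ^ k' * g)
        = ∑ m ∈ range (N + 1),
            B m k' * coeff N ((X ^ m * qpoly q a m * (qpoly q b m)⁻¹) * g) := by
    intro N k' g
    rw [coeff_mul]
    have hrow : ∀ p ∈ antidiagonal N,
        coeff p.1 ((X : PowerSeries ℂ) ^ k')
          = ∑ m ∈ range (N + 1),
              B m k' * coeff p.1 (X ^ m * qpoly q a m * (qpoly q b m)⁻¹) := by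
      intro p hp
      have hp1 : p.1 ≤ N := by
        have := mem_antidiagonal.mp hp; omega
      rw [hB p.1 k']
      refine Finset.sum_subset (fun x hx => by simp only [mem_range] at hx ⊢; omega) ?_
      intro m hm hnm
      simp only [mem_range] at hm hnm
      rw [hf0 p.1 m (by omega), mul_zero]
    calc ∑ p ∈ antidiagonal N, coeff p.1 ((X : PowerSeries ℂ) ^ k') * coeff p.2 g
        = ∑ p ∈ antidiagonal N, ∑ m ∈ range (N + 1),
            B m k' * coeff p.1 (X ^ m * qpoly q a m * (qpoly q b m)⁻¹) * coeff p.2 g := by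
          refine sum_congr rfl fun p hp => ?_
          rw [hrow p hp, sum_mul]
      _ = ∑ m ∈ range (N + 1),
            B m k' * coeff N ((X ^ m * qpoly q a m * (qpoly q b m)⁻¹) * g) := by
          rw [Finset.sum_comm]
          refine sum_congr rfl fun m _ => ?_
          rw [coeff_mul, mul_sum]
          exact sum_congr rfl fun p hp => by ring
  have hfeq : ∀ m : ℕ, (X : PowerSeries ℂ) ^ m * qpoly q a m * (qpoly q b m)⁻¹
      = X ^ m * qp q a m * qi q b m := by
    intro m
    rw [inv_qpoly]
    rfl
  have hcoeff1 : ∀ (N m s : ℕ), m ≤ N →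
      coeff N ((X ^ m * qpoly q a m * (qpoly q b m)⁻¹) * W q a b (m + s))
        = q ^ (m * (N - m)) * coeff (N - m) (W q a b s) := by
    intro N m s hmN
    rw [hfeq, core1, coeff_X_pow_mul', if_pos hmN, coeff_rescale, ← pow_mul]
  have hR2 : ∀ (i k' : ℕ), k' ≤ i →
      coeff (i - k') (W q a b i)
        = ∑ m ∈ Icc k' i, B m k' * (q ^ (m * (i - m)) * coeff (i - m) (W q a b (i - m))) := by
    intro i k' hki
    have h := STEP i k' (W q a b i)
    rw [coeff_X_pow_mul', if_pos hki] at h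
    rw [h]
    have hterm : ∀ m ∈ range (i + 1),
        B m k' * coeff i ((X ^ m * qpoly q a m * (qpoly q b m)⁻¹) * W q a b i)
          = B m k' * (q ^ (m * (i - m)) * coeff (i - m) (W q a b (i - m))) := by
      intro m hm
      simp only [mem_range] at hm
      have hmi : m ≤ i := by omega
      have h2 := hcoeff1 i m (i - m) hmi
      rw [Nat.add_sub_cancel' hmi] at h2
      rw [h2]
    rw [sum_congr rfl hterm]
    symm
    refine Finset.sum_subset (fun x hx => by simp only [mem_Icc] at hx; simp only [mem_range]; omega) ?_
    intro m hm hnm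
    simp only [mem_range] at hm
    simp only [mem_Icc] at hnm
    rw [hB0 m k' (by omega), zero_mul]
  have hR1 : coeff (n - k) (W q a b (n - 1))
      = B n k + ∑ m ∈ Icc k (n - 1),
          B m k * (q ^ (m * (n - m)) * coeff (n - m) (W q a b (n - m - 1))) := by
    have h := STEP n k (W q a b (n - 1))
    rw [coeff_X_pow_mul', if_pos hk] at h
    rw [h, Finset.sum_range_succ]
    have htop : coeff n ((X ^ n * qpoly q a n * (qpoly q b n)⁻¹) * W q a b (n - 1)) = 1 := by
      have hcore := core2 q a b (n - 1)
      rw [show n - 1 + 1 = n from by omega] at hcore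
      rw [hfeq, hcore, coeff_X_pow_mul', if_pos le_rfl, Nat.sub_self]
      simp [geo]
    rw [htop, mul_one]
    have hterm : ∀ m ∈ range n,
        B m k * coeff n ((X ^ m * qpoly q a m * (qpoly q b m)⁻¹) * W q a b (n - 1))
          = B m k * (q ^ (m * (n - m)) * coeff (n - m) (W q a b (n - m - 1))) := by
      intro m hm
      simp only [mem_range] at hm
      have hm1 : m ≤ n - 1 := by omega
      have h2 := hcoeff1 n m (n - 1 - m) (by omega)
      rw [Nat.add_sub_cancel' hm1] at h2
      rw [h2, show n - 1 - m = n - m - 1 from by omega]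
    rw [sum_congr rfl hterm, add_comm]
    congr 1
    symm
    refine Finset.sum_subset (fun x hx => by simp only [mem_Icc] at hx; simp only [mem_range]; omega) ?_
    intro m hm hnm
    simp only [mem_range] at hm
    simp only [mem_Icc] at hnm
    rw [hB0 m k (by omega), zero_mul]
  -- rewrite the goal in terms of W
  have hW1 : qpoly q b (n - 1) * (qpoly q a n)⁻¹ = W q a b (n - 1) := by
    rw [inv_qpoly]
    show qp q b (n - 1) * qi q a n = W q a b (n - 1)
    rw [W, show n - 1 + 1 = n from by omega]
  have hW2 : ∀ i : ℕ, qpoly q b i * (qpoly q a (i + 1))⁻¹ = W q a b i := by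
    intro i
    rw [inv_qpoly]
    rfl
  rw [hW1,
    show (∑ i ∈ Icc k (n - 1), B (n - i) 1 * q ^ ((n - i) * i) *
        coeff (i - k) (qpoly q b i * (qpoly q a (i + 1))⁻¹))
      = ∑ i ∈ Icc k (n - 1), B (n - i) 1 * q ^ ((n - i) * i) * coeff (i - k) (W q a b i)
      from sum_congr rfl fun i _ => by rw [hW2]]
  have hBnk : B n k = coeff (n - k) (W q a b (n - 1))
      - ∑ m ∈ Icc k (n - 1),
          B m k * (q ^ (m * (n - m)) * coeff (n - m) (W q a b (n - m - 1))) := by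
    rw [hR1]; ring
  rw [hBnk]
  congr 1
  -- the exchange identity
  have hL : ∀ m ∈ Icc k (n - 1),
      B m k * (q ^ (m * (n - m)) * coeff (n - m) (W q a b (n - m - 1)))
        = ∑ t ∈ Icc 1 (n - m), B m k * (q ^ (m * (n - m)) * (a *
            (B t 1 * (q ^ (t * (n - m - t)) * coeff (n - m - t) (W q a b (n - m - t)))))) := by
    intro m hm
    simp only [mem_Icc] at hm
    have hkey : coeff (n - m) (W q a b (n - m - 1))
        = a * coeff (n - m - 1) (W q a b (n - m)) := by
      have h2 := key q a b (n - m - 1)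
      rw [show n - m - 1 + 1 = n - m from by omega] at h2
      exact h2
    rw [hkey, hR2 (n - m) 1 (by omega), mul_sum, mul_sum, mul_sum]
  have hRt : ∀ i ∈ Icc k (n - 1),
      B (n - i) 1 * q ^ ((n - i) * i) * coeff (i - k) (W q a b i)
        = ∑ m ∈ Icc k i, B (n - i) 1 * q ^ ((n - i) * i) *
            (B m k * (q ^ (m * (i - m)) * coeff (i - m) (W q a b (i - m)))) := by
    intro i hi
    simp only [mem_Icc] at hi
    rw [hR2 i k hi.1, mul_sum]
  rw [sum_congr rfl hL, sum_congr rfl hRt, mul_sum]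
  simp only [Finset.mul_sum]
  rw [Finset.sum_sigma', Finset.sum_sigma']
  refine Finset.sum_nbij' (fun p => (⟨n - p.2, p.1⟩ : (_ : ℕ) × ℕ))
    (fun p => (⟨p.2, n - p.1⟩ : (_ : ℕ) × ℕ)) ?_ ?_ ?_ ?_ ?_
  · rintro ⟨m, t⟩ hp
    simp only [mem_sigma, mem_Icc] at hp ⊢
    omega
  · rintro ⟨i, m⟩ hp
    simp only [mem_sigma, mem_Icc] at hp ⊢
    omega
  · rintro ⟨m, t⟩ hp
    simp only [mem_sigma, mem_Icc] at hp
    simp only [Sigma.mk.inj_iff, heq_eq_eq, true_and, and_true]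
    omega
  · rintro ⟨i, m⟩ hp
    simp only [mem_sigma, mem_Icc] at hp
    simp only [Sigma.mk.inj_iff, heq_eq_eq, true_and, and_true]
    omega
  · rintro ⟨m, t⟩ hp
    dsimp only
    simp only [mem_sigma, mem_Icc] at hp
    obtain ⟨s, hs⟩ : ∃ s, n = m + t + s := ⟨n - m - t, by omega⟩
    have h2 : n - m - t = s := by omega
    have h1 : n - m = t + s := by omega
    have h3 : n - (n - t) = t := by omega
    have h5 : n - t - m = s := by omega
    have h4 : n - t = m + s := by omega
    rw [h2, h1, h3, h5, h4]
    rw [show m * (t + s) = m * t + m * s from by ring,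
      show t * (m + s) = t * m + t * s from by ring,
      pow_add, pow_add]
    ring
  done
end

section
/- Fix q, a, b ∈ ℂ. For every integer n ≥ 1: [z^n]{ (bz;q)_{n−1} · (az;q)_n^{−1} } = a · ∑_{i=0}^{n−1} B_{n−i,1}(a,b) q^{(n−i)i} · [z^i]{ (bz;q)_i · (az;q)_{i+1}^{−1} }. -/
open PowerSeries

/-- generic version of `qpoly` over any commutative ring -/
noncomputable def qp {R : Type*} [CommRing R] (q x : R) (n : ℕ) : PowerSeries R :=
  ∏ i ∈ Finset.range n, (1 - PowerSeries.C (x * q ^ i) * PowerSeries.X)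

section generic
variable {R : Type*} [CommRing R]

lemma qp_constantCoeff (q x : R) (n : ℕ) : constantCoeff (qp q x n) = 1 := by
  rw [qp, map_prod]
  apply Finset.prod_eq_one
  intro i _
  simp

lemma qp_succ (q x : R) (n : ℕ) :
    qp q x (n + 1) = qp q x n * (1 - C (x * q ^ n) * X) := by
  rw [qp, qp, Finset.prod_range_succ]

lemma qp_succ' (q x : R) (n : ℕ) :
    qp q x (n + 1) = (1 - C x * X) * qp q (x * q) n := by
  rw [qp, qp, Finset.prod_range_succ', pow_zero, mul_one, mul_comm]
  congr 1
  apply Finset.prod_congr rfl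
  intro i _
  rw [pow_succ', ← mul_assoc]

lemma qp_add (q x : R) (m k : ℕ) :
    qp q x (m + k) = qp q x m * qp q (x * q ^ m) k := by
  rw [qp, qp, qp, Finset.prod_range_add]
  congr 1
  apply Finset.prod_congr rfl
  intro i _
  rw [mul_assoc, ← pow_add]

lemma rescale_C' (r y : R) : rescale r (C y) = C y := by
  ext N
  simp only [coeff_rescale, coeff_C]
  split_ifs with h
  · subst h; simp
  · simp

lemma rescale_qp (r q x : R) (n : ℕ) :
    rescale r (qp q x n) = qp q (x * r) n := by
  rw [qp, qp, map_prod]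
  apply Finset.prod_congr rfl
  intro i _
  rw [map_sub, map_one, map_mul, rescale_C', rescale_X, ← mul_assoc, ← map_mul]
  congr 2
  ring

lemma map_qp {S : Type*} [CommRing S] (ψ : R →+* S) (q x : R) (n : ℕ) :
    PowerSeries.map ψ (qp q x n) = qp (ψ q) (ψ x) n := by
  rw [qp, qp, map_prod]
  apply Finset.prod_congr rfl
  intro i _
  rw [map_sub, map_one, map_mul, PowerSeries.map_C, PowerSeries.map_X, map_mul, map_pow]

lemma qp_isUnit (q x : R) (n : ℕ) : IsUnit (qp q x n) := by
  refine IsUnit.of_mul_eq_one (invOfUnit (qp q x n) 1) ?_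
  exact mul_invOfUnit _ _ (by rw [qp_constantCoeff]; rfl)

lemma coeff_mul_lin1 (h : PowerSeries R) (u : R) (N : ℕ) :
    coeff (N + 1) (h * (1 - C u * X)) =
      coeff (N + 1) h - u * coeff N h := by
  rw [mul_sub, mul_one, map_sub]
  congr 1
  rw [show h * (C u * X) = C u * (h * X) by ring, coeff_C_mul, coeff_succ_mul_X]

lemma coeff_mul_lin2 (h : PowerSeries R) (u v : R) (N : ℕ) :
    coeff (N + 2) (h * ((1 - C u * X) * (1 - C v * X))) =
      coeff (N + 2) h - (u + v) * coeff (N + 1) h + u * v * coeff N h := by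
  have e : (1 - C u * X) * (1 - C v * X)
      = 1 - C (u + v) * X + C (u * v) * (X * X) := by
    rw [map_add, map_mul]; ring
  rw [e, mul_add, mul_sub, mul_one, map_add, map_sub]
  congr 2
  · rw [show h * (C (u+v) * X) = C (u+v) * (h * X) by ring, coeff_C_mul,
      coeff_succ_mul_X]
  · rw [show h * (C (u*v) * (X * X)) = C (u*v) * (h * X * X) by ring, coeff_C_mul,
      coeff_succ_mul_X, coeff_succ_mul_X]

lemma key_rel (q a b : R) (k : ℕ) (g1 g2 : PowerSeries R)
    (h1 : qp q a (k+2) * g1 = 1) (h2 : qp q a (k+3) * g2 = 1) :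
    (q^(k+2) - 1) * (coeff (k+2) (qp q b (k+1) * g1)
      - a * coeff (k+1) (qp q b (k+2) * g2)) = 0 := by
  set f : PowerSeries R := qp q b (k+1) * g2 with hf
  -- step a
  have hg1 : g1 = g2 * (1 - C (a * q^(k+2)) * X) := by
    apply (qp_isUnit q a (k+2)).mul_left_cancel
    rw [h1, show qp q a (k+2) * (g2 * (1 - C (a * q^(k+2)) * X))
        = (qp q a (k+2) * (1 - C (a * q^(k+2)) * X)) * g2 by ring,
      ← qp_succ q a (k+2), h2]
  have ha : qp q b (k+1) * g1 = f * (1 - C (a * q^(k+2)) * X) := by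
    rw [hg1, hf]; ring
  -- step b
  have hb : qp q b (k+2) * g2 = f * (1 - C (b * q^(k+1)) * X) := by
    rw [qp_succ q b (k+1), hf]; ring
  -- step c : functional equation
  have h2q : qp q (a*q) (k+3) * rescale q g2 = 1 := by
    have := congrArg (rescale q) h2
    rwa [map_mul, map_one, rescale_qp] at this
  have hrf : rescale q f = qp q (b*q) (k+1) * rescale q g2 := by
    rw [hf, map_mul, rescale_qp]
  have hfe : rescale q f * ((1 - C (a * q^(k+3)) * X) * (1 - C b * X))
      = f * ((1 - C a * X) * (1 - C (b * q^(k+1)) * X)) := by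
    apply ((qp_isUnit q a (k+3)).mul (qp_isUnit q (a*q) (k+3))).mul_left_cancel
    calc qp q a (k+3) * qp q (a*q) (k+3)
          * (rescale q f * ((1 - C (a * q^(k+3)) * X) * (1 - C b * X)))
        = (qp q (a*q) (k+3) * rescale q g2)
            * ((qp q a (k+3) * (1 - C (a * q^(k+3)) * X))
              * ((1 - C b * X) * qp q (b*q) (k+1))) := by rw [hrf]; ring
      _ = qp q a (k+4) * qp q b (k+2) := by
            rw [h2q, ← qp_succ q a (k+3), ← qp_succ' q b (k+1)]; ring
      _ = (qp q a (k+3) * g2)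
            * (((1 - C a * X) * qp q (a*q) (k+3))
              * (qp q b (k+1) * (1 - C (b * q^(k+1)) * X))) := by
            rw [h2, ← qp_succ' q a (k+3), ← qp_succ q b (k+1)]; ring
      _ = qp q a (k+3) * qp q (a*q) (k+3)
            * (f * ((1 - C a * X) * (1 - C (b * q^(k+1)) * X))) := by
            rw [hf]; ring
  -- step d : coefficient extraction at k+2
  have E := congrArg (coeff (k+2)) hfe
  rw [coeff_mul_lin2 (rescale q f) _ _ k, coeff_mul_lin2 f _ _ k,
    coeff_rescale, coeff_rescale, coeff_rescale] at E
  -- final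
  rw [ha, hb, coeff_mul_lin1 f _ (k+1), coeff_mul_lin1 f _ k]
  linear_combination E
end generic

lemma qp_constantCoeff_ne (q x : ℂ) (n : ℕ) : constantCoeff (qp q x n) ≠ 0 := by
  rw [qp_constantCoeff]; exact one_ne_zero

/-- map of the formal inverse is the field-side inverse -/
lemma map_inv_eq (ψ : Polynomial ℂ →+* ℂ) (F : PowerSeries (Polynomial ℂ)) (g : PowerSeries (Polynomial ℂ))
    (hFg : F * g = 1) (h : constantCoeff (PowerSeries.map ψ F) ≠ 0) :
    PowerSeries.map ψ g = (PowerSeries.map ψ F)⁻¹ := by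
  rw [PowerSeries.eq_inv_iff_mul_eq_one h, mul_comm, ← map_mul, hFg, map_one]

lemma keyK (q a b : ℂ) (n : ℕ) (hn : 1 ≤ n) :
    coeff n (qp q b (n-1) * (qp q a n)⁻¹)
      = a * coeff (n-1) (qp q b n * (qp q a (n+1))⁻¹) := by
  rcases Nat.lt_or_ge n 2 with h2 | h2
  · -- n = 1
    interval_cases n
    show coeff 1 (qp q b 0 * (qp q a 1)⁻¹) = a * coeff 0 (qp q b 1 * (qp q a 2)⁻¹)
    have e1 : qp q a 1 = 1 - C (a * q ^ 0) * X := by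
      rw [qp, Finset.prod_range_one]
    have hinv := PowerSeries.inv_mul_cancel (qp q a 1) (qp_constantCoeff_ne q a 1)
    rw [e1] at hinv
    have hc := congrArg (coeff 1) hinv
    rw [coeff_mul_lin1 _ _ 0, coeff_zero_eq_constantCoeff_apply, ← e1,
      PowerSeries.constantCoeff_inv, qp_constantCoeff] at hc
    simp only [coeff_one, one_ne_zero, if_false, inv_one, mul_one, pow_zero] at hc
    have hb0 : qp q b 0 = 1 := by rw [qp, Finset.prod_range_zero]
    have hrhs : coeff 0 (qp q b 1 * (qp q a 2)⁻¹) = 1 := by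
      rw [coeff_zero_eq_constantCoeff_apply, (constantCoeff (R := ℂ)).map_mul,
        PowerSeries.constantCoeff_inv, qp_constantCoeff, qp_constantCoeff]
      norm_num
    rw [hb0, one_mul, hrhs, mul_one]
    linear_combination hc
  · obtain ⟨k, rfl⟩ : ∃ k, n = k + 2 := ⟨n - 2, by omega⟩
    -- polynomial ring side
    set R := Polynomial ℂ
    set τ : R := Polynomial.X
    set a' : R := Polynomial.C a
    set b' : R := Polynomial.C b
    have hu1 : constantCoeff (qp τ a' (k+2)) = ((1 : Rˣ) : R) := by
      rw [qp_constantCoeff]; rfl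
    have hu2 : constantCoeff (qp τ a' (k+3)) = ((1 : Rˣ) : R) := by
      rw [qp_constantCoeff]; rfl
    set g1 : PowerSeries R := invOfUnit (qp τ a' (k+2)) 1
    set g2 : PowerSeries R := invOfUnit (qp τ a' (k+3)) 1
    have h1 : qp τ a' (k+2) * g1 = 1 := mul_invOfUnit _ _ hu1
    have h2 : qp τ a' (k+3) * g2 = 1 := mul_invOfUnit _ _ hu2
    have hkey := key_rel τ a' b' k g1 g2 h1 h2
    have hne : (τ ^ (k+2) - 1 : R) ≠ 0 := by
      have := Polynomial.X_pow_sub_C_ne_zero (n := k+2) (by omega) (1 : ℂ)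
      simpa using this
    have hd : coeff (k+2) (qp τ b' (k+1) * g1)
        - a' * coeff (k+1) (qp τ b' (k+2) * g2) = 0 := by
      rcases mul_eq_zero.mp hkey with h | h
      · exact absurd h hne
      · exact h
    -- transport along evaluation at q
    set ψ : R →+* ℂ := Polynomial.evalRingHom q
    have hψτ : ψ τ = q := Polynomial.eval_X
    have hψa : ψ a' = a := Polynomial.eval_C
    have hψb : ψ b' = b := Polynomial.eval_C
    have hmg1 : PowerSeries.map ψ g1 = (qp q a (k+2))⁻¹ := by
      have := map_inv_eq ψ _ _ h1 (by rw [map_qp, hψτ, hψa]; exact qp_constantCoeff_ne q a (k+2))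
      rwa [map_qp, hψτ, hψa] at this
    have hmg2 : PowerSeries.map ψ g2 = (qp q a (k+3))⁻¹ := by
      have := map_inv_eq ψ _ _ h2 (by rw [map_qp, hψτ, hψa]; exact qp_constantCoeff_ne q a (k+3))
      rwa [map_qp, hψτ, hψa] at this
    have hd' : coeff (k+2) (qp τ b' (k+1) * g1)
        = a' * coeff (k+1) (qp τ b' (k+2) * g2) := sub_eq_zero.mp hd
    have this1 := congrArg ψ hd'
    rw [ψ.map_mul, hψa] at this1
    rw [show ψ (coeff (k+2) (qp τ b' (k+1) * g1))
          = coeff (k+2) (qp q b (k+1) * (qp q a (k+2))⁻¹) by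
        rw [← coeff_map, (PowerSeries.map ψ).map_mul, map_qp, hψτ, hψb, hmg1],
      show ψ (coeff (k+1) (qp τ b' (k+2) * g2))
          = coeff (k+1) (qp q b (k+2) * (qp q a (k+3))⁻¹) by
        rw [← coeff_map, (PowerSeries.map ψ).map_mul, map_qp, hψτ, hψb, hmg2]] at this1
    have hred : k + 2 - 1 = k + 1 := by omega
    rw [hred]
    exact this1

lemma rescale_inv (c : ℂ) (f : PowerSeries ℂ) (h : constantCoeff f ≠ 0)
    (hc : constantCoeff (rescale c f) ≠ 0) :
    rescale c f⁻¹ = (rescale c f)⁻¹ := by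
  rw [PowerSeries.eq_inv_iff_mul_eq_one hc, ← map_mul,
    PowerSeries.inv_mul_cancel f h, map_one]

lemma claimA (q a b : ℂ) (n i : ℕ) (hi : i < n) :
    coeff n (X ^ (n-i) * qp q a (n-i) * (qp q b (n-i))⁻¹
      * (qp q b n * (qp q a (n+1))⁻¹))
    = q ^ ((n-i) * i) * coeff i (qp q b i * (qp q a (i+1))⁻¹) := by
  set m := n - i with hm
  have hn : n = m + i := by omega
  have hbn : qp q b n = qp q b m * qp q (b * q ^ m) i := by
    rw [hn]; exact qp_add q b m i
  have han : qp q a (n+1) = qp q a m * qp q (a * q ^ m) (i+1) := by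
    rw [show n + 1 = m + (i+1) by omega]; exact qp_add q a m (i+1)
  have hS : qp q a m * (qp q b m)⁻¹ * (qp q b n * (qp q a (n+1))⁻¹)
      = rescale (q ^ m) (qp q b i * (qp q a (i+1))⁻¹) := by
    have cb : (qp q b m)⁻¹ * qp q b m = 1 :=
      PowerSeries.inv_mul_cancel _ (qp_constantCoeff_ne q b m)
    have ca : qp q a m * (qp q a m)⁻¹ = 1 :=
      PowerSeries.mul_inv_cancel _ (qp_constantCoeff_ne q a m)
    have hInv : rescale (q ^ m) ((qp q a (i+1))⁻¹) = (qp q (a * q ^ m) (i+1))⁻¹ := by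
      rw [show (qp q (a * q ^ m) (i+1)) = rescale (q ^ m) (qp q a (i+1)) from
        (rescale_qp _ _ _ _).symm]
      exact rescale_inv _ _ (qp_constantCoeff_ne q a (i+1))
        (by rw [rescale_qp]; exact qp_constantCoeff_ne q (a * q^m) (i+1))
    calc qp q a m * (qp q b m)⁻¹ * (qp q b n * (qp q a (n+1))⁻¹)
        = qp q (b * q ^ m) i * (qp q (a * q ^ m) (i+1))⁻¹
            * (((qp q b m)⁻¹ * qp q b m) * (qp q a m * (qp q a m)⁻¹)) := by
          rw [hbn, han, PowerSeries.mul_inv_rev]; ring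
      _ = qp q (b * q ^ m) i * (qp q (a * q ^ m) (i+1))⁻¹ := by rw [cb, ca]; ring
      _ = rescale (q ^ m) (qp q b i * (qp q a (i+1))⁻¹) := by
          rw [map_mul, rescale_qp, hInv]
  rw [show (X : PowerSeries ℂ) ^ m * qp q a m * (qp q b m)⁻¹
        * (qp q b n * (qp q a (n+1))⁻¹)
      = X ^ m * (qp q a m * (qp q b m)⁻¹ * (qp q b n * (qp q a (n+1))⁻¹)) by ring,
    hS, hn, Nat.add_comm m i, coeff_X_pow_mul, coeff_rescale, ← pow_mul, mul_comm m i]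

lemma claimB (q a b : ℂ) (B : ℕ → ℕ → ℂ)
    (hB : ∀ N k : ℕ,
      (PowerSeries.coeff N) (PowerSeries.X ^ k) =
        ∑ n ∈ Finset.range (N + 1),
          B n k * (PowerSeries.coeff N)
            (PowerSeries.X ^ n * qp q a n * (qp q b n)⁻¹))
    (n : ℕ) (hn : 1 ≤ n) (G : PowerSeries ℂ) :
    ∑ m ∈ Finset.range (n+1),
        B m 1 * coeff n (X ^ m * qp q a m * (qp q b m)⁻¹ * G)
      = coeff (n-1) G := by
  calc ∑ m ∈ Finset.range (n+1),
        B m 1 * coeff n (X ^ m * qp q a m * (qp q b m)⁻¹ * G)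
      = ∑ m ∈ Finset.range (n+1), ∑ p ∈ Finset.HasAntidiagonal.antidiagonal n,
          B m 1 * (coeff p.1 (X ^ m * qp q a m * (qp q b m)⁻¹) * coeff p.2 G) := by
        refine Finset.sum_congr rfl fun m _ => ?_
        rw [coeff_mul, Finset.mul_sum]
    _ = ∑ p ∈ Finset.HasAntidiagonal.antidiagonal n,
          (∑ m ∈ Finset.range (n+1),
            B m 1 * coeff p.1 (X ^ m * qp q a m * (qp q b m)⁻¹)) * coeff p.2 G := by
        rw [Finset.sum_comm]
        refine Finset.sum_congr rfl fun p _ => ?_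
        rw [Finset.sum_mul]
        exact Finset.sum_congr rfl fun m _ => by ring
    _ = ∑ p ∈ Finset.HasAntidiagonal.antidiagonal n,
          coeff p.1 ((X : PowerSeries ℂ) ^ 1) * coeff p.2 G := by
        refine Finset.sum_congr rfl fun p hp => ?_
        have hp1 : p.1 ≤ n := by
          have := Finset.HasAntidiagonal.mem_antidiagonal.mp hp; omega
        congr 1
        rw [hB p.1 1]
        refine (Finset.sum_subset (Finset.range_subset_range.mpr (by omega)) ?_).symm
        intro m hm hm'
        have hmgt : p.1 < m := by
          simp only [Finset.mem_range] at hm hm'; omega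
        rw [mul_assoc, PowerSeries.coeff_X_pow_mul', if_neg (by omega), mul_zero]
    _ = coeff n ((X : PowerSeries ℂ) ^ 1 * G) := (coeff_mul n _ G).symm
    _ = coeff (n-1) G := by
        rw [pow_one, show n = (n-1)+1 by omega, coeff_succ_X_mul]
        congr 1

lemma qpoly_eq (q x : ℂ) (n : ℕ) : qpoly q x n = qp q x n := rfl

/-- For `n ≥ 1`:
`[z^n]{(bz;q)_{n−1}/(az;q)_n}
  = a ∑_{i=0}^{n−1} B_{n−i,1}(a,b) q^{(n−i)i} [z^i]{(bz;q)_i/(az;q)_{i+1}}`. -/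
theorem B_coefficient_identity (q a b : ℂ)
    (B : ℕ → ℕ → ℂ)
    (hB0 : ∀ n k : ℕ, n < k → B n k = 0)
    (hB : ∀ N k : ℕ,
      (PowerSeries.coeff N) (PowerSeries.X ^ k) =
        ∑ n ∈ Finset.range (N + 1),
          B n k * (PowerSeries.coeff N)
            (PowerSeries.X ^ n * qpoly q a n * (qpoly q b n)⁻¹)) :
    ∀ n : ℕ, 1 ≤ n →
      (PowerSeries.coeff n) (qpoly q b (n - 1) * (qpoly q a n)⁻¹)
        = a * ∑ i ∈ Finset.range n,
            B (n - i) 1 * q ^ ((n - i) * i) *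
              (PowerSeries.coeff i) (qpoly q b i * (qpoly q a (i + 1))⁻¹) := by
  simp only [qpoly_eq] at hB ⊢
  intro n hn
  rw [keyK q a b n hn]
  congr 1
  set G : PowerSeries ℂ := qp q b n * (qp q a (n+1))⁻¹ with hG
  set t : ℕ → ℂ := fun m =>
    B m 1 * coeff n (X ^ m * qp q a m * (qp q b m)⁻¹ * G) with ht
  have step1 : ∑ i ∈ Finset.range n,
      B (n - i) 1 * q ^ ((n - i) * i) *
        coeff i (qp q b i * (qp q a (i + 1))⁻¹)
      = ∑ i ∈ Finset.range n, t (n - i) := by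
    refine Finset.sum_congr rfl fun i hi => ?_
    rw [ht]
    simp only []
    rw [claimA q a b n i (Finset.mem_range.mp hi)]
    ring
  have step2 : ∑ i ∈ Finset.range n, t (n - i)
      = ∑ j ∈ Finset.range n, t (j + 1) := by
    rw [← Finset.sum_range_reflect (fun j => t (j + 1)) n]
    refine Finset.sum_congr rfl fun i hi => ?_
    congr 1
    have := Finset.mem_range.mp hi
    omega
  have step3 : ∑ m ∈ Finset.range (n+1), t m
      = (∑ j ∈ Finset.range n, t (j + 1)) + t 0 := Finset.sum_range_succ' t n
  have ht0 : t 0 = 0 := by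
    rw [ht]; simp only []
    rw [hB0 0 1 Nat.zero_lt_one, zero_mul]
  have step4 : ∑ m ∈ Finset.range (n+1), t m = coeff (n-1) G :=
    claimB q a b B hB n hn G
  rw [step1, step2]
  rw [step3, ht0, add_zero] at step4
  rw [step4]
end

section
/- (Carlitz's q-expansion formula.) Fix q, b ∈ ℂ and let F ∈ ℂ[[z]]. Define c_0 = [z^0]{F} and, for n ≥ 1, c_n = [z^n]{ F · (bz;q)_{n−1} }. Then F = ∑_{n=0}^∞ c_n z^n / (bz;q)_n coefficientwise: for every N ≥ 0, [z^N]{F} = ∑_{n=0}^{N} c_n · [z^N]{ z^n · (bz;q)_n^{−1} }. -/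
open PowerSeries

private lemma coeff_mul_congr (G₁ G₂ H : PowerSeries ℂ) (N : ℕ)
    (h : ∀ k ≤ N, (PowerSeries.coeff k) G₁ = (PowerSeries.coeff k) G₂) :
    ∀ k ≤ N, (PowerSeries.coeff k) (G₁ * H) = (PowerSeries.coeff k) (G₂ * H) := by
  intro k hk
  rw [PowerSeries.coeff_mul, PowerSeries.coeff_mul]
  refine Finset.sum_congr rfl fun p hp => ?_
  rw [Finset.HasAntidiagonal.mem_antidiagonal] at hp
  rw [h p.1 (le_trans (by omega) hk)]

private lemma constCoeff_lin (a : ℂ) :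
    PowerSeries.constantCoeff (1 - PowerSeries.C a * PowerSeries.X) = 1 := by
  simp

private lemma constCoeff_prod (s : Finset ℕ) (a : ℕ → ℂ) :
    PowerSeries.constantCoeff
      (∏ i ∈ s, (1 - PowerSeries.C (a i) * PowerSeries.X)) = 1 := by
  rw [map_prod]
  simp

private lemma coeff_prod_lin_zero (s : Finset ℕ) (a : ℕ → ℂ) :
    ∀ k, s.card < k →
      (PowerSeries.coeff k) (∏ i ∈ s, (1 - PowerSeries.C (a i) * PowerSeries.X)) = 0 := by
  induction s using Finset.cons_induction with
  | empty =>
    intro k hk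
    simp only [Finset.card_empty] at hk
    rw [Finset.prod_empty, PowerSeries.coeff_one, if_neg (by omega)]
  | cons i s hi ih =>
    intro k hk
    rw [Finset.prod_cons, sub_mul, one_mul, map_sub, mul_assoc]
    rw [Finset.card_cons] at hk
    obtain ⟨k', rfl⟩ : ∃ k', k = k' + 1 := ⟨k - 1, by omega⟩
    rw [ih _ (by omega), PowerSeries.coeff_C_mul, mul_comm PowerSeries.X,
      PowerSeries.coeff_succ_mul_X, ih _ (by omega)]
    ring

/-- Carlitz's q-expansion formula: with `c_0 = [z^0]{F}` and
`c_n = [z^n]{F (bz;q)_{n−1}}` for `n ≥ 1`, one has `F = ∑ c_n z^n/(bz;q)_n`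
coefficientwise. -/
theorem carlitz_q_expansion (q b : ℂ) (F : PowerSeries ℂ)
    (c : ℕ → ℂ)
    (hc0 : c 0 = (PowerSeries.coeff 0) F)
    (hc : ∀ n : ℕ, 1 ≤ n → c n = (PowerSeries.coeff n) (F * qpoly q b (n - 1))) :
    ∀ N : ℕ,
      (PowerSeries.coeff N) F =
        ∑ n ∈ Finset.range (N + 1),
          c n * (PowerSeries.coeff N) (PowerSeries.X ^ n * (qpoly q b n)⁻¹) := by
  set u : ℕ → PowerSeries ℂ := fun i => 1 - PowerSeries.C (b * q ^ i) * PowerSeries.X with hu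
  set Q : ℕ → PowerSeries ℂ := fun N => ∑ n ∈ Finset.range (N + 1),
    PowerSeries.C (c n) * PowerSeries.X ^ n * ∏ i ∈ Finset.Ico n N, u i with hQ
  -- Q N is a polynomial of degree ≤ N
  have hQdeg : ∀ N k, N < k → (PowerSeries.coeff k) (Q N) = 0 := by
    intro N k hk
    rw [hQ, map_sum]
    refine Finset.sum_eq_zero fun n hn => ?_
    rw [Finset.mem_range] at hn
    rw [mul_assoc, PowerSeries.coeff_C_mul, PowerSeries.coeff_X_pow_mul' _ n k]
    by_cases h : n ≤ k
    · rw [if_pos h, coeff_prod_lin_zero _ _ _ (by rw [Nat.card_Ico]; omega), mul_zero]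
    · rw [if_neg h, mul_zero]
  -- the key inductive claim
  have key : ∀ N, ∀ k ≤ N, (PowerSeries.coeff k) (F * qpoly q b N)
      = (PowerSeries.coeff k) (Q N) := by
    intro N
    induction N with
    | zero =>
      intro k hk
      interval_cases k
      simp [qpoly, hQ, hc0]
    | succ N ih =>
      have hsplit : Q (N + 1) = Q N * u N + PowerSeries.C (c (N + 1)) * PowerSeries.X ^ (N + 1) := by
        simp only [hQ]
        rw [Finset.sum_range_succ (n := N + 1)]
        congr 1
        · rw [Finset.sum_mul]
          refine Finset.sum_congr rfl fun n hn => ?_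
          rw [Finset.mem_range] at hn
          rw [Finset.prod_Ico_succ_top (by omega)]; ring
        · rw [Finset.Ico_self, Finset.prod_empty, mul_one]
      have hP : qpoly q b (N + 1) = qpoly q b N * u N := by
        rw [qpoly, Finset.prod_range_succ]; rfl
      intro k hk
      rw [hP, ← mul_assoc, hsplit, map_add]
      have expand : ∀ (G : PowerSeries ℂ) (k : ℕ),
          (PowerSeries.coeff k) (G * u N)
          = (PowerSeries.coeff k) G - b * q ^ N * (PowerSeries.coeff k) (G * PowerSeries.X) := by
        intro G k
        have h : G * u N = G - PowerSeries.C (b * q ^ N) * (G * PowerSeries.X) := by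
          simp only [hu]; ring
        rw [h, map_sub, PowerSeries.coeff_C_mul]
      rcases Nat.lt_or_ge k (N + 1) with hkN | hkN
      · -- k ≤ N : use congr lemma
        rw [coeff_mul_congr (F * qpoly q b N) (Q N) (u N) N ih k (by omega)]
        rw [PowerSeries.coeff_C_mul, PowerSeries.coeff_X_pow, if_neg (by omega), mul_zero, add_zero]
      · -- k = N + 1
        have hk1 : k = N + 1 := le_antisymm hk hkN
        subst hk1
        rw [expand, expand]
        have h1 : (PowerSeries.coeff (N + 1)) (F * qpoly q b N) = c (N + 1) := by
          rw [hc (N + 1) (by omega)]; simp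
        have h2 : (PowerSeries.coeff (N + 1)) (Q N) = 0 := hQdeg N (N + 1) (by omega)
        rw [PowerSeries.coeff_succ_mul_X, PowerSeries.coeff_succ_mul_X, h1, h2,
          ih N le_rfl, PowerSeries.coeff_C_mul, PowerSeries.coeff_X_pow, if_pos rfl]
        ring
  intro N
  -- constant coefficients are nonzero
  have hconst : ∀ n, PowerSeries.constantCoeff (qpoly q b n) = 1 := fun n =>
    constCoeff_prod _ _
  -- F = (F * P N) * (P N)⁻¹ coefficientwise at N
  have step1 : (PowerSeries.coeff N) F
      = (PowerSeries.coeff N) ((F * qpoly q b N) * (qpoly q b N)⁻¹) := by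
    rw [mul_assoc, PowerSeries.mul_inv_cancel _ (by rw [hconst]; exact one_ne_zero), mul_one]
  rw [step1, coeff_mul_congr _ (Q N) _ N (key N) N le_rfl, hQ, Finset.sum_mul, map_sum]
  refine Finset.sum_congr rfl fun n hn => ?_
  rw [Finset.mem_range] at hn
  have hsplitP : qpoly q b N = qpoly q b n * ∏ i ∈ Finset.Ico n N, u i := by
    simp only [hu, qpoly]
    rw [Finset.prod_range_mul_prod_Ico
      (fun i => 1 - PowerSeries.C (b * q ^ i) * PowerSeries.X) (by omega : n ≤ N)]
  have hRconst : PowerSeries.constantCoeff (∏ i ∈ Finset.Ico n N, u i) = 1 := by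
    simp only [hu]; exact constCoeff_prod _ _
  have hinv : (∏ i ∈ Finset.Ico n N, u i) * (qpoly q b N)⁻¹ = (qpoly q b n)⁻¹ := by
    rw [hsplitP, PowerSeries.mul_inv_rev, ← mul_assoc,
      PowerSeries.mul_inv_cancel _ (by rw [hRconst]; exact one_ne_zero), one_mul]
  rw [mul_assoc, mul_assoc, hinv, PowerSeries.coeff_C_mul]
end
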